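/- arXiv:2510.02195 — 6 statements merged into one kernel-verified Lean document; each statement's English description precedes it below -/
import Mathlib

section
/- Let A be a vector space over a field k of characteristic zero with a symmetric d-linear multiplication μ (d ≥ 2). Define Ad_x(y) = μ(x,...,x,y) and Ad_x^{k+1}(y) = Ad_x(Ad_x^k(y)). If A is Gerstenhaber nil of nilindex n (every multilinear composition of at least n copies of μ applied to a single element x is zero), then A is Engel: for each x ∈ A there exists m such that Ad_x^m = 0 as a linear operator on A. -/
/-- `IsMuComp μ x a m` : `a` is obtained from the single element `x` by a multilinear
multiple composition using exactly `m` copies of the `d`-linear operation `μ`. -/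
inductive IsMuComp {k A : Type*} [Field k] [AddCommGroup A] [Module k A] {d : ℕ}
    (μ : MultilinearMap k (fun _ : Fin d => A) A) (x : A) : A → ℕ → Prop
  | base : IsMuComp μ x x 0
  | app (a : Fin d → A) (m : Fin d → ℕ) (h : ∀ i, IsMuComp μ x (a i) (m i)) :
      IsMuComp μ x (μ a) (∑ i, m i + 1)

namespace GerstAux

open Finset

variable {k : Type*} {A : Type*} [Field k] [AddCommGroup A] [Module k A]

/-- `F : k → A` is given by a polynomial expression of length `D`. -/
def PFD (D : ℕ) (F : k → A) : Prop :=
  ∃ r : ℕ → A, ∀ s : k, F s = ∑ j ∈ Finset.range D, s ^ j • r j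

lemma pfd_congr {D : ℕ} {F G : k → A} (h : ∀ s, F s = G s) (hF : PFD D F) : PFD D G := by
  obtain ⟨r, hr⟩ := hF
  exact ⟨r, fun s => by rw [← h s, hr s]⟩

lemma rep_pad {D D' : ℕ} (h : D ≤ D') (r : ℕ → A) (s : k) :
    ∑ j ∈ Finset.range D, s ^ j • r j
      = ∑ j ∈ Finset.range D', s ^ j • (if j < D then r j else 0) := by
  rw [Finset.sum_congr rfl (fun j hj => ?_)]
  · exact Finset.sum_subset (Finset.range_subset_range.2 h)
      (fun j _ hj => by rw [if_neg (fun hc => hj (Finset.mem_range.2 hc)), smul_zero])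
  · rw [if_pos (Finset.mem_range.1 hj)]

lemma pfd_mono {D D' : ℕ} (h : D ≤ D') {F : k → A} (hF : PFD D F) : PFD D' F := by
  obtain ⟨r, hr⟩ := hF
  exact ⟨fun j => if j < D then r j else 0, fun s => by rw [hr s, rep_pad h]⟩

lemma pfd_zero (D : ℕ) : PFD D (fun _ : k => (0 : A)) :=
  ⟨fun _ => 0, fun s => by simp⟩

lemma pfd_const (v : A) : PFD 1 (fun _ : k => v) :=
  ⟨fun _ => v, fun s => by simp⟩

lemma pfd_add {D₁ D₂ : ℕ} {F G : k → A} (hF : PFD D₁ F) (hG : PFD D₂ G) :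
    PFD (max D₁ D₂) (fun s => F s + G s) := by
  obtain ⟨r, hr⟩ := pfd_mono (le_max_left D₁ D₂) hF
  obtain ⟨q, hq⟩ := pfd_mono (le_max_right D₁ D₂) hG
  exact ⟨fun j => r j + q j, fun s => by
    show F s + G s = _
    rw [hr s, hq s, ← Finset.sum_add_distrib]
    exact Finset.sum_congr rfl fun j _ => (smul_add _ _ _).symm⟩

lemma pfd_smul (c : k) {D : ℕ} {F : k → A} (hF : PFD D F) : PFD D (fun s => c • F s) := by
  obtain ⟨r, hr⟩ := hF
  exact ⟨fun j => c • r j, fun s => by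
    show c • F s = _
    rw [hr s, Finset.smul_sum]
    exact Finset.sum_congr rfl fun j _ => smul_comm c _ _⟩

lemma pfd_sub {D₁ D₂ : ℕ} {F G : k → A} (hF : PFD D₁ F) (hG : PFD D₂ G) :
    PFD (max D₁ D₂) (fun s => F s - G s) := by
  have := pfd_add hF (pfd_smul (-1 : k) hG)
  exact pfd_congr (fun s => by simp [sub_eq_add_neg]) this

lemma pfd_mulX {D : ℕ} {F : k → A} (hF : PFD D F) : PFD (D + 1) (fun s => s • F s) := by
  obtain ⟨r, hr⟩ := hF
  refine ⟨fun j => match j with | 0 => 0 | j + 1 => r j, fun s => ?_⟩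
  show s • F s = _
  rw [hr s, Finset.sum_range_succ' _ D]
  simp only [pow_zero, one_smul, smul_zero, add_zero, Finset.smul_sum]
  exact Finset.sum_congr rfl fun j _ => by rw [pow_succ', mul_smul]

lemma pfd_pow_smul (u : ℕ) {D : ℕ} {F : k → A} (hF : PFD D F) :
    PFD (D + u) (fun s => s ^ u • F s) := by
  induction u with
  | zero => exact pfd_congr (fun s => by simp) hF
  | succ u ih =>
    have := pfd_mulX ih
    exact pfd_congr (fun s => by rw [pow_succ', mul_smul]) (by simpa [add_assoc] using this)

lemma pfd_finset_sum {β : Type*} (S : Finset β) {D : ℕ} (G : β → k → A)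
    (hG : ∀ b ∈ S, PFD D (G b)) : PFD D (fun s => ∑ b ∈ S, G b s) := by
  classical
  induction S using Finset.induction_on with
  | empty => exact pfd_congr (fun s => by simp) (pfd_zero D)
  | @insert a S' hb ih =>
    have h1 := pfd_add (hG a (Finset.mem_insert_self a S'))
      (ih fun b hbS => hG b (Finset.mem_insert_of_mem hbS))
    refine pfd_congr (fun s => ?_) (pfd_mono (by omega) h1)
    rw [Finset.sum_insert hb]

section Vandermonde

variable [CharZero k]

lemma rep_coeff_zero {D : ℕ} {r : ℕ → A}
    (h : ∀ s : k, ∑ j ∈ Finset.range D, s ^ j • r j = 0) :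
    ∀ j, j < D → r j = 0 := by
  haveI : Infinite k := Infinite.of_injective (Nat.cast : ℕ → k) Nat.cast_injective
  intro j hj
  rw [← Module.forall_dual_apply_eq_zero_iff k (r j)]
  intro φ
  set p : Polynomial k := ∑ u ∈ Finset.range D, Polynomial.C (φ (r u)) * Polynomial.X ^ u with hp
  have hev : ∀ s : k, p.eval s = 0 := by
    intro s
    have h2 := congrArg φ (h s)
    rw [map_sum, map_zero] at h2
    rw [hp]
    simp only [Polynomial.eval_finset_sum, Polynomial.eval_mul, Polynomial.eval_C,
      Polynomial.eval_pow, Polynomial.eval_X]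
    rw [← h2]
    exact Finset.sum_congr rfl fun u _ => by rw [map_smul, smul_eq_mul, mul_comm]
  have hp0 : p = 0 := Polynomial.funext (by simp [hev])
  have hc := congrArg (fun q : Polynomial k => q.coeff j) hp0
  simp only [hp, Polynomial.finset_sum_coeff, Polynomial.coeff_C_mul, Polynomial.coeff_X_pow,
    Polynomial.coeff_zero] at hc
  rw [← hc]
  rw [Finset.sum_congr rfl (fun u _ => by rw [mul_ite, mul_one, mul_zero]),
    Finset.sum_ite_eq (Finset.range D) j (fun u => φ (r u)), if_pos (Finset.mem_range.2 hj)]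

lemma rep_coeff_eq {D : ℕ} {r q : ℕ → A}
    (h : ∀ s : k, ∑ j ∈ Finset.range D, s ^ j • r j = ∑ j ∈ Finset.range D, s ^ j • q j) :
    ∀ j, j < D → r j = q j := by
  intro j hj
  have h0 : ∀ s : k, ∑ j ∈ Finset.range D, s ^ j • (r j - q j) = 0 := by
    intro s
    simp only [smul_sub, Finset.sum_sub_distrib, h s, sub_self]
  have := rep_coeff_zero h0 j hj
  exact sub_eq_zero.1 this

end Vandermonde

/-- regrouping helper for `A₀ + s•A₁ + s²•(poly)`. -/
lemma rep_shift2 (A₀ A₁ : A) {Dh : ℕ} (h : ℕ → A) (s : k) :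
    A₀ + s • A₁ + s • (s • (∑ j ∈ Finset.range Dh, s ^ j • h j))
      = ∑ j ∈ Finset.range (Dh + 2), s ^ j •
          (fun j => match j with | 0 => A₀ | 1 => A₁ | (u+2) => h u) j := by
  rw [Finset.sum_range_succ' _ (Dh + 1), Finset.sum_range_succ' _ Dh]
  simp only [pow_zero, one_smul, pow_succ']
  have : ∀ j ∈ Finset.range Dh, (s * (s * s ^ j)) • h j = s • (s • (s ^ j • h j)) := by
    intro j _; rw [mul_smul, mul_smul]
  rw [Finset.sum_congr rfl this]
  rw [← Finset.smul_sum, ← Finset.smul_sum]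
  simp only [mul_one]
  abel

section Mu

variable {d : ℕ} (μ : MultilinearMap k (fun _ : Fin d => A) A)

/-- `μ` applied to polynomial families is polynomial. -/
lemma pfd_mu {D : ℕ} {C : Fin d → k → A} (hC : ∀ i, PFD D (C i)) :
    PFD (d * D + 1) (fun s => μ fun i => C i s) := by
  classical
  have key : ∀ jj, jj ≤ d → ∀ c : Fin d → A,
      PFD (jj * D + 1) (fun s => μ fun i => if (i : ℕ) < jj then C i s else c i) := by
    intro jj
    induction jj with
    | zero =>
      intro _ c
      refine pfd_congr (fun s => ?_) (pfd_mono (show 1 ≤ 0 * D + 1 by omega)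
        (pfd_const (μ fun i => c i)))
      simp
    | succ jj ih =>
      intro hjj c
      have hjd : jj < d := hjj
      set jf : Fin d := ⟨jj, hjd⟩ with hjf
      obtain ⟨r, hr⟩ := hC jf
      have main : ∀ s : k, (μ fun i => if (i : ℕ) < jj + 1 then C i s else c i)
          = ∑ u ∈ Finset.range D, s ^ u •
              (μ fun i => if (i : ℕ) < jj then C i s else (Function.update c jf (r u)) i) := by
        intro s
        have h1 : (fun i : Fin d => if (i : ℕ) < jj + 1 then C i s else c i)
            = Function.update (fun i : Fin d => if (i : ℕ) < jj then C i s else c i) jf (C jf s) := by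
          funext i
          rcases eq_or_ne i jf with rfl | hne
          · rw [Function.update_self]
            simp [hjf]
          · rw [Function.update_of_ne hne]
            have hni : (i : ℕ) ≠ jj := fun hc => hne (Fin.ext (by simp [hjf, hc]))
            by_cases hlt : (i : ℕ) < jj
            · rw [if_pos (by omega), if_pos hlt]
            · rw [if_neg (by omega), if_neg hlt]
        rw [h1, hr s, MultilinearMap.map_update_sum]
        refine Finset.sum_congr rfl fun u _ => ?_
        rw [MultilinearMap.map_update_smul]
        congr 1
        apply congrArg
        funext i
        rcases eq_or_ne i jf with rfl | hne
        · rw [Function.update_self, if_neg (by simp [hjf]), Function.update_self]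
        · rw [Function.update_of_ne hne]
          by_cases hlt : (i : ℕ) < jj
          · rw [if_pos hlt, if_pos hlt]
          · rw [if_neg hlt, if_neg hlt, Function.update_of_ne hne]
      have hsum : PFD (jj * D + 1 + D)
          (fun s => ∑ u ∈ Finset.range D, s ^ u •
              (μ fun i => if (i : ℕ) < jj then C i s else (Function.update c jf (r u)) i)) := by
        refine pfd_finset_sum (Finset.range D) _ (fun u hu => ?_)
        have h2 := pfd_pow_smul u (ih hjd.le (Function.update c jf (r u)))
        exact pfd_mono (by have := Finset.mem_range.1 hu; omega) h2
      refine pfd_congr (fun s => (main s).symm) (pfd_mono (by ring_nf; omega) hsum)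
  have h3 := key d le_rfl (fun _ => 0)
  refine pfd_congr (fun s => ?_) h3
  congr 1
  funext i
  rw [if_pos i.isLt]

/-- first-order expansion of `μ` along a perturbation of arbitrary base `γ`. -/
lemma fo_zero {DG : ℕ} (γ : Fin d → A) (G : Fin d → k → A) (hG : ∀ i, PFD DG (G i)) :
    ∃ E H, PFD E (H : k → A) ∧ ∀ s : k, (μ fun i => γ i + s • G i s) = μ γ + s • H s := by
  classical
  have key : ∀ jj, jj ≤ d → ∃ E H, PFD E (H : k → A) ∧
      ∀ s : k, (μ fun i => if (i : ℕ) < jj then γ i + s • G i s else γ i) = μ γ + s • H s := by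
    intro jj
    induction jj with
    | zero =>
      refine fun _ => ⟨1, fun _ => 0, pfd_zero 1, fun s => ?_⟩
      simp
    | succ jj ih =>
      intro hjj
      have hjd : jj < d := hjj
      obtain ⟨E, H, hH, hkey⟩ := ih hjd.le
      set jf : Fin d := ⟨jj, hjd⟩ with hjf
      -- the second term as a polynomial function
      have hPF : PFD (d * (DG + 2) + 1) (fun s =>
          μ (Function.update (fun i : Fin d => if (i : ℕ) < jj then γ i + s • G i s else γ i)
              jf (G jf s))) := by
        have : ∀ s : k, (Function.update (fun i : Fin d => if (i : ℕ) < jj then γ i + s • G i s else γ i)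
              jf (G jf s))
            = fun i : Fin d => (fun (i : Fin d) (s : k) => if i = jf then G jf s else
                if (i : ℕ) < jj then γ i + s • G i s else γ i) i s := by
          intro s; funext i
          rcases eq_or_ne i jf with rfl | hne
          · simp
          · simp [Function.update_of_ne hne, hne]
        refine pfd_congr (fun s => by rw [this s]) (pfd_mu μ (fun i => ?_))
        by_cases hi : i = jf
        · simp only [hi, if_pos]
          exact pfd_mono (by omega) (hG jf)
        · simp only [hi, if_neg, if_false]
          by_cases hlt : (i : ℕ) < jj
          · simp only [hlt, if_true]
            have := pfd_add (pfd_const (γ i)) (pfd_mulX (hG i))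
            exact pfd_mono (by omega) this
          · simp only [hlt, if_false]
            exact pfd_mono (by omega) (pfd_const (γ i))
      refine ⟨max E (d * (DG + 2) + 1), fun s => H s +
        μ (Function.update (fun i : Fin d => if (i : ℕ) < jj then γ i + s • G i s else γ i)
            jf (G jf s)), pfd_add hH hPF, fun s => ?_⟩
      have h1 : (fun i : Fin d => if (i : ℕ) < jj + 1 then γ i + s • G i s else γ i)
          = Function.update (fun i : Fin d => if (i : ℕ) < jj then γ i + s • G i s else γ i) jf
              (γ jf + s • G jf s) := by
        funext i
        rcases eq_or_ne i jf with rfl | hne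
        · rw [Function.update_self, if_pos (by simp [hjf])]
        · rw [Function.update_of_ne hne]
          have hni : (i : ℕ) ≠ jj := fun hc => hne (Fin.ext (by simp [hjf, hc]))
          by_cases hlt : (i : ℕ) < jj
          · rw [if_pos (by omega), if_pos hlt]
          · rw [if_neg (by omega), if_neg hlt]
      rw [h1, MultilinearMap.map_update_add, MultilinearMap.map_update_smul]
      have h2 : Function.update (fun i : Fin d => if (i : ℕ) < jj then γ i + s • G i s else γ i) jf
          (γ jf) = fun i : Fin d => if (i : ℕ) < jj then γ i + s • G i s else γ i := by
        have : γ jf = (fun i : Fin d => if (i : ℕ) < jj then γ i + s • G i s else γ i) jf := by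
          simp [hjf]
        rw [this, Function.update_eq_self]
      rw [h2, hkey s, smul_add]
      abel
  obtain ⟨E, H, hH, hkey⟩ := key d le_rfl
  refine ⟨E, H, hH, fun s => ?_⟩
  rw [← hkey s]
  congr 1
  funext i
  rw [if_pos i.isLt]

/-- second-order expansion of `μ` on the diagonal perturbation. -/
lemma fo_one {DR : ℕ} (α β : A) (R : k → A) (hR : PFD DR R) :
    ∃ E H, PFD E (H : k → A) ∧ ∀ s : k,
      (μ fun _ => α + s • β + s • (s • R s))
        = (μ fun _ => α) + s • (∑ i : Fin d, μ (Function.update (fun _ => α) i β))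
          + s • (s • H s) := by
  classical
  have key : ∀ jj, jj ≤ d → ∃ E H, PFD E (H : k → A) ∧ ∀ s : k,
      (μ fun i => if (i : ℕ) < jj then α + s • β + s • (s • R s) else α)
        = (μ fun _ => α)
          + s • (∑ i ∈ Finset.univ.filter (fun i : Fin d => (i : ℕ) < jj),
              μ (Function.update (fun _ => α) i β))
          + s • (s • H s) := by
    intro jj
    induction jj with
    | zero =>
      refine fun _ => ⟨1, fun _ => 0, pfd_zero 1, fun s => ?_⟩
      simp
    | succ jj ih =>
      intro hjj
      have hjd : jj < d := hjj
      obtain ⟨E, H, hH, hkey⟩ := ih hjd.le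
      set jf : Fin d := ⟨jj, hjd⟩ with hjf
      set base : k → Fin d → A :=
        fun s i => if (i : ℕ) < jj then α + s • β + s • (s • R s) else α with hbase
      -- base is a polynomial family
      have hbasePF : ∀ i : Fin d, PFD (DR + 2) (fun s => base s i) := by
        intro i
        by_cases hlt : (i : ℕ) < jj
        · simp only [hbase, hlt, if_true]
          have h4 := pfd_mulX (pfd_mulX hR)
          have h5 := pfd_add (pfd_add (pfd_const α) (pfd_mulX (pfd_const β))) h4
          refine pfd_congr (fun s => ?_) (pfd_mono (by omega) h5)
          simp [mul_smul]
        · simp only [hbase, hlt, if_false]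
          exact pfd_mono (by omega) (pfd_const α)
      -- middle term via fo_zero
      obtain ⟨E2, H2, hH2, h2⟩ := fo_zero μ (Function.update (fun _ => α) jf β)
        (fun i s => if (i : ℕ) < jj then β + s • R s else 0)
        (DG := DR + 1)
        (fun i => by
          by_cases hlt : (i : ℕ) < jj
          · simp only [hlt, if_true]
            exact pfd_mono (max_le (by omega) le_rfl)
              (pfd_add (pfd_const β) (pfd_mulX hR))
          · simp only [hlt, if_false]
            exact pfd_zero _)
      -- third term is a polynomial function
      have hPF3 : PFD (d * (DR + 2) + 1)
          (fun s => μ (Function.update (base s) jf (R s))) := by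
        have : ∀ s : k, Function.update (base s) jf (R s)
            = fun i : Fin d => (fun (i : Fin d) (s : k) => if i = jf then R s else base s i) i s := by
          intro s; funext i
          rcases eq_or_ne i jf with rfl | hne
          · simp
          · simp [Function.update_of_ne hne, hne]
        refine pfd_congr (fun s => by rw [this s]) (pfd_mu μ (fun i => ?_))
        by_cases hi : i = jf
        · simp only [hi, if_pos]
          exact pfd_mono (by omega) hR
        · simp only [hi, if_neg, if_false]
          exact hbasePF i
      refine ⟨max E (max E2 (d * (DR + 2) + 1)),
        fun s => H s + (H2 s + μ (Function.update (base s) jf (R s))),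
        pfd_add hH (pfd_add hH2 hPF3), fun s => ?_⟩
      have h1 : (fun i : Fin d => if (i : ℕ) < jj + 1 then α + s • β + s • (s • R s) else α)
          = Function.update (base s) jf (α + s • β + s • (s • R s)) := by
        funext i
        rcases eq_or_ne i jf with rfl | hne
        · rw [Function.update_self, if_pos (by simp [hjf])]
        · rw [Function.update_of_ne hne]
          have hni : (i : ℕ) ≠ jj := fun hc => hne (Fin.ext (by simp [hjf, hc]))
          simp only [hbase]
          by_cases hlt : (i : ℕ) < jj
          · rw [if_pos (by omega), if_pos hlt]
          · rw [if_neg (by omega), if_neg hlt]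
      rw [h1, MultilinearMap.map_update_add, MultilinearMap.map_update_add,
        MultilinearMap.map_update_smul, MultilinearMap.map_update_smul,
        MultilinearMap.map_update_smul]
      -- first piece
      have hfirst : Function.update (base s) jf α = base s := by
        have : α = base s jf := by simp [hbase, hjf]
        rw [this, Function.update_eq_self]
      -- middle piece via h2
      have hmid : μ (Function.update (base s) jf β)
          = μ (Function.update (fun _ => α) jf β) + s • H2 s := by
        rw [← h2 s]
        congr 1
        funext i
        rcases eq_or_ne i jf with rfl | hne
        · rw [Function.update_self, Function.update_self, if_neg (by simp [hjf]),
            smul_zero, add_zero]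
        · rw [Function.update_of_ne hne, Function.update_of_ne hne]
          simp only [hbase]
          by_cases hlt : (i : ℕ) < jj
          · rw [if_pos hlt, if_pos hlt, smul_add, add_assoc]
          · rw [if_neg hlt, if_neg hlt, smul_zero, add_zero]
      rw [hfirst, hkey s, hmid]
      have hfins : Finset.univ.filter (fun i : Fin d => (i : ℕ) < jj + 1)
          = insert jf (Finset.univ.filter (fun i : Fin d => (i : ℕ) < jj)) := by
        ext i
        simp only [Finset.mem_filter, Finset.mem_univ, true_and, Finset.mem_insert]
        constructor
        · intro h5
          rcases eq_or_ne i jf with rfl | hne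
          · exact Or.inl rfl
          · have hni : (i : ℕ) ≠ jj := fun hc => hne (Fin.ext (by simp [hjf, hc]))
            exact Or.inr (by omega)
        · intro h5
          rcases h5 with rfl | h5
          · simp [hjf]
          · omega
      have hnotmem : jf ∉ Finset.univ.filter (fun i : Fin d => (i : ℕ) < jj) := by
        simp [hjf]
      rw [hfins, Finset.sum_insert hnotmem]
      simp only [smul_add]
      abel
  obtain ⟨E, H, hH, hkey⟩ := key d le_rfl
  refine ⟨E, H, hH, fun s => ?_⟩
  have h6 : (fun _ : Fin d => α + s • β + s • (s • R s))
      = fun i : Fin d => if (i : ℕ) < d then α + s • β + s • (s • R s) else α := by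
    funext i; rw [if_pos i.isLt]
  have h7 : Finset.univ.filter (fun i : Fin d => (i : ℕ) < d) = Finset.univ := by
    ext i; simp [i.isLt]
  rw [h6, hkey s, h7]


/-- truncated inverse flow of `z ↦ z + t • μ(z,…,z)` -/
def psi (μ : MultilinearMap k (fun _ : Fin d => A) A) : ℕ → k → A → A
  | 0, _, w => w
  | m + 1, t, w => w - t • μ (fun _ => psi μ m t w)

/-- syntactic derivative of `psi` at `a` in direction `b` -/
def dpsi (μ : MultilinearMap k (fun _ : Fin d => A) A) : ℕ → k → A → A → A
  | 0, _, _, b => b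
  | m + 1, t, a, b => b - t • ∑ i : Fin d,
      μ (Function.update (fun _ => psi μ m t a) i (dpsi μ m t a b))

lemma dpsi_add (m : ℕ) (t : k) (a b c : A) :
    dpsi μ m t a (b + c) = dpsi μ m t a b + dpsi μ m t a c := by
  induction m with
  | zero => simp [dpsi]
  | succ m ih =>
    simp only [dpsi, ih]
    rw [Finset.sum_congr rfl (fun i _ => MultilinearMap.map_update_add μ _ i _ _),
      Finset.sum_add_distrib, smul_add]
    abel

lemma dpsi_smul (m : ℕ) (t c : k) (a b : A) :
    dpsi μ m t a (c • b) = c • dpsi μ m t a b := by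
  induction m with
  | zero => simp [dpsi]
  | succ m ih =>
    simp only [dpsi, ih]
    rw [Finset.sum_congr rfl (fun i _ => MultilinearMap.map_update_smul μ _ i _ _),
      ← Finset.smul_sum, smul_comm t c, smul_sub]

lemma pfd_psi_comp (m : ℕ) {DG : ℕ} {G : k → A} (hG : PFD DG G) :
    ∃ E, PFD E (fun t => psi μ m t (G t)) := by
  induction m with
  | zero => exact ⟨DG, pfd_congr (fun t => by simp [psi]) hG⟩
  | succ m ih =>
    obtain ⟨E, hE⟩ := ih
    have h1 : PFD (d * E + 1) (fun t => μ (fun _ : Fin d => psi μ m t (G t))) :=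
      pfd_mu μ (fun _ => hE)
    have h2 := pfd_sub hG (pfd_mulX h1)
    exact ⟨max DG (d * E + 1 + 1), pfd_congr (fun t => by simp [psi]) h2⟩

lemma pfd_dpsi (m : ℕ) {Da : ℕ} {a : k → A} (ha : PFD Da a) :
    ∃ E, ∀ v : A, PFD E (fun t => dpsi μ m t (a t) v) := by
  induction m with
  | zero => exact ⟨1, fun v => pfd_congr (fun t => by simp [dpsi]) (pfd_const v)⟩
  | succ m ih =>
    obtain ⟨E, hE⟩ := ih
    obtain ⟨E0, hE0⟩ := pfd_psi_comp μ m ha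
    refine ⟨max 1 (d * max E0 E + 1 + 1), fun v => ?_⟩
    have hsum : PFD (d * max E0 E + 1) (fun t => ∑ i : Fin d,
        μ (Function.update (fun _ : Fin d => psi μ m t (a t)) i (dpsi μ m t (a t) v))) := by
      refine pfd_finset_sum Finset.univ _ (fun i _ => ?_)
      have : ∀ t : k, Function.update (fun _ : Fin d => psi μ m t (a t)) i (dpsi μ m t (a t) v)
          = fun l : Fin d => (fun (l : Fin d) (t : k) => if l = i then dpsi μ m t (a t) v
              else psi μ m t (a t)) l t := by
        intro t; funext l
        rcases eq_or_ne l i with rfl | hne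
        · simp
        · simp [Function.update_of_ne hne, hne]
      refine pfd_congr (fun t => by rw [this t]) (pfd_mu μ (fun l => ?_))
      by_cases hl : l = i
      · simp only [hl, if_pos]
        exact pfd_mono (le_max_right _ _) (hE v)
      · simp only [hl, if_neg, if_false]
        exact pfd_mono (le_max_left _ _) hE0
    have h2 := pfd_sub (pfd_const v) (pfd_mulX hsum)
    exact pfd_congr (fun t => by simp [dpsi]) h2

lemma fo_psi (m : ℕ) (t : k) (a b : A) {DR : ℕ} (R : k → A) (hR : PFD DR R) :
    ∃ E H, PFD E (H : k → A) ∧ ∀ s : k,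
      psi μ m t (a + s • b + s • (s • R s))
        = psi μ m t a + s • dpsi μ m t a b + s • (s • H s) := by
  induction m with
  | zero => exact ⟨DR, R, hR, fun s => by simp [psi, dpsi]⟩
  | succ m ih =>
    obtain ⟨E0, H0, hH0, h0⟩ := ih
    obtain ⟨E1, H1, hH1, h1⟩ := fo_one μ (psi μ m t a) (dpsi μ m t a b) H0 hH0
    refine ⟨max DR E1, fun s => R s - t • H1 s,
      pfd_sub hR (pfd_smul t hH1), fun s => ?_⟩
    have hX : psi μ (m+1) t (a + s • b + s • (s • R s))
        = (a + s • b + s • (s • R s))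
          - t • μ (fun _ : Fin d => psi μ m t (a + s • b + s • (s • R s))) := by
      simp [psi]
    rw [hX, h0 s, h1 s]
    have hA : psi μ (m+1) t a = a - t • μ (fun _ : Fin d => psi μ m t a) := by simp [psi]
    have hB : dpsi μ (m+1) t a b = b - t • ∑ i : Fin d,
        μ (Function.update (fun _ : Fin d => psi μ m t a) i (dpsi μ m t a b)) := by
      simp [dpsi]
    rw [hA, hB]
    module

section Sub

variable (z : A)

/-- span of compositions of `z` of weight at least `j`. -/
def SUB (j : ℕ) : Submodule k A :=
  Submodule.span k {a | ∃ m', j ≤ m' ∧ IsMuComp μ z a m'}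

lemma sub_mono {j j' : ℕ} (h : j ≤ j') : SUB μ z j' ≤ SUB μ z j :=
  Submodule.span_mono (fun a ⟨m', hm', hc⟩ => ⟨m', h.trans hm', hc⟩)

lemma self_mem : z ∈ SUB μ z 0 :=
  Submodule.subset_span ⟨0, le_rfl, IsMuComp.base⟩

lemma mu_mem_sub (c : Fin d → ℕ) (v : Fin d → A) (hv : ∀ i, v i ∈ SUB μ z (c i)) :
    μ v ∈ SUB μ z (1 + ∑ i, c i) := by
  classical
  have key : ∀ jj, jj ≤ d → ∀ v : Fin d → A,
      (∀ i : Fin d, (i : ℕ) < jj → v i ∈ SUB μ z (c i)) →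
      (∀ i : Fin d, jj ≤ (i : ℕ) → ∃ m', c i ≤ m' ∧ IsMuComp μ z (v i) m') →
      μ v ∈ SUB μ z (1 + ∑ i, c i) := by
    intro jj
    induction jj with
    | zero =>
      intro _ v _ hpure
      choose mw hmw using fun i => hpure i (Nat.zero_le _)
      refine Submodule.subset_span ⟨∑ i, mw i + 1, ?_, IsMuComp.app v mw fun i => (hmw i).2⟩
      have : ∑ i, c i ≤ ∑ i, mw i := Finset.sum_le_sum fun i _ => (hmw i).1
      omega
    | succ jj ih =>
      intro hjj v hsp hpure
      have hjd : jj < d := hjj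
      set jf : Fin d := ⟨jj, hjd⟩ with hjf
      have hvjf : v jf ∈ SUB μ z (c jf) := hsp jf (Nat.lt_succ_self jj)
      have hgoal : μ (Function.update v jf (v jf)) ∈ SUB μ z (1 + ∑ i, c i) := by
        refine Submodule.span_induction
          (p := fun u _ => μ (Function.update v jf u) ∈ SUB μ z (1 + ∑ i, c i))
          ?_ ?_ ?_ ?_ hvjf
        · intro u hu
          refine ih hjd.le (Function.update v jf u) (fun i hi => ?_) (fun i hi => ?_)
          · have hne : i ≠ jf := by
              intro hc
              have hcon : (jj : ℕ) < jj := by simpa [hc, hjf] using hi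
              omega
            rw [Function.update_of_ne hne]
            exact hsp i (by omega)
          · rcases eq_or_ne i jf with rfl | hne
            · rw [Function.update_self]; exact hu
            · rw [Function.update_of_ne hne]
              have : (i : ℕ) ≠ jj := fun hc => hne (Fin.ext (by simp [hjf, hc]))
              exact hpure i (by omega)
        · show μ (Function.update v jf 0) ∈ SUB μ z (1 + ∑ i, c i)
          have h0 : Function.update v jf (0 : A) jf = 0 := Function.update_self _ _ _
          rw [MultilinearMap.map_coord_zero μ jf h0]
          exact Submodule.zero_mem _
        · intro u w _ _ hu hw
          rw [MultilinearMap.map_update_add]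
          exact Submodule.add_mem _ hu hw
        · intro cc u _ hu
          rw [MultilinearMap.map_update_smul]
          exact Submodule.smul_mem _ cc hu
      rwa [Function.update_eq_self] at hgoal
  refine key d le_rfl v (fun i _ => hv i) (fun i hi => absurd i.isLt (by omega))

end Sub

/-- multilinear telescope identity. -/
lemma mu_telescope (a b : A) :
    (μ fun _ => a) - (μ fun _ => b)
      = ∑ i : Fin d, μ (Function.update
          (fun l : Fin d => if (l : ℕ) < (i : ℕ) then a else b) i (a - b)) := by
  classical
  set g : ℕ → A := fun j => μ (fun l : Fin d => if (l : ℕ) < j then a else b) with hg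
  have h1 : ∀ j, (hj : j < d) → g (j + 1) - g j
      = μ (Function.update (fun l : Fin d => if (l : ℕ) < j then a else b) ⟨j, hj⟩ (a - b)) := by
    intro j hj
    rw [MultilinearMap.map_update_sub]
    have e1 : Function.update (fun l : Fin d => if (l : ℕ) < j then a else b) ⟨j, hj⟩ a
        = fun l : Fin d => if (l : ℕ) < j + 1 then a else b := by
      funext l
      rcases eq_or_ne l ⟨j, hj⟩ with rfl | hne
      · rw [Function.update_self, if_pos (by simp)]
      · rw [Function.update_of_ne hne]
        have : (l : ℕ) ≠ j := fun hc => hne (Fin.ext (by simp [hc]))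
        by_cases hlt : (l : ℕ) < j
        · rw [if_pos hlt, if_pos (by omega)]
        · rw [if_neg hlt, if_neg (by omega)]
    have e2 : Function.update (fun l : Fin d => if (l : ℕ) < j then a else b) ⟨j, hj⟩ b
        = fun l : Fin d => if (l : ℕ) < j then a else b := by
      funext l
      rcases eq_or_ne l ⟨j, hj⟩ with rfl | hne
      · rw [Function.update_self, if_neg (by simp)]
      · rw [Function.update_of_ne hne]
    rw [e1, e2, hg]
  have h2 : ∑ i : Fin d, μ (Function.update
        (fun l : Fin d => if (l : ℕ) < (i : ℕ) then a else b) i (a - b))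
      = ∑ j ∈ Finset.range d, (g (j + 1) - g j) := by
    rw [← Fin.sum_univ_eq_sum_range (fun j => g (j + 1) - g j) d]
    refine Finset.sum_congr rfl fun i _ => ?_
    rw [h1 i.1 i.isLt]
  rw [h2, Finset.sum_range_sub]
  have e3 : g d = μ fun _ => a := by
    simp only [hg]
    exact congrArg (fun v => μ v) (funext fun l => if_pos l.isLt)
  have e4 : g 0 = μ fun _ => b := by
    simp only [hg]
    exact congrArg (fun v => μ v) (funext fun l => if_neg (Nat.not_lt_zero _))
  rw [e3, e4]

lemma psi_mem_sub {z w : A} (hw : w ∈ SUB μ z 0) (m : ℕ) (t : k) :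
    psi μ m t w ∈ SUB μ z 0 := by
  induction m with
  | zero => exact hw
  | succ m ih =>
    show w - t • μ (fun _ => psi μ m t w) ∈ _
    refine Submodule.sub_mem _ hw (Submodule.smul_mem _ t ?_)
    refine sub_mono μ z (Nat.zero_le 1) ?_
    have := mu_mem_sub μ z (fun _ => 0) (fun _ => psi μ m t w) (fun i => ih)
    simpa using this

lemma psi_diff_mem (m : ℕ) (t : k) (w : A) :
    psi μ (m + 1) t w - psi μ m t w ∈ SUB μ w (m + 1) := by
  induction m with
  | zero =>
    show (w - t • μ (fun _ => psi μ 0 t w)) - psi μ 0 t w ∈ _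
    have h0 : psi μ 0 t w = w := rfl
    rw [h0]
    have h1 : w - t • μ (fun _ : Fin d => w) - w = -(t • μ (fun _ : Fin d => w)) := by module
    rw [h1]
    refine Submodule.neg_mem _ (Submodule.smul_mem _ t ?_)
    have := mu_mem_sub μ w (fun _ => 0) (fun _ => w) (fun i => self_mem μ w)
    simpa using this
  | succ m ih =>
    show (w - t • μ (fun _ => psi μ (m+1) t w)) - (w - t • μ (fun _ => psi μ m t w)) ∈ _
    have h1 : (w - t • μ (fun _ : Fin d => psi μ (m+1) t w))
        - (w - t • μ (fun _ : Fin d => psi μ m t w))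
        = -(t • ((μ fun _ : Fin d => psi μ (m+1) t w) - (μ fun _ : Fin d => psi μ m t w))) := by
      module
    rw [h1, mu_telescope]
    refine Submodule.neg_mem _ (Submodule.smul_mem _ t (Submodule.sum_mem _ fun i _ => ?_))
    have hmem := mu_mem_sub μ w (fun l => if l = i then m + 1 else 0)
      (Function.update (fun l : Fin d =>
        if (l : ℕ) < (i : ℕ) then psi μ (m+1) t w else psi μ m t w) i
        (psi μ (m+1) t w - psi μ m t w)) ?_
    · have he2 : (1 + ∑ l : Fin d, if l = i then m + 1 else 0) = m + 1 + 1 := by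
        rw [Finset.sum_ite_eq' Finset.univ i (fun _ => m + 1)]
        simp only [Finset.mem_univ, if_pos]
        omega
      rwa [he2] at hmem
    · intro l
      rcases eq_or_ne l i with rfl | hne
      · simp only [Function.update_self, if_pos]
        exact ih
      · simp only [Function.update_of_ne hne, if_neg hne]
        by_cases hlt : (l : ℕ) < (i : ℕ)
        · rw [if_pos hlt]; exact psi_mem_sub μ (self_mem μ w) (m+1) t
        · rw [if_neg hlt]; exact psi_mem_sub μ (self_mem μ w) m t

section WithNil

variable (n : ℕ)
  (hnil : ∀ (x a : A) (m : ℕ), IsMuComp μ x a m → n ≤ m → a = 0)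

include hnil

lemma sub_nil {j : ℕ} (hn : n ≤ j) (z : A) : SUB μ z j = ⊥ := by
  rw [SUB, Submodule.span_eq_bot]
  rintro a ⟨m', hm', hc⟩
  exact hnil z a m' hc (by omega)

lemma phi_fix (t : k) (w : A) :
    psi μ n t w = w - t • μ (fun _ => psi μ n t w) := by
  have h := psi_diff_mem μ n t w
  rw [sub_nil μ n hnil (Nat.le_succ n) w, Submodule.mem_bot] at h
  have h2 := sub_eq_zero.1 h
  calc psi μ n t w = psi μ (n + 1) t w := h2.symm
  _ = w - t • μ (fun _ => psi μ n t w) := by simp [psi]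

lemma phi_left_inv (t : k) (z : A) :
    psi μ n t (z + t • μ (fun _ => z)) = z := by
  set w : A := z + t • μ (fun _ : Fin d => z) with hw
  set u : A := psi μ n t w with hu
  have hmuz : μ (fun _ : Fin d => z) ∈ SUB μ z 0 := by
    refine sub_mono μ z (Nat.zero_le 1) ?_
    have := mu_mem_sub μ z (fun _ => 0) (fun _ => z) (fun i => self_mem μ z)
    simpa using this
  have hwmem : w ∈ SUB μ z 0 :=
    Submodule.add_mem _ (self_mem μ z) (Submodule.smul_mem _ t hmuz)
  have humem : u ∈ SUB μ z 0 := psi_mem_sub μ hwmem n t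
  have hueq : u = w - t • μ (fun _ : Fin d => u) := phi_fix μ n hnil t w
  have hδ : u - z = -(t • ((μ fun _ : Fin d => u) - (μ fun _ : Fin d => z))) := by
    conv_lhs => rw [hueq, hw]
    module
  have key : ∀ j, j ≤ n → u - z ∈ SUB μ z j := by
    intro j
    induction j with
    | zero => exact fun _ => Submodule.sub_mem _ humem (self_mem μ z)
    | succ j ih =>
      intro hj
      have hprev := ih (by omega)
      rw [hδ, mu_telescope]
      refine Submodule.neg_mem _ (Submodule.smul_mem _ t (Submodule.sum_mem _ fun i _ => ?_))
      have hmem := mu_mem_sub μ z (fun l => if l = i then j else 0)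
        (Function.update (fun l : Fin d => if (l : ℕ) < (i : ℕ) then u else z) i (u - z)) ?_
      · have he : (1 + ∑ l : Fin d, if l = i then j else 0) = j + 1 := by
          rw [Finset.sum_ite_eq' Finset.univ i (fun _ => j)]
          simp only [Finset.mem_univ, if_pos]
          omega
        rwa [he] at hmem
      · intro l
        rcases eq_or_ne l i with rfl | hne
        · simp only [Function.update_self, if_pos]
          exact hprev
        · simp only [Function.update_of_ne hne, if_neg hne]
          by_cases hlt : (l : ℕ) < (i : ℕ)
          · rw [if_pos hlt]; exact humem
          · rw [if_neg hlt]; exact self_mem μ z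
  have hfin := key n le_rfl
  rw [sub_nil μ n hnil le_rfl z, Submodule.mem_bot] at hfin
  exact sub_eq_zero.1 hfin

end WithNil
end Mu
end GerstAux

open GerstAux

/-- Gerstenhaber–Umirbaev: a Gerstenhaber nil symmetric `d`-linear algebra is Engel. -/
theorem stmt0 {k A : Type*} [Field k] [CharZero k] [AddCommGroup A] [Module k A]
    {d : ℕ} (hd : 2 ≤ d) (μ : MultilinearMap k (fun _ : Fin d => A) A)
    (hsymm : ∀ (σ : Equiv.Perm (Fin d)) (v : Fin d → A), μ (v ∘ σ) = μ v)
    (n : ℕ)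
    (hnil : ∀ (x a : A) (m : ℕ), IsMuComp μ x a m → n ≤ m → a = 0) :
    ∀ x : A, ∃ m : ℕ, ∀ y : A,
      (fun y => μ (fun i => if (i : ℕ) = 0 then y else x))^[m] y = 0 := by
  classical
  intro x
  haveI : NeZero d := ⟨by omega⟩
  set Ad : A → A := fun y => μ (fun i => if (i : ℕ) = 0 then y else x) with hAd
  have hAdu : ∀ v : A, Ad v = μ (Function.update (fun _ : Fin d => x) (0 : Fin d) v) := by
    intro v
    rw [hAd]
    refine congrArg μ (funext fun l => ?_)
    rw [Function.update_apply]
    by_cases h0 : l = 0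
    · rw [if_pos (by simp [h0]), if_pos h0]
    · rw [if_neg (fun hc => h0 (Fin.ext (by simp [hc]))), if_neg h0]
  have hAdsmul : ∀ (c : k) (v : A), Ad (c • v) = c • Ad v := by
    intro c v
    rw [hAdu, hAdu, MultilinearMap.map_update_smul]
  have hAditer : ∀ (j : ℕ) (c : k) (v : A), Ad^[j] (c • v) = c • Ad^[j] v := by
    intro j
    induction j with
    | zero => intro c v; simp
    | succ j ih =>
      intro c v
      rw [Function.iterate_succ_apply, Function.iterate_succ_apply, hAdsmul, ih]
  set Bop : A → A := fun v => ∑ i : Fin d, μ (Function.update (fun _ : Fin d => x) i v)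
    with hBop
  have hBAd : ∀ v : A, Bop v = (d : k) • Ad v := by
    intro v
    have hterm : ∀ i : Fin d, μ (Function.update (fun _ : Fin d => x) i v)
        = μ (Function.update (fun _ : Fin d => x) (0 : Fin d) v) := by
      intro i
      have hcomp : (Function.update (fun _ : Fin d => x) (0 : Fin d) v)
            ∘ (Equiv.swap (0 : Fin d) i)
          = Function.update (fun _ : Fin d => x) i v := by
        funext l
        rcases eq_or_ne l i with rfl | hli
        · show Function.update (fun _ : Fin d => x) 0 v (Equiv.swap (0 : Fin d) l l) = _
          rw [Equiv.swap_apply_right, Function.update_self, Function.update_self]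
        · rcases eq_or_ne l 0 with rfl | hl0
          · show Function.update (fun _ : Fin d => x) 0 v (Equiv.swap (0 : Fin d) i 0) = _
            rw [Equiv.swap_apply_left, Function.update_of_ne (Ne.symm hli),
              Function.update_of_ne hli]
          · show Function.update (fun _ : Fin d => x) 0 v (Equiv.swap (0 : Fin d) i l) = _
            rw [Equiv.swap_apply_of_ne_of_ne hl0 hli, Function.update_of_ne hl0,
              Function.update_of_ne hli]
      rw [← hcomp, hsymm]
    show ∑ i : Fin d, μ (Function.update (fun _ : Fin d => x) i v) = _
    rw [Finset.sum_congr rfl (fun i _ => hterm i), Finset.sum_const, Finset.card_univ,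
      Fintype.card_fin, ← hAdu v]
    exact (Nat.cast_smul_eq_nsmul k d (Ad v)).symm
  -- the flow basepoint is a polynomial function of t
  have hmuxPFD : PFD 2 (fun t : k => x + t • μ (fun _ : Fin d => x)) := by
    have h := pfd_add (pfd_const (k := k) x) (pfd_mulX (pfd_const (k := k) (μ (fun _ : Fin d => x))))
    exact pfd_mono (max_le (by omega) le_rfl) h
  obtain ⟨E0, hE0⟩ := pfd_dpsi μ n hmuxPFD
  set D1 : ℕ := max E0 1 with hD1
  obtain ⟨Dm, hDm⟩ : ∃ Dm, D1 = Dm + 1 := ⟨D1 - 1, by omega⟩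
  have hrep : ∀ v : A, ∃ r : ℕ → A, ∀ t : k,
      dpsi μ n t (x + t • μ (fun _ : Fin d => x)) v = ∑ j ∈ Finset.range D1, t ^ j • r j := by
    intro v
    obtain ⟨r, hr⟩ := pfd_mono (le_max_left E0 1) (hE0 v)
    exact ⟨r, fun t => hr t⟩
  choose cf hcf using hrep
  -- the key relation from the left-inverse identity
  have hkey : ∀ (t : k) (y : A),
      dpsi μ n t (x + t • μ (fun _ : Fin d => x)) y
        + t • dpsi μ n t (x + t • μ (fun _ : Fin d => x)) (Bop y) = y := by
    intro t y
    obtain ⟨E1, H1, hH1, h1⟩ := fo_one μ x y (fun _ : k => (0 : A)) (pfd_zero 1)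
    have h1' : ∀ s : k, (μ fun _ : Fin d => x + s • y)
        = (μ fun _ : Fin d => x) + s • Bop y + s • (s • H1 s) := by
      intro s
      have h1s := h1 s
      simpa [hBop] using h1s
    obtain ⟨E2, H2, hH2, h2⟩ := fo_psi μ n t (x + t • μ (fun _ : Fin d => x)) (y + t • Bop y)
      (fun s => t • H1 s) (pfd_smul t hH1)
    have harg : ∀ s : k, (x + s • y) + t • (μ fun _ : Fin d => (x + s • y))
        = (x + t • μ (fun _ : Fin d => x)) + s • (y + t • Bop y) + s • (s • (t • H1 s)) := by
      intro s
      rw [h1' s]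
      module
    have hh : ∀ s : k,
        psi μ n t (x + t • μ (fun _ : Fin d => x))
          + s • dpsi μ n t (x + t • μ (fun _ : Fin d => x)) (y + t • Bop y)
          + s • (s • H2 s) = x + s • y := by
      intro s
      rw [← h2 s, ← harg s]
      exact phi_left_inv μ n hnil t (x + s • y)
    obtain ⟨hc, hhc⟩ := hH2
    have heq := rep_coeff_eq (k := k) (A := A) (D := E2 + 2)
      (r := fun j => match j with
        | 0 => psi μ n t (x + t • μ (fun _ : Fin d => x))
        | 1 => dpsi μ n t (x + t • μ (fun _ : Fin d => x)) (y + t • Bop y)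
        | (u+2) => hc u)
      (q := fun j => match j with | 0 => x | 1 => y | (u+2) => (0 : A))
      (fun s => by
        rw [← rep_shift2 (psi μ n t (x + t • μ (fun _ : Fin d => x)))
            (dpsi μ n t (x + t • μ (fun _ : Fin d => x)) (y + t • Bop y)) hc s,
          ← rep_shift2 x y (Dh := E2) (fun _ => (0 : A)) s, ← hhc s]
        simp only [smul_zero, Finset.sum_const_zero]
        rw [hh s]
        abel) 1 (by omega)
    have heq' : dpsi μ n t (x + t • μ (fun _ : Fin d => x)) (y + t • Bop y) = y := heq
    rw [dpsi_add μ n t (x + t • μ (fun _ : Fin d => x)) y (t • Bop y),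
      dpsi_smul μ n t t (x + t • μ (fun _ : Fin d => x)) (Bop y)] at heq'
    exact heq'
  -- combine into a single polynomial identity in t
  have hcomb : ∀ (y : A) (t : k),
      ∑ j ∈ Finset.range (D1 + 1), t ^ j •
        ((if j < D1 then cf y j else 0)
          + (match j with | 0 => (0 : A) | (u+1) => cf (Bop y) u)) = y := by
    intro y t
    have e0 : ∀ j ∈ Finset.range (D1 + 1), t ^ j •
          ((if j < D1 then cf y j else 0)
            + (match j with | 0 => (0 : A) | (u+1) => cf (Bop y) u))
        = t ^ j • (if j < D1 then cf y j else 0)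
          + t ^ j • (match j with | 0 => (0 : A) | (u+1) => cf (Bop y) u) :=
      fun j _ => smul_add _ _ _
    have e1 : ∑ j ∈ Finset.range (D1 + 1), t ^ j • (if j < D1 then cf y j else 0)
        = ∑ j ∈ Finset.range D1, t ^ j • cf y j := (rep_pad (Nat.le_succ D1) (cf y) t).symm
    have e2 : ∑ j ∈ Finset.range (D1 + 1), t ^ j •
          (match j with | 0 => (0 : A) | (u+1) => cf (Bop y) u)
        = t • ∑ j ∈ Finset.range D1, t ^ j • cf (Bop y) j := by
      rw [Finset.sum_range_succ' _ D1]
      simp only [pow_zero, one_smul, smul_zero, add_zero]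
      rw [Finset.smul_sum]
      exact Finset.sum_congr rfl fun j _ => by rw [pow_succ', mul_smul]
    calc ∑ j ∈ Finset.range (D1 + 1), t ^ j •
          ((if j < D1 then cf y j else 0)
            + (match j with | 0 => (0 : A) | (u+1) => cf (Bop y) u))
        = ∑ j ∈ Finset.range (D1 + 1), (t ^ j • (if j < D1 then cf y j else 0)
            + t ^ j • (match j with | 0 => (0 : A) | (u+1) => cf (Bop y) u)) :=
          Finset.sum_congr rfl e0
      _ = (∑ j ∈ Finset.range (D1 + 1), t ^ j • (if j < D1 then cf y j else 0))
            + ∑ j ∈ Finset.range (D1 + 1), t ^ j •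
              (match j with | 0 => (0 : A) | (u+1) => cf (Bop y) u) :=
          Finset.sum_add_distrib
      _ = y := by
          rw [e1, e2, ← hcf y t, ← hcf (Bop y) t]
          exact hkey t y
  have hcoeffs : ∀ (y : A) (j : ℕ), j < D1 + 1 →
      ((if j < D1 then cf y j else 0)
        + (match j with | 0 => (0 : A) | (u+1) => cf (Bop y) u))
      = (if j = 0 then y else 0) := by
    intro y j hj
    refine rep_coeff_eq (k := k) (A := A) (D := D1 + 1)
      (r := fun j => (if j < D1 then cf y j else 0)
        + (match j with | 0 => (0 : A) | (u+1) => cf (Bop y) u))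
      (q := fun j => if j = 0 then y else 0) (fun t => ?_) j hj
    rw [hcomb y t]
    have e3 : ∀ j ∈ Finset.range (D1 + 1), t ^ j • (if j = 0 then y else (0 : A))
        = if j = 0 then y else 0 := by
      intro j _
      by_cases h : j = 0 <;> simp [h]
    rw [Finset.sum_congr rfl e3, Finset.sum_ite_eq' (Finset.range (D1 + 1)) 0 (fun _ => y),
      if_pos (Finset.mem_range.2 (by omega))]
  have hbase : ∀ v : A, cf v 0 = v := by
    intro v
    have h := hcoeffs v 0 (by omega)
    simpa [show (0 : ℕ) < D1 by omega] using h
  have hstep : ∀ (y : A) (u : ℕ), u + 1 < D1 → cf y (u + 1) = - cf (Bop y) u := by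
    intro y u hu
    have h := hcoeffs y (u + 1) (by omega)
    simp only [if_pos hu, if_neg (Nat.succ_ne_zero u)] at h
    exact eq_neg_of_add_eq_zero_left h
  have htop : ∀ y : A, cf (Bop y) Dm = 0 := by
    intro y
    have h := hcoeffs y (Dm + 1) (by omega)
    simpa [show ¬(Dm + 1 < D1) by omega, Nat.succ_ne_zero] using h
  have hform : ∀ (j : ℕ), j < D1 → ∀ v : A,
      cf v j = ((-1 : k) ^ j * (d : k) ^ j) • Ad^[j] v := by
    intro j
    induction j with
    | zero => intro _ v; simpa using hbase v
    | succ j ih =>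
      intro hj v
      rw [hstep v j hj, ih (by omega) (Bop v), hBAd v, hAditer j _ (Ad v),
        ← Function.iterate_succ_apply Ad j v, smul_smul, ← neg_smul]
      congr 1
      ring
  refine ⟨Dm + 1, fun y => ?_⟩
  have h9 := htop y
  rw [hform Dm (by omega) (Bop y), hBAd y, hAditer Dm _ (Ad y),
    ← Function.iterate_succ_apply Ad Dm y, smul_smul] at h9
  have hscal : ((-1 : k) ^ Dm * (d : k) ^ Dm * (d : k)) ≠ 0 := by
    have hdk : (d : k) ≠ 0 := Nat.cast_ne_zero.mpr (by omega)
    exact mul_ne_zero (mul_ne_zero (pow_ne_zero _ (by norm_num)) (pow_ne_zero _ hdk)) hdk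
  exact (smul_eq_zero.mp h9).resolve_left hscal
end

section
/- Let A be a commutative (binary, symmetric bilinear) algebra over a field of characteristic zero. If A is Gerstenhaber nil of nilindex p (every product of at least p copies of any single element x, under any bracketing, is zero), then A satisfies the (2p−3)-Engel identity: Ad_x^{2p-3}(y) = 0 for all x, y ∈ A, where Ad_x(y) = xy. -/
/-- `IsProd mul x a m` : `a` is a product (under some bracketing) of exactly `m`
copies of the element `x`. -/
inductive IsProd {k A : Type*} [Field k] [AddCommGroup A] [Module k A]
    (mul : A →ₗ[k] A →ₗ[k] A) (x : A) : A → ℕ → Prop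
  | base : IsProd mul x x 1
  | mul (a b : A) (m n : ℕ) (ha : IsProd mul x a m) (hb : IsProd mul x b n) :
      IsProd mul x (mul a b) (m + n)

set_option linter.unusedSectionVars false

namespace Gerst

open Finset

variable {k A : Type*} [Field k] [AddCommGroup A] [Module k A]

/-- Convolution product on two-variable arrays. -/
def conv (mul : A →ₗ[k] A →ₗ[k] A) (F G : ℕ → ℕ → A) : ℕ → ℕ → A :=
  fun N e => ∑ a ∈ range (N+1), ∑ i ∈ range (e+1), mul (F a i) (G (N-a) (e-i))

/-- The source element `t·x + t·Y·y − t²·x²`. -/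
def Xi (mul : A →ₗ[k] A →ₗ[k] A) (x y : A) : ℕ → ℕ → A := fun N e =>
  match N, e with
  | 1, 0 => x
  | 1, 1 => y
  | 2, 0 => - mul x x
  | _, _ => 0

/-- Sum of all bracketed powers of the source, graded by number of factors. -/
def pw (mul : A →ₗ[k] A →ₗ[k] A) (x y : A) : ℕ → ℕ → ℕ → A
  | 0 => fun _ _ => 0
  | 1 => Xi mul x y
  | m+2 => fun N e => ∑ i ∈ (range (m+1)).attach,
      conv mul (pw mul x y (i.1+1)) (pw mul x y (m+1-i.1)) N e
  termination_by m => m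
  decreasing_by
  · have := i.2; simp only [mem_range] at this; omega
  · have := i.2; simp only [mem_range] at this; omega

/-- Sum of all bracketed powers of an element of `A`. -/
def pwA (mul : A →ₗ[k] A →ₗ[k] A) (ξ : A) : ℕ → A
  | 0 => 0
  | 1 => ξ
  | m+2 => ∑ i ∈ (range (m+1)).attach,
      mul (pwA mul ξ (i.1+1)) (pwA mul ξ (m+1-i.1))
  termination_by m => m
  decreasing_by
  · have := i.2; simp only [mem_range] at this; omega
  · have := i.2; simp only [mem_range] at this; omega

variable (mul : A →ₗ[k] A →ₗ[k] A) (x y : A)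

lemma pw_support : ∀ m N e, 2*m < N + e ∨ N < m → pw mul x y m N e = 0 := by
  intro m
  induction m using Nat.strong_induction_on with
  | _ m ih =>
    match m with
    | 0 => intro N e _; simp [pw]
    | 1 =>
      intro N e h
      simp only [pw, Xi]
      split <;> first | rfl | omega
    | m+2 =>
      intro N e h
      rw [pw]
      apply Finset.sum_eq_zero
      rintro ⟨i, hi⟩ -
      simp only [mem_range] at hi
      apply Finset.sum_eq_zero
      intro a ha
      apply Finset.sum_eq_zero
      intro j hj
      simp only [mem_range] at ha hj
      rcases h with h | h
      · have : 2*(i+1) < a + j ∨ 2*(m+1-i) < (N-a) + (e-j) := by omega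
        rcases this with h' | h'
        · rw [ih (i+1) (by omega) a j (Or.inl h'), map_zero, LinearMap.zero_apply]
        · rw [ih (m+1-i) (by omega) (N-a) (e-j) (Or.inl h'), map_zero]
      · have : a < i+1 ∨ N - a < m+1-i := by omega
        rcases this with h' | h'
        · rw [ih (i+1) (by omega) a j (Or.inr h'), map_zero, LinearMap.zero_apply]
        · rw [ih (m+1-i) (by omega) (N-a) (e-j) (Or.inr h'), map_zero]

end Gerst
namespace Gerst2
open Finset

/-- Triangle sum equals rectangle sum when terms beyond the antidiagonal vanish. -/
lemma tri_sum {M : Type*} [AddCommMonoid M] (B : ℕ) (φ : ℕ → ℕ → M)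
    (h : ∀ i j, B < i + j → φ i j = 0) :
    ∑ N ∈ range (B+1), ∑ a ∈ range (N+1), φ a (N-a)
      = ∑ i ∈ range (B+1), ∑ j ∈ range (B+1), φ i j := by
  rw [Finset.sum_sigma', Finset.sum_sigma']
  rw [← Finset.sum_filter_of_ne (s := (range (B+1)).sigma fun _ => range (B+1))
      (p := fun x => x.1 + x.2 ≤ B) (fun x _ hx => by
        by_contra hc; exact hx (h x.1 x.2 (by omega)))]
  apply Finset.sum_bij' (i := fun (x : Σ _ : ℕ, ℕ) _ => (⟨x.2, x.1 - x.2⟩ : Σ _ : ℕ, ℕ))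
    (j := fun (x : Σ _ : ℕ, ℕ) _ => (⟨x.1 + x.2, x.1⟩ : Σ _ : ℕ, ℕ))
  · intro a ha
    simp only [mem_sigma, mem_range, mem_filter] at ha ⊢
    omega
  · intro a ha
    simp only [mem_sigma, mem_range, mem_filter] at ha ⊢
    omega
  · rintro ⟨a1, a2⟩ ha
    simp only [mem_sigma, mem_range] at ha
    have h1 : a2 + (a1 - a2) = a1 := by omega
    simp [h1]
  · rintro ⟨a1, a2⟩ ha
    simp only [mem_filter, mem_sigma, mem_range] at ha
    have h1 : a1 + a2 - a1 = a2 := by omega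
    simp [h1]
  · intro a ha; rfl

end Gerst2
namespace Gerst3
open Finset Gerst Gerst2

variable {k A : Type*} [Field k] [AddCommGroup A] [Module k A]
variable (mul : A →ₗ[k] A →ₗ[k] A)

lemma mul_span_span (S T : Set A) {a b : A}
    (ha : a ∈ Submodule.span k S) (hb : b ∈ Submodule.span k T) :
    mul a b ∈ Submodule.span k {c | ∃ s ∈ S, ∃ t ∈ T, c = mul s t} := by
  induction ha using Submodule.span_induction with
  | mem s hs =>
    induction hb using Submodule.span_induction with
    | mem t ht => exact Submodule.subset_span ⟨s, hs, t, ht, rfl⟩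
    | zero => simp
    | add u v _ _ hu hv => rw [map_add]; exact Submodule.add_mem _ hu hv
    | smul r u _ hu => rw [map_smul]; exact Submodule.smul_mem _ _ hu
  | zero => simp
  | add u v _ _ hu hv =>
    rw [map_add, LinearMap.add_apply]; exact Submodule.add_mem _ hu hv
  | smul r u _ hu =>
    rw [map_smul, LinearMap.smul_apply]; exact Submodule.smul_mem _ _ hu

lemma pwA_mem_span (ξ : A) : ∀ m, 1 ≤ m →
    pwA mul ξ m ∈ Submodule.span k {a | IsProd mul ξ a m} := by
  intro m
  induction m using Nat.strong_induction_on with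
  | _ m ih =>
    match m with
    | 0 => intro h; exact absurd h (by omega)
    | 1 =>
      intro _
      rw [pwA]
      exact Submodule.subset_span IsProd.base
    | m+2 =>
      intro _
      rw [pwA]
      apply Submodule.sum_mem
      rintro ⟨i, hi⟩ -
      simp only [mem_range] at hi
      have h1 := ih (i+1) (by omega) (by omega)
      have h2 := ih (m+1-i) (by omega) (by omega)
      have h3 := mul_span_span mul _ _ h1 h2
      apply Submodule.span_le.mpr _ h3
      rintro c ⟨s, hs, t, ht, rfl⟩
      have : IsProd mul ξ (mul s t) ((i+1) + (m+1-i)) := IsProd.mul s t _ _ hs ht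
      have he : (i+1) + (m+1-i) = m+2 := by omega
      rw [he] at this
      exact Submodule.subset_span this

lemma pwA_eq_zero (p : ℕ) (hnil : ∀ (x a : A) (m : ℕ), IsProd mul x a m → p ≤ m → a = 0)
    (ξ : A) (m : ℕ) (hm : 1 ≤ m) (hp : p ≤ m) : pwA mul ξ m = 0 := by
  have h := pwA_mem_span mul ξ m hm
  have hsub : {a | IsProd mul ξ a m} ⊆ ({0} : Set A) := by
    intro a ha; exact hnil ξ a m ha hp
  have := Submodule.span_mono (R := k) hsub h
  simpa using this

/-- Evaluation of a two-variable array at scalars `c`, `d`, up to degree `B`. -/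
def ev (c d : k) (B : ℕ) (F : ℕ → ℕ → A) : A :=
  ∑ N ∈ range (B+1), ∑ e ∈ range (B+1), (c^N * d^e) • F N e

lemma ev_mono (c d : k) (B B' : ℕ) (F : ℕ → ℕ → A) (hB : B ≤ B')
    (hF : ∀ N e, B < N ∨ B < e → F N e = 0) : ev c d B' F = ev c d B F := by
  unfold ev
  rw [← Finset.sum_subset (Finset.range_subset_range.mpr (by omega : B+1 ≤ B'+1))]
  · apply Finset.sum_congr rfl
    intro N hN
    simp only [mem_range] at hN
    rw [← Finset.sum_subset (Finset.range_subset_range.mpr (by omega : B+1 ≤ B'+1))]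
    intro e _ he
    simp only [mem_range, not_lt] at he
    rw [hF N e (Or.inr (by omega)), smul_zero]
  · intro N _ hN
    simp only [mem_range, not_lt] at hN
    apply Finset.sum_eq_zero
    intro e _
    rw [hF N e (Or.inl (by omega)), smul_zero]

lemma ev_sum {ι : Type*} (c d : k) (B : ℕ) (s : Finset ι) (H : ι → ℕ → ℕ → A) :
    ev c d B (fun N e => ∑ i ∈ s, H i N e) = ∑ i ∈ s, ev c d B (H i) := by
  unfold ev
  simp only [Finset.smul_sum]
  trans ∑ N ∈ range (B+1), ∑ i ∈ s, ∑ e ∈ range (B+1), (c^N * d^e) • H i N e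
  · exact Finset.sum_congr rfl fun N _ => Finset.sum_comm
  · exact Finset.sum_comm

end Gerst3
namespace Gerst4
open Finset Gerst Gerst2 Gerst3

variable {k A : Type*} [Field k] [AddCommGroup A] [Module k A]
variable (mul : A →ₗ[k] A →ₗ[k] A)

lemma ev_conv (c d : k) (B₁ B₂ : ℕ) (F G : ℕ → ℕ → A)
    (hF : ∀ N e, B₁ < N ∨ B₁ < e → F N e = 0)
    (hG : ∀ N e, B₂ < N ∨ B₂ < e → G N e = 0) :
    ev c d (B₁+B₂) (conv mul F G) = mul (ev c d B₁ F) (ev c d B₂ G) := by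
  set B := B₁ + B₂ with hB
  rw [← ev_mono c d B₁ B F (by omega) hF, ← ev_mono c d B₂ B G (by omega) hG]
  have expand1 : ∀ b : A, mul (ev c d B F) b
      = ∑ N₁ ∈ range (B+1), ∑ e₁ ∈ range (B+1), (c^N₁ * d^e₁) • mul (F N₁ e₁) b := by
    intro b
    unfold ev
    rw [map_sum, LinearMap.sum_apply]
    refine Finset.sum_congr rfl fun N₁ _ => ?_
    rw [map_sum, LinearMap.sum_apply]
    refine Finset.sum_congr rfl fun e₁ _ => ?_
    rw [map_smul, LinearMap.smul_apply]
  have expand2 : ∀ a : A, mul a (ev c d B G)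
      = ∑ N₂ ∈ range (B+1), ∑ e₂ ∈ range (B+1), (c^N₂ * d^e₂) • mul a (G N₂ e₂) := by
    intro a
    unfold ev
    rw [map_sum]
    refine Finset.sum_congr rfl fun N₂ _ => ?_
    rw [map_sum]
    refine Finset.sum_congr rfl fun e₂ _ => ?_
    rw [map_smul]
  have hR : mul (ev c d B F) (ev c d B G)
      = ∑ N₁ ∈ range (B+1), ∑ N₂ ∈ range (B+1), ∑ e₁ ∈ range (B+1), ∑ e₂ ∈ range (B+1),
          (c^(N₁+N₂) * d^(e₁+e₂)) • mul (F N₁ e₁) (G N₂ e₂) := by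
    rw [expand1]
    refine Finset.sum_congr rfl fun N₁ _ => ?_
    trans ∑ e₁ ∈ range (B+1), ∑ N₂ ∈ range (B+1), ∑ e₂ ∈ range (B+1),
        (c^(N₁+N₂) * d^(e₁+e₂)) • mul (F N₁ e₁) (G N₂ e₂)
    · refine Finset.sum_congr rfl fun e₁ _ => ?_
      rw [expand2, Finset.smul_sum]
      refine Finset.sum_congr rfl fun N₂ _ => ?_
      rw [Finset.smul_sum]
      refine Finset.sum_congr rfl fun e₂ _ => ?_
      rw [smul_smul]
      congr 1
      rw [pow_add, pow_add]; ring
    · exact Finset.sum_comm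
  rw [hR]
  unfold ev conv
  simp only [Finset.smul_sum]
  trans ∑ N ∈ range (B+1), ∑ a ∈ range (N+1),
      (fun u v => ∑ e ∈ range (B+1), ∑ i ∈ range (e+1),
        (c^(u+v) * d^(i+(e-i))) • mul (F u i) (G v (e-i))) a (N-a)
  · refine Finset.sum_congr rfl fun N hN => ?_
    trans ∑ e ∈ range (B+1), ∑ a ∈ range (N+1), ∑ i ∈ range (e+1),
        (c^(a+(N-a)) * d^(i+(e-i))) • mul (F a i) (G (N-a) (e-i))
    · refine Finset.sum_congr rfl fun e _ => ?_
      refine Finset.sum_congr rfl fun a ha => ?_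
      refine Finset.sum_congr rfl fun i hi => ?_
      simp only [mem_range] at ha hi
      have h1 : a + (N - a) = N := by omega
      have h2 : i + (e - i) = e := by omega
      rw [h1, h2]
    · exact Finset.sum_comm
  · rw [tri_sum B (fun u v => ∑ e ∈ range (B+1), ∑ i ∈ range (e+1),
        (c^(u+v) * d^(i+(e-i))) • mul (F u i) (G v (e-i))) (by
      intro u v huv
      apply Finset.sum_eq_zero; intro e _
      apply Finset.sum_eq_zero; intro i _
      rcases (by omega : B₁ < u ∨ B₂ < v) with h | h
      · rw [hF u i (Or.inl h), map_zero, LinearMap.zero_apply, smul_zero]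
      · rw [hG v (e-i) (Or.inl h), map_zero, smul_zero])]
    refine Finset.sum_congr rfl fun N₁ _ => ?_
    refine Finset.sum_congr rfl fun N₂ _ => ?_
    trans ∑ e ∈ range (B+1), ∑ i ∈ range (e+1),
        (fun u v => (c^(N₁+N₂) * d^(u+v)) • mul (F N₁ u) (G N₂ v)) i (e-i)
    · rfl
    · rw [tri_sum B (fun u v => (c^(N₁+N₂) * d^(u+v)) • mul (F N₁ u) (G N₂ v)) (by
        intro u v huv
        rcases (by omega : B₁ < u ∨ B₂ < v) with h | h
        · rw [hF N₁ u (Or.inr h), map_zero, LinearMap.zero_apply, smul_zero]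
        · rw [hG N₂ v (Or.inr h), map_zero, smul_zero])]

end Gerst4
namespace Gerst5
open Finset Gerst Gerst2 Gerst3 Gerst4

variable {k A : Type*} [Field k] [CharZero k] [AddCommGroup A] [Module k A]
variable (mul : A →ₗ[k] A →ₗ[k] A) (x y : A)

/-- The evaluated source element. -/
def xel (c d : k) : A := c • x + (c*d) • y - (c^2) • (mul x x)

lemma ev_Xi (c d : k) : ev c d 2 (Xi mul x y) = xel mul x y c d := by
  unfold ev xel
  simp only [Finset.sum_range_succ, Finset.sum_range_zero, Xi]
  norm_num
  abel

lemma pw_support' (m : ℕ) : ∀ N e, (2*m < N ∨ 2*m < e) → pw mul x y m N e = 0 := by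
  intro N e h
  exact pw_support mul x y m N e (Or.inl (by omega))

lemma ev_pw (c d : k) : ∀ m, 1 ≤ m →
    ev c d (2*m) (pw mul x y m) = pwA mul (xel mul x y c d) m := by
  intro m
  induction m using Nat.strong_induction_on with
  | _ m ih =>
    match m with
    | 0 => intro h; exact absurd h (by omega)
    | 1 =>
      intro _
      have : pw mul x y 1 = Xi mul x y := by rw [pw]
      rw [this]
      have h2 : (2*1 : ℕ) = 2 := rfl
      rw [h2, ev_Xi]
      rw [pwA]
    | m+2 =>
      intro _
      have hpw : pw mul x y (m+2) = fun N e => ∑ i ∈ (range (m+1)).attach,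
          conv mul (pw mul x y (i.1+1)) (pw mul x y (m+1-i.1)) N e := by rw [pw]
      rw [hpw, ev_sum, pwA]
      refine Finset.sum_congr rfl ?_
      rintro ⟨i, hi⟩ -
      simp only [mem_range] at hi
      have hsplit : 2*(m+2) = 2*(i+1) + 2*(m+1-i) := by omega
      rw [hsplit, ev_conv mul c d _ _ _ _ (pw_support' mul x y (i+1)) (pw_support' mul x y (m+1-i)),
        ih (i+1) (by omega) (by omega), ih (m+1-i) (by omega) (by omega)]

lemma vand (B : ℕ) (v : ℕ → A) (h : ∀ c : k, ∑ i ∈ range B, c^i • v i = 0) :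
    ∀ i, i < B → v i = 0 := by
  intro i hi
  rw [← Module.forall_dual_apply_eq_zero_iff k]
  intro φ
  set P : Polynomial k := ∑ j ∈ range B, Polynomial.C (φ (v j)) * Polynomial.X^j with hP
  have hev : ∀ c : k, P.eval c = 0 := by
    intro c
    rw [hP]
    have := congrArg φ (h c)
    rw [map_sum, map_zero] at this
    rw [Polynomial.eval_finset_sum]
    simp only [Polynomial.eval_mul, Polynomial.eval_C, Polynomial.eval_pow, Polynomial.eval_X]
    rw [← this]
    refine Finset.sum_congr rfl fun j _ => ?_
    rw [map_smul, smul_eq_mul, mul_comm]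
  have hP0 : P = 0 := Polynomial.funext (by simp [hev])
  have := congrArg (fun q => Polynomial.coeff q i) hP0
  simp only [hP, Polynomial.finset_sum_coeff, Polynomial.coeff_C_mul, Polynomial.coeff_X_pow,
    Polynomial.coeff_zero] at this
  rw [Finset.sum_eq_single i (fun j _ hj => by simp [Ne.symm hj]) (fun hni => absurd (mem_range.mpr hi) hni)] at this
  simpa using this

lemma pw_zero (p : ℕ) (hnil : ∀ (x a : A) (m : ℕ), IsProd mul x a m → p ≤ m → a = 0)
    (m : ℕ) (hm : 1 ≤ m) (hp : p ≤ m) : ∀ N e, pw mul x y m N e = 0 := by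
  have hev : ∀ c d : k, ev c d (2*m) (pw mul x y m) = 0 := by
    intro c d
    rw [ev_pw mul x y c d m hm]
    exact pwA_eq_zero mul p hnil _ m hm hp
  have key : ∀ d : k, ∀ N, N < 2*m+1 → ∑ e ∈ range (2*m+1), d^e • pw mul x y m N e = 0 := by
    intro d
    apply vand (k := k) (2*m+1) (fun N => ∑ e ∈ range (2*m+1), d^e • pw mul x y m N e)
    intro c
    have := hev c d
    unfold ev at this
    rw [← this]
    refine Finset.sum_congr rfl fun N _ => ?_
    rw [Finset.smul_sum]
    refine Finset.sum_congr rfl fun e _ => ?_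
    rw [smul_smul]
  intro N e
  by_cases hN : N < 2*m+1
  · by_cases he : e < 2*m+1
    · refine vand (k := k) (2*m+1) (fun e => pw mul x y m N e) ?_ e he
      intro d
      exact key d N hN
    · exact pw_support' mul x y m N e (Or.inr (by omega))
  · exact pw_support' mul x y m N e (Or.inl (by omega))

end Gerst5
namespace Gerst6
open Finset Gerst Gerst2 Gerst3 Gerst4 Gerst5

variable {k A : Type*} [Field k] [CharZero k] [AddCommGroup A] [Module k A]
variable (mul : A →ₗ[k] A →ₗ[k] A) (x y : A)

/-- Aggregate of all powers in fixed `t`-degree. -/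
def Del (N e : ℕ) : A := ∑ m ∈ range (N+1), pw mul x y m N e

omit [CharZero k] in
lemma conv_pw_zero (m₁ m₂ N e : ℕ) (h : N < m₁ + m₂) :
    conv mul (pw mul x y m₁) (pw mul x y m₂) N e = 0 := by
  unfold conv
  apply Finset.sum_eq_zero; intro a ha
  apply Finset.sum_eq_zero; intro i hi
  simp only [mem_range] at ha hi
  rcases (by omega : a < m₁ ∨ N - a < m₂) with h' | h'
  · rw [pw_support mul x y m₁ a i (Or.inr h'), map_zero, LinearMap.zero_apply]
  · rw [pw_support mul x y m₂ (N-a) (e-i) (Or.inr h'), map_zero]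

omit [CharZero k] in
lemma Del_zero (e : ℕ) : Del mul x y 0 e = 0 := by
  unfold Del
  rw [Finset.sum_range_succ, Finset.sum_range_zero, zero_add]
  rw [pw]

omit [CharZero k] in
lemma Del_one (e : ℕ) : Del mul x y 1 e = Xi mul x y 1 e := by
  unfold Del
  rw [Finset.sum_range_succ, Finset.sum_range_one]
  have h0 : pw mul x y 0 1 e = 0 := by rw [pw]
  have h1 : pw mul x y 1 = Xi mul x y := by rw [pw]
  rw [h0, h1, zero_add]

omit [CharZero k] in
lemma pw_two : pw mul x y 2 = conv mul (Xi mul x y) (Xi mul x y) := by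
  have h : pw mul x y 2 = fun N e => ∑ i ∈ (range 1).attach,
      conv mul (pw mul x y (i.1+1)) (pw mul x y (1-i.1)) N e := by rw [pw]
  rw [h]
  funext N e
  rw [Finset.sum_attach (range 1) (fun i => conv mul (pw mul x y (i+1)) (pw mul x y (1-i)) N e),
    Finset.sum_range_one]
  have h1 : pw mul x y 1 = Xi mul x y := by rw [pw]
  rw [h1]

omit [CharZero k] in
lemma Del_two_zero : Del mul x y 2 0 = 0 := by
  unfold Del
  rw [Finset.sum_range_succ, Finset.sum_range_succ, Finset.sum_range_one]
  have h0 : pw mul x y 0 2 0 = 0 := by rw [pw]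
  have h1 : pw mul x y 1 = Xi mul x y := by rw [pw]
  rw [h0, h1, pw_two, zero_add]
  unfold conv
  simp only [Finset.sum_range_succ, Finset.sum_range_zero, Finset.sum_range_one]
  norm_num
  have e0 : Xi mul x y 0 0 = (0 : A) := rfl
  have e1 : Xi mul x y 1 0 = x := rfl
  have e2 : Xi mul x y 2 0 = - mul x x := rfl
  rw [e0, e1, e2, map_zero, LinearMap.zero_apply, map_zero]
  abel

omit [CharZero k] in
lemma Del_two_one (hcomm : ∀ a b : A, mul a b = mul b a) :
    Del mul x y 2 1 = (2 : k) • mul x y := by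
  unfold Del
  rw [Finset.sum_range_succ, Finset.sum_range_succ, Finset.sum_range_one]
  have h0 : pw mul x y 0 2 1 = 0 := by rw [pw]
  have h1 : pw mul x y 1 = Xi mul x y := by rw [pw]
  rw [h0, h1, pw_two, zero_add]
  unfold conv
  simp only [Finset.sum_range_succ, Finset.sum_range_zero, Finset.sum_range_one]
  norm_num
  have e00 : Xi mul x y 0 0 = (0 : A) := rfl
  have e01 : Xi mul x y 0 1 = (0 : A) := rfl
  have e10 : Xi mul x y 1 0 = x := rfl
  have e11 : Xi mul x y 1 1 = y := rfl
  have e20 : Xi mul x y 2 0 = - mul x x := rfl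
  have e21 : Xi mul x y 2 1 = (0 : A) := rfl
  rw [e00, e01, e10, e11, e20, e21]
  simp only [map_zero, LinearMap.zero_apply, smul_zero, zero_add, add_zero]
  rw [hcomm y x, two_smul]

omit [CharZero k] in
lemma Del_rec (N : ℕ) (hN : 3 ≤ N) (e : ℕ) :
    Del mul x y N e = conv mul (Del mul x y) (Del mul x y) N e := by
  obtain ⟨K, rfl⟩ : ∃ K, N = K + 3 := ⟨N - 3, by omega⟩
  have key : ∀ m₁ m₂ : ℕ, (m₁ = 0 ∨ m₂ = 0 ∨ K + 3 < m₁ + m₂) →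
      conv mul (pw mul x y m₁) (pw mul x y m₂) (K+3) e = 0 := by
    intro m₁ m₂ h
    rcases h with h | h | h
    · subst h
      unfold conv
      apply Finset.sum_eq_zero; intro a _
      apply Finset.sum_eq_zero; intro i _
      have hz : pw mul x y 0 a i = 0 := by rw [pw]
      rw [hz, map_zero, LinearMap.zero_apply]
    · subst h
      unfold conv
      apply Finset.sum_eq_zero; intro a _
      apply Finset.sum_eq_zero; intro i _
      have hz : pw mul x y 0 (K+3-a) (e-i) = 0 := by rw [pw]
      rw [hz, map_zero]
    · exact conv_pw_zero mul x y m₁ m₂ (K+3) e h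
  have pad : ∀ f : ℕ → A, f 0 = 0 → f (K+3) = 0 →
      ∑ u ∈ range (K+2), f (u+1) = ∑ m ∈ range (K+4), f m := by
    intro f f0 ftop
    conv_rhs => rw [Finset.sum_range_succ' f]
    rw [f0, add_zero]
    conv_rhs => rw [Finset.sum_range_succ (fun i => f (i+1))]
    have hi : K + 2 + 1 = K + 3 := by omega
    rw [hi, ftop, add_zero]
  trans ∑ m₁ ∈ range (K+4), ∑ m₂ ∈ range (K+4),
      conv mul (pw mul x y m₁) (pw mul x y m₂) (K+3) e
  · -- LHS equals full rectangle
    unfold Del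
    rw [Finset.sum_range_succ']
    have h1 : ∑ i ∈ range (K+3), pw mul x y (i+1) (K+3) e
        = (∑ i ∈ range (K+2), pw mul x y (i+2) (K+3) e) + pw mul x y 1 (K+3) e := by
      rw [Finset.sum_range_succ' (fun i => pw mul x y (i+1) (K+3) e)]
    have hXi : pw mul x y 1 (K+3) e = 0 := by
      rw [pw]; unfold Xi
      split <;> first | omega | rfl
    have h00 : pw mul x y 0 (K+3) e = 0 := by rw [pw]
    rw [h1, hXi, h00, add_zero, add_zero]
    have h2 : ∀ i ∈ range (K+2), pw mul x y (i+2) (K+3) e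
        = ∑ j ∈ range (i+1), (fun u v => conv mul (pw mul x y (u+1)) (pw mul x y (v+1)) (K+3) e) j (i-j) := by
      intro i hi
      simp only [mem_range] at hi
      rw [pw]
      dsimp only
      rw [Finset.sum_attach (range (i+1))
        (fun j => conv mul (pw mul x y (j+1)) (pw mul x y (i+1-j)) (K+3) e)]
      refine Finset.sum_congr rfl fun j hj => ?_
      simp only [mem_range] at hj
      have hij : i + 1 - j = (i - j) + 1 := by omega
      rw [hij]
    rw [Finset.sum_congr rfl h2]
    rw [tri_sum (K+1) (fun u v => conv mul (pw mul x y (u+1)) (pw mul x y (v+1)) (K+3) e)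
      (fun u v huv => key (u+1) (v+1) (by omega))]
    have hr : K + 1 + 1 = K + 2 := by omega
    rw [hr]
    rw [pad (fun m₁ => ∑ m₂ ∈ range (K+2), conv mul (pw mul x y m₁) (pw mul x y (m₂+1)) (K+3) e)
        (Finset.sum_eq_zero fun m₂ _ => key 0 (m₂+1) (Or.inl rfl))
        (Finset.sum_eq_zero fun m₂ _ => key (K+3) (m₂+1) (Or.inr (Or.inr (by omega))))]
    refine Finset.sum_congr rfl fun m₁ _ => ?_
    by_cases hm₁ : m₁ = 0
    · subst hm₁
      rw [Finset.sum_eq_zero fun m₂ _ => key 0 (m₂+1) (Or.inl rfl),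
        Finset.sum_eq_zero fun m₂ _ => key 0 m₂ (Or.inl rfl)]
    · exact pad (fun m₂ => conv mul (pw mul x y m₁) (pw mul x y m₂) (K+3) e)
        (key m₁ 0 (Or.inr (Or.inl rfl)))
        (key m₁ (K+3) (Or.inr (Or.inr (by omega))))
  · -- RHS equals full rectangle
    symm
    unfold Del conv
    have expand : ∀ a ∈ range (K+3+1), ∀ i ∈ range (e+1),
        mul (∑ m₁ ∈ range (a+1), pw mul x y m₁ a i)
          (∑ m₂ ∈ range (K+3-a+1), pw mul x y m₂ (K+3-a) (e-i))
        = ∑ m₁ ∈ range (K+4), ∑ m₂ ∈ range (K+4),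
            mul (pw mul x y m₁ a i) (pw mul x y m₂ (K+3-a) (e-i)) := by
      intro a ha i hi
      simp only [mem_range] at ha hi
      have e1 : ∀ b : A, mul (∑ m₁ ∈ range (a+1), pw mul x y m₁ a i) b
          = ∑ m₁ ∈ range (a+1), mul (pw mul x y m₁ a i) b := by
        intro b; rw [map_sum, LinearMap.sum_apply]
      rw [e1]
      trans ∑ m₁ ∈ range (a+1), ∑ m₂ ∈ range (K+3-a+1),
          mul (pw mul x y m₁ a i) (pw mul x y m₂ (K+3-a) (e-i))
      · exact Finset.sum_congr rfl fun m₁ _ => map_sum _ _ _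
      · rw [Finset.sum_subset (Finset.range_subset_range.mpr (by omega : a+1 ≤ K+4))
          (fun m₁ _ hm₁ => by
            simp only [mem_range, not_lt] at hm₁
            apply Finset.sum_eq_zero; intro m₂ _
            rw [pw_support mul x y m₁ a i (Or.inr (by omega)), map_zero, LinearMap.zero_apply])]
        refine Finset.sum_congr rfl fun m₁ _ => ?_
        rw [Finset.sum_subset (Finset.range_subset_range.mpr (by omega : K+3-a+1 ≤ K+4))
          (fun m₂ _ hm₂ => by
            simp only [mem_range, not_lt] at hm₂
            rw [pw_support mul x y m₂ (K+3-a) (e-i) (Or.inr (by omega)), map_zero])]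
    rw [Finset.sum_congr rfl (fun a ha => Finset.sum_congr rfl (fun i hi => expand a ha i hi))]
    -- swap sums: (a, i, m₁, m₂) -> (m₁, m₂, a, i)
    trans ∑ m₁ ∈ range (K+4), ∑ m₂ ∈ range (K+4), ∑ a ∈ range (K+3+1), ∑ i ∈ range (e+1),
        mul (pw mul x y m₁ a i) (pw mul x y m₂ (K+3-a) (e-i))
    · trans ∑ a ∈ range (K+3+1), ∑ m₁ ∈ range (K+4), ∑ m₂ ∈ range (K+4), ∑ i ∈ range (e+1),
          mul (pw mul x y m₁ a i) (pw mul x y m₂ (K+3-a) (e-i))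
      · refine Finset.sum_congr rfl fun a _ => ?_
        trans ∑ m₁ ∈ range (K+4), ∑ i ∈ range (e+1), ∑ m₂ ∈ range (K+4),
            mul (pw mul x y m₁ a i) (pw mul x y m₂ (K+3-a) (e-i))
        · exact Finset.sum_comm
        · exact Finset.sum_congr rfl fun m₁ _ => Finset.sum_comm
      · trans ∑ m₁ ∈ range (K+4), ∑ a ∈ range (K+3+1), ∑ m₂ ∈ range (K+4), ∑ i ∈ range (e+1),
            mul (pw mul x y m₁ a i) (pw mul x y m₂ (K+3-a) (e-i))
        · exact Finset.sum_comm
        · exact Finset.sum_congr rfl fun m₁ _ => Finset.sum_comm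
    · rfl

end Gerst6
namespace Gerst7
open Finset Gerst Gerst2 Gerst3 Gerst4 Gerst5 Gerst6

variable {k A : Type*} [Field k] [CharZero k] [AddCommGroup A] [Module k A]
variable (mul : A →ₗ[k] A →ₗ[k] A) (x y : A)

omit [CharZero k] in
lemma gamma_zero : ∀ N, 2 ≤ N → Del mul x y N 0 = 0 := by
  intro N
  induction N using Nat.strong_induction_on with
  | _ N ih =>
    intro hN
    rcases eq_or_lt_of_le hN with h | h
    · rw [← h]; exact Del_two_zero mul x y
    · rw [Del_rec mul x y N (by omega) 0]
      unfold conv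
      apply Finset.sum_eq_zero; intro a ha
      apply Finset.sum_eq_zero; intro i hi
      simp only [mem_range] at ha hi
      have hi0 : i = 0 := by omega
      subst hi0
      rcases (by omega : a = 0 ∨ a = 1 ∨ (2 ≤ a ∧ a < N) ∨ a = N) with h' | h' | h' | h'
      · subst h'; rw [Del_zero, map_zero, LinearMap.zero_apply]
      · subst h'
        rw [show (0:ℕ) - 0 = 0 from rfl, ih (N-1) (by omega) (by omega), map_zero]
      · rw [ih a (by omega) (by omega), map_zero, LinearMap.zero_apply]
      · subst h'
        rw [Nat.sub_self, Del_zero, map_zero]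

omit [CharZero k] in
lemma gamma_one : Del mul x y 1 0 = x := by
  rw [Del_one]; rfl

omit [CharZero k] in
lemma delta_rec (N : ℕ) (hN : 3 ≤ N) :
    Del mul x y N 1 = mul x (Del mul x y (N-1) 1) + mul (Del mul x y (N-1) 1) x := by
  rw [Del_rec mul x y N hN 1]
  unfold conv
  have hsplit : ∀ a : ℕ, ∑ i ∈ range (1+1), mul (Del mul x y a i) (Del mul x y (N-a) (1-i))
      = mul (Del mul x y a 0) (Del mul x y (N-a) 1) + mul (Del mul x y a 1) (Del mul x y (N-a) 0) := by
    intro a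
    rw [Finset.sum_range_succ, Finset.sum_range_one]
  rw [Finset.sum_congr rfl fun a _ => hsplit a]
  rw [Finset.sum_add_distrib]
  congr 1
  · rw [Finset.sum_eq_single_of_mem 1 (by simp only [mem_range]; omega)]
    · rw [gamma_one]
    · intro a ha hne
      simp only [mem_range] at ha
      rcases (by omega : a = 0 ∨ 2 ≤ a) with h | h
      · subst h; rw [Del_zero, map_zero, LinearMap.zero_apply]
      · rw [gamma_zero mul x y a h, map_zero, LinearMap.zero_apply]
  · rw [Finset.sum_eq_single_of_mem (N-1) (by simp only [mem_range]; omega)]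
    · rw [show N - (N-1) = 1 from by omega, gamma_one]
    · intro a ha hne
      simp only [mem_range] at ha
      rcases (by omega : N - a = 0 ∨ 2 ≤ N - a) with h | h
      · rw [h, Del_zero, map_zero]
      · rw [gamma_zero mul x y (N-a) h, map_zero]

omit [CharZero k] in
lemma delta_closed (hcomm : ∀ a b : A, mul a b = mul b a) :
    ∀ j, Del mul x y (j+2) 1 = ((2:k)^(j+1)) • (fun z => mul x z)^[j+1] y := by
  intro j
  induction j with
  | zero =>
    rw [Del_two_one mul x y hcomm]
    norm_num
  | succ j ih =>
    have h3 : (3:ℕ) ≤ j+3 := by omega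
    have := delta_rec mul x y (j+3) h3
    rw [show j+3-1 = j+2 from by omega] at this
    rw [show j+1+2 = j+3 from by omega, this, ih]
    rw [map_smul, map_smul, LinearMap.smul_apply]
    rw [hcomm ((fun z => mul x z)^[j+1] y) x]
    rw [← Function.iterate_succ_apply' (fun z => mul x z) (j+1) y]
    have hw : ∀ w : A, (2:k)^(j+1) • w + (2:k)^(j+1) • w = (2:k)^(j+1+1) • w := by
      intro w
      rw [← two_smul k ((2:k)^(j+1) • w), smul_smul, ← pow_succ']
    rw [hw]

lemma delta_vanish (p : ℕ) (hnil : ∀ (x a : A) (m : ℕ), IsProd mul x a m → p ≤ m → a = 0)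
    (hp : 2 ≤ p) : Del mul x y (2*p-2) 1 = 0 := by
  unfold Del
  apply Finset.sum_eq_zero
  intro m hm
  by_cases h : p ≤ m
  · exact pw_zero mul x y p hnil m (by omega) h (2*p-2) 1
  · exact pw_support mul x y m (2*p-2) 1 (Or.inl (by omega))

end Gerst7


/-- Gerstenhaber: a commutative binary algebra that is Gerstenhaber nil of
nilindex `p` satisfies the `(2p-3)`-Engel identity. -/
theorem stmt1 {k A : Type*} [Field k] [CharZero k] [AddCommGroup A] [Module k A]
    (mul : A →ₗ[k] A →ₗ[k] A)
    (hcomm : ∀ x y : A, mul x y = mul y x)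
    (p : ℕ)
    (hnil : ∀ (x a : A) (m : ℕ), IsProd mul x a m → p ≤ m → a = 0) :
    ∀ x y : A, (fun y => mul x y)^[2 * p - 3] y = 0 := by
  intro x y
  by_cases hp : p ≤ 1
  · have hz : ∀ a : A, a = 0 := fun a => hnil a a 1 IsProd.base (by omega)
    exact hz _
  · push_neg at hp
    obtain ⟨q, rfl⟩ : ∃ q, p = q + 2 := ⟨p - 2, by omega⟩
    have hvan := Gerst7.delta_vanish mul x y (q+2) hnil (by omega)
    have hcl := Gerst7.delta_closed mul x y hcomm (2*q)
    rw [show 2*(q+2)-2 = 2*q+2 from by omega] at hvan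
    rw [hvan] at hcl
    have h2 : ((2:k)^(2*q+1)) ≠ 0 := pow_ne_zero _ two_ne_zero
    have := (smul_eq_zero.mp hcl.symm).resolve_left h2
    rw [show 2*(q+2)-3 = 2*q+1 from by omega]
    exact this
end

section
/- Let (A, μ) be a symmetric d-linear algebra over a field of characteristic zero that is Yagzhev nil, i.e., there exists p such that T_q(x) = 0 for all x ∈ A and all q ≥ p, where T_1(x) = x and T_q(x) = Σ_{i_1+...+i_d=q} μ(T_{i_1}(x),...,T_{i_d}(x)). Then the map g: A → A, g(x) = x − μ(x,...,x), is a bijection with inverse γ(y) = Σ_{j≥1} T_j(y) (a finite sum since T_j = 0 for j ≥ p). -/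
open Finset

section Poly
variable {k A : Type*} [Field k] [CharZero k] [AddCommGroup A] [Module k A]

/-- `f` is a polynomial function with all monomials of degree at least `m`. -/
def IsPolyGE (m : ℕ) (f : k → A) : Prop :=
  ∃ (N : ℕ) (a : ℕ → A), ∀ t, f t = ∑ n ∈ Finset.Ico m N, t ^ n • a n

omit [CharZero k] in
lemma sum_extend {s bigs : Finset ℕ} (hsub : s ⊆ bigs) (g : ℕ → A) (t : k) :
    ∑ n ∈ bigs, t ^ n • (if n ∈ s then g n else 0) = ∑ n ∈ s, t ^ n • g n := by
  simp only [smul_ite, smul_zero]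
  rw [Finset.sum_ite_mem, Finset.inter_eq_right.mpr hsub]

omit [CharZero k] in
lemma isPolyGE_zero (m : ℕ) : IsPolyGE m (fun _ : k => (0 : A)) :=
  ⟨0, fun _ => 0, by simp⟩

omit [CharZero k] in
lemma IsPolyGE.mono {m m' : ℕ} {f : k → A} (h : IsPolyGE m f) (hm : m' ≤ m) :
    IsPolyGE m' f := by
  obtain ⟨N, a, ha⟩ := h
  refine ⟨N, fun n => if n ∈ Finset.Ico m N then a n else 0, fun t => ?_⟩
  rw [ha t, ← sum_extend (Finset.Ico_subset_Ico hm le_rfl) a t]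

omit [CharZero k] in
lemma isPolyGE_monomial {m e : ℕ} (hm : m ≤ e) (v : A) :
    IsPolyGE m (fun t : k => t ^ e • v) := by
  refine ⟨e + 1, fun n => if n ∈ ({e} : Finset ℕ) then v else 0, fun t => ?_⟩
  rw [sum_extend (by simp [Finset.singleton_subset_iff, Finset.mem_Ico, hm]) _ t,
    Finset.sum_singleton]

omit [CharZero k] in
lemma IsPolyGE.add {m : ℕ} {f g : k → A} (hf : IsPolyGE m f) (hg : IsPolyGE m g) :
    IsPolyGE m (fun t => f t + g t) := by
  obtain ⟨N₁, a, ha⟩ := hf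
  obtain ⟨N₂, b, hb⟩ := hg
  refine ⟨max N₁ N₂, fun n => (if n ∈ Finset.Ico m N₁ then a n else 0)
    + (if n ∈ Finset.Ico m N₂ then b n else 0), fun t => ?_⟩
  have h1 := sum_extend (bigs := Finset.Ico m (max N₁ N₂))
    (Finset.Ico_subset_Ico le_rfl (le_max_left N₁ N₂)) a t
  have h2 := sum_extend (bigs := Finset.Ico m (max N₁ N₂))
    (Finset.Ico_subset_Ico le_rfl (le_max_right N₁ N₂)) b t
  show f t + g t = _
  rw [ha t, hb t, ← h1, ← h2, ← Finset.sum_add_distrib]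
  exact Finset.sum_congr rfl fun n _ => (smul_add _ _ _).symm

omit [CharZero k] in
lemma IsPolyGE.neg {m : ℕ} {f : k → A} (hf : IsPolyGE m f) :
    IsPolyGE m (fun t => -(f t)) := by
  obtain ⟨N, a, ha⟩ := hf
  exact ⟨N, fun n => -(a n), fun t => by simp [ha t]⟩

omit [CharZero k] in
lemma isPolyGE_sum {m : ℕ} {ι : Type*} (s : Finset ι) (f : ι → k → A)
    (h : ∀ i ∈ s, IsPolyGE m (f i)) :
    IsPolyGE m (fun t => ∑ i ∈ s, f i t) := by
  classical
  induction s using Finset.induction_on with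
  | empty => simpa using isPolyGE_zero m
  | @insert x s' hx ih =>
    simp only [Finset.sum_insert hx]
    exact (h x (Finset.mem_insert_self x s')).add
      (ih fun i hi => h i (Finset.mem_insert_of_mem hi))

omit [CharZero k] in
lemma isPolyGE_multilinear {d : ℕ} (μ : MultilinearMap k (fun _ : Fin d => A) A)
    (f : Fin d → k → A) (m : Fin d → ℕ) (h : ∀ i, IsPolyGE (m i) (f i)) :
    IsPolyGE (∑ i, m i) (fun t => μ (fun i => f i t)) := by
  choose N a ha using h
  have key : (fun t => μ (fun i => f i t)) = fun t =>
      ∑ r ∈ Fintype.piFinset (fun i => Finset.Ico (m i) (N i)),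
        t ^ (∑ i, r i) • μ (fun i => a i (r i)) := by
    funext t
    have h1 := μ.map_sum_finset (fun i n => t ^ n • a i n) (fun i => Finset.Ico (m i) (N i))
    simp only [← ha] at h1
    rw [h1]
    refine Finset.sum_congr rfl fun r _ => ?_
    rw [μ.map_smul_univ (fun i => t ^ r i) (fun i => a i (r i)),
      Finset.prod_pow_eq_pow_sum]
  rw [key]
  refine isPolyGE_sum _ _ fun r hr => isPolyGE_monomial ?_ _
  exact Finset.sum_le_sum fun i _ => (Finset.mem_Ico.mp (Fintype.mem_piFinset.mp hr i)).1

/-- Coefficients of an identically-zero polynomial function vanish. -/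
lemma coeff_eq_zero_of_eval_zero {N : ℕ} (a : ℕ → A)
    (h : ∀ t : k, ∑ n ∈ Finset.range N, t ^ n • a n = 0) :
    ∀ n < N, a n = 0 := by
  intro n hn
  rw [← Module.forall_dual_apply_eq_zero_iff k]
  intro φ
  set P : Polynomial k := ∑ i ∈ Finset.range N, Polynomial.C (φ (a i)) * Polynomial.X ^ i with hP
  have hev : ∀ t : k, P.eval t = 0 := by
    intro t
    have h2 := congrArg φ (h t)
    simp only [map_sum, map_smul, map_zero, smul_eq_mul] at h2
    have hev2 : P.eval t = ∑ i ∈ Finset.range N, φ (a i) * t ^ i := by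
      rw [hP, Polynomial.eval_finset_sum]
      simp
    rw [hev2, ← h2]
    exact Finset.sum_congr rfl fun i _ => mul_comm _ _
  have hP0 : P = 0 := Polynomial.funext (fun r => by rw [hev r, Polynomial.eval_zero])
  have hcoeff : P.coeff n = φ (a n) := by
    rw [hP]
    simp only [Polynomial.finset_sum_coeff, Polynomial.coeff_C_mul, Polynomial.coeff_X_pow]
    rw [Finset.sum_eq_single n]
    · simp
    · intro b _ hb; simp [Ne.symm hb]
    · intro hnn; exact absurd (Finset.mem_range.mpr hn) hnn
  rw [← hcoeff, hP0, Polynomial.coeff_zero]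

lemma eq_zero_of_forall_isPolyGE {f : k → A} (h : ∀ m, IsPolyGE m f) : ∀ t, f t = 0 := by
  obtain ⟨N₀, a, ha⟩ := h 0
  obtain ⟨N₁, b, hb⟩ := h N₀
  set c : ℕ → A := fun n =>
    (if n ∈ Finset.Ico 0 N₀ then a n else 0) - (if n ∈ Finset.Ico N₀ N₁ then b n else 0) with hc
  have hsub1 : Finset.Ico 0 N₀ ⊆ Finset.range (max N₀ N₁) := by
    intro x hx
    simp only [Finset.mem_Ico, Finset.mem_range] at hx ⊢
    exact lt_of_lt_of_le hx.2 (le_max_left _ _)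
  have hsub2 : Finset.Ico N₀ N₁ ⊆ Finset.range (max N₀ N₁) := by
    intro x hx
    simp only [Finset.mem_Ico, Finset.mem_range] at hx ⊢
    exact lt_of_lt_of_le hx.2 (le_max_right _ _)
  have hz : ∀ t : k, ∑ n ∈ Finset.range (max N₀ N₁), t ^ n • c n = 0 := by
    intro t
    calc ∑ n ∈ Finset.range (max N₀ N₁), t ^ n • c n
        = ∑ n ∈ Finset.range (max N₀ N₁),
            (t ^ n • (if n ∈ Finset.Ico 0 N₀ then a n else 0)
              - t ^ n • (if n ∈ Finset.Ico N₀ N₁ then b n else 0)) := by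
          refine Finset.sum_congr rfl fun n _ => ?_
          rw [hc]; simp [smul_sub]
      _ = f t - f t := by
          rw [Finset.sum_sub_distrib, sum_extend hsub1 a t, sum_extend hsub2 b t,
            ← ha t, ← hb t]
      _ = 0 := sub_self _
  have hcz := coeff_eq_zero_of_eval_zero c hz
  intro t
  rw [ha t]
  refine Finset.sum_eq_zero fun n hn => ?_
  have hn' : n < N₀ := (Finset.mem_Ico.mp hn).2
  have hca : c n = a n := by
    rw [hc]
    simp only [Finset.mem_Ico]
    rw [if_pos ⟨Nat.zero_le n, hn'⟩, if_neg (fun h => absurd h.1 (not_le.mpr hn')), sub_zero]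
  rw [← hca, hcz n (lt_of_lt_of_le hn' (le_max_left _ _)), smul_zero]

end Poly


/-- For a Yagzhev nil symmetric `d`-linear algebra, the map `g x = x - μ(x,...,x)`
is a bijection with inverse `γ y = ∑_{j ≥ 1} T j y` (a finite sum). -/
theorem stmt3 {k A : Type*} [Field k] [CharZero k] [AddCommGroup A] [Module k A]
    {d : ℕ} (hd : 2 ≤ d) (μ : MultilinearMap k (fun _ : Fin d => A) A)
    (hsymm : ∀ (σ : Equiv.Perm (Fin d)) (v : Fin d → A), μ (v ∘ σ) = μ v)
    (T : ℕ → A → A)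
    (hT1 : ∀ x, T 1 x = x)
    (hTq : ∀ q, 1 < q → ∀ x, T q x =
      ∑ c ∈ (Finset.Nat.antidiagonalTuple d q).filter (fun c => ∀ i, c i ≠ 0),
        μ (fun i => T (c i) x))
    (p : ℕ)
    (hYnil : ∀ q, p ≤ q → ∀ x : A, T q x = 0) :
    Function.Bijective (fun x : A => x - μ (fun _ => x)) ∧
    (∀ x : A, (∑ j ∈ Finset.Ico 1 p, T j (x - μ (fun _ => x))) = x) ∧
    (∀ y : A, (∑ j ∈ Finset.Ico 1 p, T j y) -
        μ (fun _ => ∑ j ∈ Finset.Ico 1 p, T j y) = y) := by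
  classical
  by_cases hp1 : p ≤ 1
  · have hall : ∀ x : A, x = 0 := fun x => by rw [← hT1 x]; exact hYnil 1 hp1 x
    haveI : Subsingleton A := ⟨fun a b => (hall a).trans (hall b).symm⟩
    exact ⟨⟨fun a b _ => Subsingleton.elim a b, fun y => ⟨0, Subsingleton.elim _ _⟩⟩,
      fun x => Subsingleton.elim _ _, fun y => Subsingleton.elim _ _⟩
  push_neg at hp1
  -- ### Part (★): right inverse
  have star : ∀ y : A, (∑ j ∈ Finset.Ico 1 p, T j y) -
      μ (fun _ => ∑ j ∈ Finset.Ico 1 p, T j y) = y := by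
    intro y
    have hd0 : (0:ℕ) < d := by omega
    set Q := d * (p - 1) + 1 with hQdef
    have hpQ : p ≤ Q := by
      have h1 : p - 1 ≤ d * (p - 1) := Nat.le_mul_of_pos_left _ hd0
      omega
    have hmaps : ∀ f ∈ Fintype.piFinset (fun _ : Fin d => Finset.Ico 1 p),
        (∑ i, f i) ∈ Finset.Ico 2 Q := by
      intro f hf
      have hmem : ∀ i, f i ∈ Finset.Ico 1 p := Fintype.mem_piFinset.mp hf
      have hlo : d ≤ ∑ i, f i := by
        calc d = ∑ _i : Fin d, 1 := by simp
          _ ≤ ∑ i, f i := Finset.sum_le_sum fun i _ => (Finset.mem_Ico.mp (hmem i)).1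
      have hhi : ∑ i, f i ≤ d * (p - 1) := by
        calc ∑ i, f i ≤ ∑ _i : Fin d, (p - 1) := Finset.sum_le_sum fun i _ => by
              have := Finset.mem_Ico.mp (hmem i); omega
          _ = d * (p - 1) := by simp [Finset.sum_const, mul_comm]
      rw [Finset.mem_Ico]; omega
    have hμz : μ (fun _ => ∑ j ∈ Finset.Ico 1 p, T j y) = ∑ q ∈ Finset.Ico 2 Q, T q y := by
      rw [μ.map_sum_finset (fun i j => T j y) (fun _ => Finset.Ico 1 p)]
      rw [← Finset.sum_fiberwise_of_maps_to hmaps (fun f => μ (fun i => T (f i) y))]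
      refine Finset.sum_congr rfl fun q hq => ?_
      obtain ⟨hq2, hqQ⟩ := Finset.mem_Ico.mp hq
      rw [hTq q (by omega)]
      refine Finset.sum_subset ?_ ?_
      · intro f hf
        obtain ⟨hfP, hfsum⟩ := Finset.mem_filter.mp hf
        have hmem : ∀ i, f i ∈ Finset.Ico 1 p := Fintype.mem_piFinset.mp hfP
        refine Finset.mem_filter.mpr ⟨Finset.Nat.mem_antidiagonalTuple.mpr hfsum, fun i => ?_⟩
        have := (Finset.mem_Ico.mp (hmem i)).1; omega
      · intro c hc hc'
        obtain ⟨hcAT, hcne⟩ := Finset.mem_filter.mp hc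
        have hcsum : ∑ i, c i = q := Finset.Nat.mem_antidiagonalTuple.mp hcAT
        have hex : ∃ i, ¬ (c i ∈ Finset.Ico 1 p) := by
          by_contra hcon
          push_neg at hcon
          exact hc' (Finset.mem_filter.mpr ⟨Fintype.mem_piFinset.mpr hcon, hcsum⟩)
        obtain ⟨i, hi⟩ := hex
        have hpi : p ≤ c i := by
          rw [Finset.mem_Ico] at hi; have := hcne i; omega
        exact μ.map_coord_zero i (hYnil (c i) hpi y)
    rw [hμz]
    rw [← Finset.sum_Ico_consecutive (fun q => T q y) (by omega : 2 ≤ p) hpQ]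
    rw [show (∑ q ∈ Finset.Ico p Q, T q y) = 0 from
      Finset.sum_eq_zero (fun q hq => hYnil q (Finset.mem_Ico.mp hq).1 y), add_zero]
    rw [Finset.sum_eq_sum_Ico_succ_bot (by omega : 1 < p), hT1]
    exact add_sub_cancel_right y _
  -- ### T-polynomiality
  haveI : Nontrivial (Fin d) := Fin.nontrivial_iff_two_le.mpr hd
  have Tpoly : ∀ j, 1 ≤ j → ∀ v : k → A, IsPolyGE 1 v → IsPolyGE j (fun t => T j (v t)) := by
    intro j
    induction j using Nat.strong_induction_on with
    | _ j ih =>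
      intro hj v hv
      rcases eq_or_lt_of_le hj with h1 | h1
      · subst h1
        simp only [hT1]
        exact hv
      · have heq : (fun t => T j (v t)) = fun t =>
            ∑ c ∈ (Finset.Nat.antidiagonalTuple d j).filter (fun c => ∀ i, c i ≠ 0),
              μ (fun i => T (c i) (v t)) := by
          funext t; rw [hTq j h1]
        rw [heq]
        refine isPolyGE_sum _ _ fun c hc => ?_
        obtain ⟨hcAT, hcne⟩ := Finset.mem_filter.mp hc
        have hcsum : ∑ i, c i = j := Finset.Nat.mem_antidiagonalTuple.mp hcAT
        have hlt : ∀ i, c i < j := by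
          intro i
          obtain ⟨i', hi'⟩ := exists_ne i
          rw [← hcsum]
          exact Finset.single_lt_sum hi' (Finset.mem_univ i) (Finset.mem_univ i')
            (Nat.pos_of_ne_zero (hcne i')) (fun _ _ _ => Nat.zero_le _)
        have hres := isPolyGE_multilinear μ (fun i t => T (c i) (v t)) c
          (fun i => ih (c i) (hlt i) (Nat.one_le_iff_ne_zero.mpr (hcne i)) v hv)
        rw [hcsum] at hres
        exact hres
  -- ### main part: left inverse
  have main : ∀ x : A, (∑ j ∈ Finset.Ico 1 p, T j (x - μ (fun _ => x))) = x := by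
    intro x
    set F : k → A := fun t =>
      (∑ j ∈ Finset.Ico 1 p, T j (t ^ 1 • x - t ^ d • μ (fun _ => x))) - t ^ 1 • x with hF
    have hu1 : IsPolyGE 1 (fun t : k => t ^ 1 • x - t ^ d • μ (fun _ => x)) := by
      have h1 := isPolyGE_monomial (le_refl 1) x (k := k)
      have h2 := (isPolyGE_monomial (le_trans one_le_two hd) (μ (fun _ => x)) (k := k)).neg
      simpa [sub_eq_add_neg] using h1.add h2
    have hbase : IsPolyGE 1 F := by
      have hS : IsPolyGE 1 (fun t : k =>
          ∑ j ∈ Finset.Ico 1 p, T j (t ^ 1 • x - t ^ d • μ (fun _ => x))) :=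
        isPolyGE_sum _ _ fun j hj =>
          (Tpoly j (Finset.mem_Ico.mp hj).1 _ hu1).mono (Finset.mem_Ico.mp hj).1
      have hx1 := (isPolyGE_monomial (le_refl 1) x (k := k)).neg
      rw [hF]
      simpa [sub_eq_add_neg] using hS.add hx1
    have feq : ∀ t : k, F t = ∑ s ∈ (Finset.univ : Finset (Finset (Fin d))).erase ∅,
        μ (s.piecewise (fun _ => F t) (fun _ => t ^ 1 • x)) := by
      intro t
      have hstar := star (t ^ 1 • x - t ^ d • μ (fun _ => x))
      set S := ∑ j ∈ Finset.Ico 1 p, T j (t ^ 1 • x - t ^ d • μ (fun _ => x)) with hS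
      have hFt : F t = S - t ^ 1 • x := by rw [hF]
      have hSd : (fun _ : Fin d => S) = (fun _ : Fin d => F t) + (fun _ => t ^ 1 • x) := by
        funext i
        show S = F t + t ^ 1 • x
        rw [hFt, sub_add_cancel]
      have hμS : μ (fun _ => S) = μ (fun _ : Fin d => t ^ 1 • x)
          + ∑ s ∈ (Finset.univ : Finset (Finset (Fin d))).erase ∅,
              μ (s.piecewise (fun _ => F t) (fun _ => t ^ 1 • x)) := by
        rw [hSd, μ.map_add_univ]
        rw [← Finset.add_sum_erase _ _ (Finset.mem_univ (∅ : Finset (Fin d)))]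
        rw [Finset.piecewise_empty]
      have hμx : μ (fun _ : Fin d => t ^ 1 • x) = t ^ d • μ (fun _ => x) := by
        rw [μ.map_smul_univ (fun _ => t ^ 1) (fun _ => x)]
        simp
      have habel : ∀ a b c : A, (a - b + (b + c)) - a = c := by intro a b c; abel
      have hS2 : S = (t ^ 1 • x - t ^ d • μ (fun _ => x)) + μ (fun _ => S) := by
        rw [← hstar, sub_add_cancel]
      conv_lhs => rw [hFt, hS2, hμS, hμx]
      exact habel _ _ _
    have hstep : ∀ m, 1 ≤ m → IsPolyGE m F → IsPolyGE (m + 1) F := by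
      intro m hm hFm
      have htarget : IsPolyGE (m + 1) (fun t =>
          ∑ s ∈ (Finset.univ : Finset (Finset (Fin d))).erase ∅,
            μ (s.piecewise (fun _ => F t) (fun _ => t ^ 1 • x))) := by
        refine isPolyGE_sum _ _ fun s hs => ?_
        have hsne : s ≠ ∅ := (Finset.mem_erase.mp hs).1
        obtain ⟨i₀, hi₀⟩ := Finset.nonempty_iff_ne_empty.mpr hsne
        have hcomp := isPolyGE_multilinear μ (fun i t => if i ∈ s then F t else t ^ 1 • x)
            (fun i => if i ∈ s then m else 1) (fun i => by
              by_cases h : i ∈ s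
              · simpa [h] using hFm
              · simpa [h] using isPolyGE_monomial (le_refl 1) x (k := k))
        have hble : m + 1 ≤ ∑ i, (if i ∈ s then m else 1) := by
          rw [← Finset.add_sum_erase Finset.univ _ (Finset.mem_univ i₀), if_pos hi₀]
          have h1 : (Finset.univ.erase i₀).card • 1
              ≤ ∑ i ∈ Finset.univ.erase i₀, (if i ∈ s then m else 1) :=
            Finset.card_nsmul_le_sum _ _ _ (fun i _ => by
              by_cases h : i ∈ s <;> simp [h, hm])
          have hcard : (Finset.univ.erase i₀).card = d - 1 := by
            rw [Finset.card_erase_of_mem (Finset.mem_univ _), Finset.card_univ,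
              Fintype.card_fin]
          rw [hcard] at h1
          simp only [smul_eq_mul, mul_one] at h1
          omega
        have hfinal := hcomp.mono hble
        have hpe : (fun t => μ (s.piecewise (fun _ => F t) (fun _ => t ^ 1 • x)))
            = fun t => μ (fun i => if i ∈ s then F t else t ^ 1 • x) := by
          funext t
          have hpw : s.piecewise (fun _ : Fin d => F t) (fun _ => t ^ 1 • x)
              = fun i => if i ∈ s then F t else t ^ 1 • x := by
            funext i
            simp [Finset.piecewise]
          rw [hpw]
        rw [hpe]
        exact hfinal
      have hFeq : F = fun t => ∑ s ∈ (Finset.univ : Finset (Finset (Fin d))).erase ∅,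
          μ (s.piecewise (fun _ => F t) (fun _ => t ^ 1 • x)) := funext feq
      rw [hFeq]
      exact htarget
    have hall : ∀ m, IsPolyGE m F := by
      intro m
      rcases Nat.eq_zero_or_pos m with h0 | h1
      · exact h0 ▸ (hbase.mono (Nat.zero_le 1))
      · exact Nat.le_induction hbase (fun n hn ih => hstep n hn ih) m h1
    have hF1 := eq_zero_of_forall_isPolyGE hall 1
    rw [hF] at hF1
    simp only [one_pow, one_smul] at hF1
    exact sub_eq_zero.mp hF1
  refine ⟨⟨fun a b hab => ?_, fun y => ⟨∑ j ∈ Finset.Ico 1 p, T j y, ?_⟩⟩, main, star⟩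
  · simp only at hab
    rw [← main a, ← main b, hab]
  · simpa using star y
end

section
/- Let (A, μ) be a symmetric d-linear algebra over a field of characteristic zero that is Yagzhev nil of nilindex p. Then A is Engel: for every x, y ∈ A, Ad_x^n(y) = 0 where n = d·⌊(p−2)/(d−1)⌋ + 1 and Ad_x(y) = μ(x,...,x,y). -/
open Finset

namespace Stmt4

variable {k A : Type*} [Field k] [AddCommGroup A] [Module k A] {d : ℕ}

/-- Fueled coefficient-level version of the Yagzhev tree operators. -/
def Tb (μ : MultilinearMap k (fun _ : Fin d => A) A) : ℕ → ℕ → (ℕ → A) → ℕ → A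
  | 0, _, _, _ => 0
  | (fuel+1), q, a, n =>
    if q = 1 then a n
    else ∑ c ∈ (Finset.Nat.antidiagonalTuple d q).filter (fun c => ∀ i, c i ≠ 0),
      ∑ f ∈ Finset.Nat.antidiagonalTuple d n, μ (fun i => Tb μ fuel (c i) a (f i))

variable (μ : MultilinearMap k (fun _ : Fin d => A) A)

lemma part_lt (hd : 2 ≤ d) {q : ℕ} {c : Fin d → ℕ} (hc : ∑ i, c i = q)
    (h0 : ∀ i, c i ≠ 0) (i : Fin d) : c i < q := by
  have : Nontrivial (Fin d) := Fin.nontrivial_iff_two_le.mpr hd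
  obtain ⟨j, hj⟩ := exists_ne i
  have h1 : c i + c j ≤ ∑ l, c l := by
    rw [← Finset.add_sum_erase _ c (Finset.mem_univ i)]
    exact Nat.add_le_add_left (Finset.single_le_sum (fun _ _ => Nat.zero_le _)
      (Finset.mem_erase.mpr ⟨hj, Finset.mem_univ j⟩)) _
  have := Nat.one_le_iff_ne_zero.mpr (h0 j)
  omega

lemma Tb_q0 (hd : 2 ≤ d) (fuel : ℕ) (a : ℕ → A) (n : ℕ) : Tb μ fuel 0 a n = 0 := by
  cases fuel with
  | zero => rfl
  | succ s =>
    rw [Tb, if_neg (by omega)]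
    refine Finset.sum_eq_zero fun c hc => ?_
    simp only [Finset.mem_filter, Finset.Nat.mem_antidiagonalTuple] at hc
    have : Fin d := ⟨0, by omega⟩
    exact absurd (Finset.sum_eq_zero_iff.mp hc.1 this (Finset.mem_univ _))
      (hc.2 this)

lemma Tb_stable (hd : 2 ≤ d) : ∀ f1 : ℕ, ∀ {f2 q : ℕ}, q ≤ f1 → q ≤ f2 →
    ∀ (a : ℕ → A) (n : ℕ), Tb μ f1 q a n = Tb μ f2 q a n := by
  intro f1
  induction f1 with
  | zero =>
    intro f2 q h1 _ a n
    interval_cases q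
    rw [Tb_q0 μ hd, Tb_q0 μ hd]
  | succ s ih =>
    intro f2 q h1 h2 a n
    rcases Nat.eq_zero_or_pos q with rfl | hq
    · rw [Tb_q0 μ hd, Tb_q0 μ hd]
    obtain ⟨t, rfl⟩ : ∃ t, f2 = t + 1 := ⟨f2 - 1, by omega⟩
    rw [Tb, Tb]
    rcases eq_or_ne q 1 with rfl | hq1
    · simp
    rw [if_neg hq1, if_neg hq1]
    refine Finset.sum_congr rfl fun c hc => Finset.sum_congr rfl fun f _ => ?_
    simp only [Finset.mem_filter, Finset.Nat.mem_antidiagonalTuple] at hc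
    congr 1
    funext i
    have hlt : c i < q := part_lt hd hc.1 hc.2 i
    exact ih (by omega) (by omega) a (f i)

/-- Coefficient-level tree operator. -/
def That (q : ℕ) (a : ℕ → A) : ℕ → A := Tb μ q q a

lemma That_zero (a : ℕ → A) (n : ℕ) : That μ 0 a n = 0 := rfl

lemma That_one (a : ℕ → A) (n : ℕ) : That μ 1 a n = a n := by
  rw [That, Tb, if_pos rfl]

lemma That_rec (hd : 2 ≤ d) {q : ℕ} (hq : 2 ≤ q) (a : ℕ → A) (n : ℕ) :
    That μ q a n = ∑ c ∈ (Finset.Nat.antidiagonalTuple d q).filter (fun c => ∀ i, c i ≠ 0),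
      ∑ f ∈ Finset.Nat.antidiagonalTuple d n, μ (fun i => That μ (c i) a (f i)) := by
  obtain ⟨s, rfl⟩ : ∃ s, q = s + 1 := ⟨q - 1, by omega⟩
  rw [That, Tb, if_neg (by omega)]
  refine Finset.sum_congr rfl fun c hc => Finset.sum_congr rfl fun f _ => ?_
  simp only [Finset.mem_filter, Finset.Nat.mem_antidiagonalTuple] at hc
  congr 1
  funext i
  have hlt : c i < s + 1 := part_lt hd hc.1 hc.2 i
  exact Tb_stable μ hd s (by omega) (le_refl _) a (f i)

lemma That_support (hd : 2 ≤ d) {N : ℕ} (hN : 1 ≤ N) {a : ℕ → A}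
    (ha : ∀ j, N ≤ j → a j = 0) :
    ∀ q, 1 ≤ q → ∀ j, q * N ≤ j → That μ q a j = 0 := by
  intro q
  induction q using Nat.strong_induction_on with
  | _ q IH =>
  intro hq j hj
  rcases eq_or_lt_of_le hq with rfl | h2
  · rw [That_one]
    exact ha j (by omega)
  rw [That_rec μ hd (by omega)]
  refine Finset.sum_eq_zero fun c hc => Finset.sum_eq_zero fun f hf => ?_
  simp only [Finset.mem_filter, Finset.Nat.mem_antidiagonalTuple] at hc hf
  by_cases hbig : ∃ i, c i * N ≤ f i
  · obtain ⟨i, hi⟩ := hbig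
    exact μ.map_coord_zero i
      (IH (c i) (part_lt hd hc.1 hc.2 i) (Nat.one_le_iff_ne_zero.mpr (hc.2 i)) (f i) hi)
  · push_neg at hbig
    exfalso
    have h3 : ∑ i, f i < ∑ i, c i * N := by
      refine Finset.sum_lt_sum_of_nonempty ?_ fun i _ => hbig i
      exact Finset.univ_nonempty_iff.mpr ⟨⟨0, by omega⟩⟩
    rw [← Finset.sum_mul, hc.1] at h3
    omega

lemma sum_piFinset_eq (hd : 1 ≤ d) (B : ℕ) (X : (Fin d → ℕ) → A)
    (hX : ∀ f, (∃ i, B ≤ f i) → X f = 0) :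
    ∑ f ∈ Fintype.piFinset (fun _ : Fin d => Finset.range B), X f
      = ∑ n ∈ Finset.range (d * B), ∑ f ∈ Finset.Nat.antidiagonalTuple d n, X f := by
  rw [← Finset.sum_biUnion]
  · refine Finset.sum_subset (fun f hf => ?_) (fun f hf hnf => ?_)
    · simp only [Fintype.mem_piFinset, Finset.mem_range] at hf
      simp only [Finset.mem_biUnion, Finset.mem_range, Finset.Nat.mem_antidiagonalTuple]
      refine ⟨∑ i, f i, ?_, rfl⟩
      calc ∑ i, f i ≤ ∑ _i : Fin d, (B - 1) :=
            Finset.sum_le_sum fun i _ => by have := hf i; omega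
        _ = d * (B - 1) := by simp [Finset.sum_const, Finset.card_univ, Nat.mul_comm]
        _ < d * B := by
            have hB : 1 ≤ B := by
              by_contra h
              have hB0 : B = 0 := by omega
              subst hB0
              exact absurd (hf ⟨0, by omega⟩) (by omega)
            have h4 : d * (B - 1) + d = d * B := by
              have h5 : B - 1 + 1 = B := by omega
              calc d * (B - 1) + d = d * (B - 1 + 1) := by ring
                _ = d * B := by rw [h5]
            omega
    · refine hX f ?_
      simp only [Fintype.mem_piFinset, Finset.mem_range, not_forall] at hnf
      obtain ⟨i, hi⟩ := hnf
      exact ⟨i, by omega⟩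
  · intro s _ t _ hst
    simp only [Function.onFun, Finset.disjoint_left]
    intro f hf hf'
    simp only [Finset.Nat.mem_antidiagonalTuple] at hf hf'
    exact hst (hf ▸ hf')

lemma sum_piFinset_eq' (hd : 1 ≤ d) (B : ℕ) (X : (Fin d → ℕ) → A)
    (hX : ∀ f, (∃ i, f i = 0 ∨ B < f i) → X f = 0) :
    ∑ f ∈ Fintype.piFinset (fun _ : Fin d => Finset.Icc 1 B), X f
      = ∑ n ∈ Finset.range (d * B + 1),
          ∑ f ∈ (Finset.Nat.antidiagonalTuple d n).filter (fun f => ∀ i, f i ≠ 0), X f := by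
  rw [← Finset.sum_biUnion]
  · refine Finset.sum_subset (fun f hf => ?_) (fun f hf hnf => ?_)
    · simp only [Fintype.mem_piFinset, Finset.mem_Icc] at hf
      simp only [Finset.mem_biUnion, Finset.mem_range, Finset.mem_filter,
        Finset.Nat.mem_antidiagonalTuple]
      refine ⟨∑ i, f i, ?_, rfl, fun i => by have := (hf i).1; omega⟩
      have : ∑ i, f i ≤ ∑ _i : Fin d, B := Finset.sum_le_sum fun i _ => (hf i).2
      simp only [Finset.sum_const, Finset.card_univ, Fintype.card_fin, smul_eq_mul] at this
      omega
    · refine hX f ?_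
      simp only [Finset.mem_biUnion, Finset.mem_filter] at hf
      obtain ⟨n, _, _, hpos⟩ := hf
      simp only [Fintype.mem_piFinset, Finset.mem_Icc, not_forall] at hnf
      obtain ⟨i, hi⟩ := hnf
      exact ⟨i, by have := hpos i; omega⟩
  · intro s _ t _ hst
    simp only [Function.onFun, Finset.disjoint_left]
    intro f hf hf'
    simp only [Finset.mem_filter, Finset.Nat.mem_antidiagonalTuple] at hf hf'
    exact hst (hf.1 ▸ hf'.1)

/-- evaluation of a coefficient family at `c`. -/
def evc (c : k) (N : ℕ) (a : ℕ → A) : A := ∑ j ∈ Finset.range N, c ^ j • a j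

lemma evc_extend (c : k) {N N' : ℕ} (h : N ≤ N') {a : ℕ → A}
    (ha : ∀ j, N ≤ j → a j = 0) : evc c N' a = evc c N a := by
  refine (Finset.sum_subset (Finset.range_subset_range.mpr h) fun j _ hj => ?_).symm
  rw [ha j (by simpa using hj), smul_zero]

lemma extraction [CharZero k] {N : ℕ} {b : ℕ → A}
    (hb : ∀ c : k, ∑ j ∈ Finset.range N, c ^ j • b j = 0) :
    ∀ j, j < N → b j = 0 := by
  intro j hj
  rw [← Module.forall_dual_apply_eq_zero_iff k]
  intro φ
  set P : Polynomial k := ∑ l ∈ Finset.range N, Polynomial.monomial l (φ (b l)) with hP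
  have hev : ∀ c : k, P.eval c = 0 := by
    intro c
    rw [hP, Polynomial.eval_finset_sum]
    simp only [Polynomial.eval_monomial]
    have := congrArg φ (hb c)
    simpa [map_sum, map_smul, smul_eq_mul, mul_comm] using this
  have hP0 : P = 0 := Polynomial.zero_of_eval_zero P hev
  have : P.coeff j = φ (b j) := by
    rw [hP, Polynomial.finset_sum_coeff]
    simp only [Polynomial.coeff_monomial]
    rw [Finset.sum_ite_eq' (Finset.range N) j (fun l => φ (b l))]
    simp [hj]
  rw [hP0] at this
  simpa using this.symm

variable (T : ℕ → A → A)

lemma T_evc (hd : 2 ≤ d)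
    (hT1 : ∀ x, T 1 x = x)
    (hTq : ∀ q, 1 < q → ∀ x, T q x =
      ∑ c ∈ (Finset.Nat.antidiagonalTuple d q).filter (fun c => ∀ i, c i ≠ 0),
        μ (fun i => T (c i) x))
    {N : ℕ} (hN : 1 ≤ N) {a : ℕ → A} (ha : ∀ j, N ≤ j → a j = 0) (t : k) :
    ∀ q, 1 ≤ q → T q (evc t N a) = evc t (q * N) (That μ q a) := by
  intro q
  induction q using Nat.strong_induction_on with
  | _ q IH =>
  intro hq
  rcases eq_or_lt_of_le hq with rfl | h2
  · rw [hT1, one_mul]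
    exact (Finset.sum_congr rfl fun j _ => by rw [That_one]).symm
  rw [hTq q h2]
  have key : ∀ cc ∈ (Finset.Nat.antidiagonalTuple d q).filter (fun c => ∀ i, c i ≠ 0),
      μ (fun i => T (cc i) (evc t N a))
        = ∑ n ∈ Finset.range (d * (q * N)), t ^ n •
            ∑ f ∈ Finset.Nat.antidiagonalTuple d n, μ (fun i => That μ (cc i) a (f i)) := by
    intro cc hcc
    simp only [Finset.mem_filter, Finset.Nat.mem_antidiagonalTuple] at hcc
    have hlt : ∀ i, cc i < q := part_lt hd hcc.1 hcc.2
    have hcc1 : ∀ i, 1 ≤ cc i := fun i => Nat.one_le_iff_ne_zero.mpr (hcc.2 i)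
    have step1 : (fun i => T (cc i) (evc t N a))
        = fun i => ∑ j ∈ Finset.range (q * N), t ^ j • That μ (cc i) a j := by
      funext i
      rw [IH (cc i) (hlt i) (hcc1 i)]
      rw [← evc_extend t (Nat.mul_le_mul_right N (le_of_lt (hlt i)))
        (That_support μ hd hN ha (cc i) (hcc1 i))]
      rfl
    rw [step1, μ.map_sum_finset (fun i j => t ^ j • That μ (cc i) a j)
      (fun _ => Finset.range (q * N))]
    have step2 : ∀ f : Fin d → ℕ,
        μ (fun i => t ^ f i • That μ (cc i) a (f i))
          = t ^ (∑ i, f i) • μ (fun i => That μ (cc i) a (f i)) := by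
      intro f
      rw [μ.map_smul_univ (fun i => t ^ f i) (fun i => That μ (cc i) a (f i))]
      rw [Finset.prod_pow_eq_pow_sum]
    simp only [step2]
    rw [sum_piFinset_eq (by omega) (q * N)
      (fun f => t ^ (∑ i, f i) • μ (fun i => That μ (cc i) a (f i)))
      (fun f hf => by
        obtain ⟨i, hi⟩ := hf
        show t ^ (∑ i, f i) • μ (fun i => That μ (cc i) a (f i)) = 0
        rw [μ.map_coord_zero i (That_support μ hd hN ha (cc i) (hcc1 i) (f i)
          (le_trans (Nat.mul_le_mul_right N (le_of_lt (hlt i))) hi)), smul_zero])]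
    refine Finset.sum_congr rfl fun n _ => ?_
    rw [Finset.smul_sum]
    refine Finset.sum_congr rfl fun f hf => ?_
    rw [Finset.Nat.mem_antidiagonalTuple] at hf
    rw [hf]
  rw [Finset.sum_congr rfl key, Finset.sum_comm]
  have : ∀ n, (∑ cc ∈ (Finset.Nat.antidiagonalTuple d q).filter (fun c => ∀ i, c i ≠ 0),
      t ^ n • ∑ f ∈ Finset.Nat.antidiagonalTuple d n, μ (fun i => That μ (cc i) a (f i)))
      = t ^ n • That μ q a n := by
    intro n
    rw [← Finset.smul_sum, ← That_rec μ hd (by omega)]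
  rw [Finset.sum_congr rfl fun n _ => this n]
  rw [show (∑ n ∈ Finset.range (d * (q * N)), t ^ n • That μ q a n)
    = evc t (d * (q * N)) (That μ q a) from rfl]
  exact evc_extend t (Nat.le_mul_of_pos_left (q * N) (by omega))
    (That_support μ hd hN ha q (by omega))

/-- `T q = 0` whenever `q ≥ 2` is not ≡ 1 mod (d-1). -/
lemma T_gap (hd : 2 ≤ d)
    (hTq : ∀ q, 1 < q → ∀ x, T q x =
      ∑ c ∈ (Finset.Nat.antidiagonalTuple d q).filter (fun c => ∀ i, c i ≠ 0),
        μ (fun i => T (c i) x)) :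
    ∀ q, 2 ≤ q → ¬ (d - 1) ∣ (q - 1) → ∀ x, T q x = 0 := by
  intro q
  induction q using Nat.strong_induction_on with
  | _ q IH =>
  intro hq hndvd x
  rw [hTq q hq]
  refine Finset.sum_eq_zero fun c hc => ?_
  simp only [Finset.mem_filter, Finset.Nat.mem_antidiagonalTuple] at hc
  by_cases hex : ∃ i, 2 ≤ c i ∧ ¬ (d - 1) ∣ (c i - 1)
  · obtain ⟨i, h2i, hni⟩ := hex
    exact μ.map_coord_zero i (IH (c i) (part_lt hd hc.1 hc.2 i) h2i hni x)
  · exfalso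
    push_neg at hex
    have hdvd : ∀ i, (d - 1) ∣ (c i - 1) := by
      intro i
      rcases Nat.lt_or_ge (c i) 2 with h | h
      · have : c i = 1 := by have := hc.2 i; omega
        simp [this]
      · exact hex i h
    have hsum : ∑ i, (c i - 1) = q - d := by
      have h1 : ∑ i, c i = ∑ i, ((c i - 1) + 1) :=
        Finset.sum_congr rfl fun i _ => by have := hc.2 i; omega
      rw [Finset.sum_add_distrib] at h1
      simp only [Finset.sum_const, Finset.card_univ, Fintype.card_fin, smul_eq_mul,
        mul_one] at h1
      omega
    have hdq : (d - 1) ∣ (q - d) := hsum ▸ Finset.dvd_sum fun i _ => hdvd i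
    have hqd : d ≤ q := by
      have : ∑ i, 1 ≤ ∑ i, c i := Finset.sum_le_sum fun i _ =>
        Nat.one_le_iff_ne_zero.mpr (hc.2 i)
      simpa [hc.1] using this
    obtain ⟨m, hm⟩ := hdq
    exact hndvd ⟨m + 1, by have h1 : (d-1)*(m+1) = (d-1)*m + (d-1) := Nat.mul_succ _ _; omega⟩

/-- representability of an index as α + β d + γ E with α+β+γ = q -/
def Srep (E : ℕ) (q j : ℕ) : Prop := ∃ α β γ : ℕ, α + β + γ = q ∧ j = α + β * d + γ * E

lemma That_rep (hd : 2 ≤ d) (E : ℕ) {a : ℕ → A}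
    (ha : ∀ j, j ≠ 1 → j ≠ d → j ≠ E → a j = 0) :
    ∀ q, 1 ≤ q → ∀ j, ¬ Srep (d := d) E q j → That μ q a j = 0 := by
  intro q
  induction q using Nat.strong_induction_on with
  | _ q IH =>
  intro hq j hrep
  rcases eq_or_lt_of_le hq with rfl | h2
  · rw [That_one]
    refine ha j (fun h => hrep ⟨1, 0, 0, by omega, by omega⟩)
      (fun h => hrep ⟨0, 1, 0, by omega, by omega⟩)
      (fun h => hrep ⟨0, 0, 1, by omega, by omega⟩)
  rw [That_rec μ hd h2]
  refine Finset.sum_eq_zero fun c hc => Finset.sum_eq_zero fun f hf => ?_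
  simp only [Finset.mem_filter, Finset.Nat.mem_antidiagonalTuple] at hc hf
  by_cases hall : ∀ i, Srep (d := d) E (c i) (f i)
  · exfalso
    choose α β γ h1 h2 using hall
    refine hrep ⟨∑ i, α i, ∑ i, β i, ∑ i, γ i, ?_, ?_⟩
    · rw [← hc.1, ← Finset.sum_add_distrib, ← Finset.sum_add_distrib]
      exact Finset.sum_congr rfl fun i _ => (h1 i)
    · rw [← hf, Finset.sum_mul, Finset.sum_mul, ← Finset.sum_add_distrib,
        ← Finset.sum_add_distrib]
      exact Finset.sum_congr rfl fun i _ => (h2 i)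
  · push_neg at hall
    obtain ⟨i, hi⟩ := hall
    exact μ.map_coord_zero i
      (IH (c i) (part_lt hd hc.1 hc.2 i) (Nat.one_le_iff_ne_zero.mpr (hc.2 i)) (f i) hi)

/-- coefficient 0 of `That` vanishes when `a 0 = 0`. -/
lemma That_coeff_zero (hd : 2 ≤ d) {a : ℕ → A} (ha : a 0 = 0) :
    ∀ q, 1 ≤ q → That μ q a 0 = 0 := by
  intro q
  induction q using Nat.strong_induction_on with
  | _ q IH =>
  intro hq
  rcases eq_or_lt_of_le hq with rfl | h2
  · rw [That_one]; exact ha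
  rw [That_rec μ hd h2]
  refine Finset.sum_eq_zero fun c hc => Finset.sum_eq_zero fun f hf => ?_
  simp only [Finset.mem_filter, Finset.Nat.mem_antidiagonalTuple] at hc hf
  have i0 : Fin d := ⟨0, by omega⟩
  have hf0 : f i0 = 0 := by
    have : f i0 ≤ ∑ i, f i := Finset.single_le_sum (fun _ _ => Nat.zero_le _) (Finset.mem_univ _)
    omega
  refine μ.map_coord_zero i0 ?_
  rw [hf0]
  exact IH (c i0) (part_lt hd hc.1 hc.2 i0) (Nat.one_le_iff_ne_zero.mpr (hc.2 i0))

/-- move a distinguished entry to position 0 using symmetry -/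
lemma swap_entry (hd : 2 ≤ d) (μ : MultilinearMap k (fun _ : Fin d => A) A)
    (hsymm : ∀ (σ : Equiv.Perm (Fin d)) (v : Fin d → A), μ (v ∘ σ) = μ v)
    (x w : A) (i₀ : Fin d) :
    μ (fun i => if i = i₀ then w else x) = μ (fun i : Fin d => if (i : ℕ) = 0 then w else x) := by
  set z : Fin d := ⟨0, by omega⟩ with hz
  set v : Fin d → A := fun i => if i = i₀ then w else x with hv
  have h := hsymm (Equiv.swap z i₀) v
  have hcomp : v ∘ (Equiv.swap z i₀) = fun i : Fin d => if (i : ℕ) = 0 then w else x := by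
    funext i
    simp only [Function.comp_apply, hv]
    by_cases h1 : i = z
    · subst h1
      rw [Equiv.swap_apply_left, if_pos rfl, if_pos rfl]
    · have hne : (i : ℕ) ≠ 0 := fun hc => h1 (Fin.ext hc)
      rw [if_neg hne]
      by_cases h2 : i = i₀
      · subst h2
        rw [Equiv.swap_apply_right]
        have : z ≠ i := fun hc => h1 hc.symm
        rw [if_neg this]
      · rw [Equiv.swap_apply_of_ne_of_ne h1 h2, if_neg h2]
  rw [hcomp] at h
  rw [← h]

lemma adg_as_update (hd : 2 ≤ d) (x w : A) :
    (fun i : Fin d => if (i : ℕ) = 0 then w else x)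
      = Function.update (fun _ : Fin d => x) ⟨0, by omega⟩ w := by
  funext i
  rw [Function.update_apply]
  congr 1
  simp [Fin.ext_iff]

lemma adg_nsmul (hd : 2 ≤ d) (μ : MultilinearMap k (fun _ : Fin d => A) A) (x w : A) (r : ℕ) :
    μ (fun i => if (i : ℕ) = 0 then (r • w) else x)
      = r • μ (fun i => if (i : ℕ) = 0 then w else x) := by
  rw [adg_as_update hd, adg_as_update hd]
  rw [← Nat.cast_smul_eq_nsmul k r w, μ.map_update_smul, Nat.cast_smul_eq_nsmul]

lemma adg_zero (hd : 2 ≤ d) (μ : MultilinearMap k (fun _ : Fin d => A) A) (x : A) :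
    μ (fun i => if (i : ℕ) = 0 then (0 : A) else x) = 0 :=
  μ.map_coord_zero (⟨0, by omega⟩ : Fin d) (by simp)

lemma engel_core (hd : 2 ≤ d) (μ : MultilinearMap k (fun _ : Fin d => A) A)
    (hsymm : ∀ (σ : Equiv.Perm (Fin d)) (v : Fin d → A), μ (v ∘ σ) = μ v)
    (x y : A) (E nn : ℕ) (hdE : d < E) (hnE : nn * (d - 1) < E)
    (g : ℕ → A)
    (hdagger : ∀ n', g n' =
      (if n' = 1 then x else if n' = d then -(μ fun _ => x) else if n' = E then y else 0)
        + ∑ f ∈ Finset.Nat.antidiagonalTuple d n', μ (fun i => g (f i)))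
    (hg0 : g 0 = 0) :
    g (E + nn * (d - 1)) = (d ^ nn : ℕ) • (fun w => μ (fun i => if (i : ℕ) = 0 then w else x))^[nn] y := by
  have hnontriv : Nontrivial (Fin d) := Fin.nontrivial_iff_two_le.mpr hd
  have hnonempty : (Finset.univ : Finset (Fin d)).Nonempty :=
    Finset.univ_nonempty_iff.mpr ⟨⟨0, by omega⟩⟩
  -- kill terms with a zero coordinate
  have hkill : ∀ f : Fin d → ℕ, (∃ i, g (f i) = 0) → μ (fun i => g (f i)) = 0 := by
    rintro f ⟨i, hi⟩
    exact μ.map_coord_zero i hi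
  -- pair bound : two entries contribute at most the total
  have hpair : ∀ (f : Fin d → ℕ) (i j : Fin d), i ≠ j → f i + f j ≤ ∑ l, f l := by
    intro f i j hij
    rw [← Finset.add_sum_erase _ f (Finset.mem_univ i)]
    exact Nat.add_le_add_left (Finset.single_le_sum (fun _ _ => Nat.zero_le _)
      (Finset.mem_erase.mpr ⟨hij.symm, Finset.mem_univ j⟩)) _
  -- g 1 = x
  have hg1 : g 1 = x := by
    rw [hdagger 1, if_pos rfl]
    rw [Finset.sum_eq_zero, add_zero]
    intro f hf
    rw [Finset.Nat.mem_antidiagonalTuple] at hf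
    refine hkill f ?_
    by_contra hno
    push_neg at hno
    have : ∀ i, 1 ≤ f i := by
      intro i
      rcases Nat.eq_zero_or_pos (f i) with h | h
      · exact absurd (h ▸ hg0) (hno i)
      · exact h
    have : (d : ℕ) ≤ ∑ i, f i := by
      calc (d : ℕ) = ∑ _i : Fin d, 1 := by simp
        _ ≤ ∑ i, f i := Finset.sum_le_sum fun i _ => this i
    omega
  -- g v = 0 for 2 ≤ v < E
  have hgmid : ∀ v, 2 ≤ v → v < E → g v = 0 := by
    intro v
    induction v using Nat.strong_induction_on with
    | _ v IH =>
    intro hv2 hvE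
    -- survivors are the all-ones tuple
    have hsurv : ∀ f ∈ Finset.Nat.antidiagonalTuple d v,
        f ≠ (fun _ => 1) → μ (fun i => g (f i)) = 0 := by
      intro f hf hne
      rw [Finset.Nat.mem_antidiagonalTuple] at hf
      refine hkill f ?_
      by_contra hno
      push_neg at hno
      have hone : ∀ i, f i = 1 := by
        intro i
        rcases Nat.eq_zero_or_pos (f i) with h | h
        · exact absurd (h ▸ hg0) (hno i)
        rcases Nat.lt_or_ge (f i) 2 with h2 | h2
        · omega
        -- f i ≥ 2
        exfalso
        rcases Nat.lt_or_ge (f i) v with h3 | h3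
        · exact hno i (IH (f i) h3 h2 (by omega))
        · -- f i = v; another coordinate is 0
          obtain ⟨j, hj⟩ := exists_ne i
          have hji : f j + f i ≤ v := by
            have := hpair f j i hj; omega
          have : f j = 0 := by
            have : f i ≤ ∑ l, f l := Finset.single_le_sum (fun _ _ => Nat.zero_le _) (Finset.mem_univ _)
            omega
          exact hno j (this ▸ hg0)
      exact hne (funext hone)
    by_cases hvd : v = d
    · rw [hdagger v, if_neg (by omega), if_pos hvd]
      have hmem : (fun _ : Fin d => 1) ∈ Finset.Nat.antidiagonalTuple d v := by
        rw [Finset.Nat.mem_antidiagonalTuple]; simp [hvd]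
      rw [Finset.sum_eq_single_of_mem _ hmem (fun f hf hne => hsurv f hf hne)]
      simp [hg1]
    · rw [hdagger v, if_neg (by omega), if_neg hvd, if_neg (by omega)]
      rw [Finset.sum_eq_zero, add_zero]
      intro f hf
      refine hsurv f hf ?_
      intro hc
      have : ∑ i, f i = v := (Finset.Nat.mem_antidiagonalTuple).mp hf
      rw [hc] at this
      simp at this
      omega
  -- g E = y
  have hgE : g E = y := by
    rw [hdagger E, if_neg (by omega), if_neg (by omega), if_pos rfl]
    rw [Finset.sum_eq_zero, add_zero]
    intro f hf
    rw [Finset.Nat.mem_antidiagonalTuple] at hf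
    refine hkill f ?_
    by_contra hno
    push_neg at hno
    have hone : ∀ i, f i = 1 := by
      intro i
      rcases Nat.eq_zero_or_pos (f i) with h | h
      · exact absurd (h ▸ hg0) (hno i)
      rcases Nat.lt_or_ge (f i) 2 with h2 | h2
      · omega
      exfalso
      rcases Nat.lt_or_ge (f i) E with h3 | h3
      · exact hno i (hgmid (f i) h2 h3)
      · obtain ⟨j, hj⟩ := exists_ne i
        have hji : f j + f i ≤ E := by have := hpair f j i hj; omega
        have hfi : f i ≤ E := by
          have : f i ≤ ∑ l, f l := Finset.single_le_sum (fun _ _ => Nat.zero_le _) (Finset.mem_univ _)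
          omega
        have : f j = 0 := by omega
        exact hno j (this ▸ hg0)
    have : ∑ i, f i = d := by
      rw [Finset.sum_congr rfl fun i _ => hone i]; simp
    omega
  -- main induction
  have hmain : ∀ m, m ≤ nn * (d - 1) →
      g (E + m) = if (d - 1) ∣ m
        then (d ^ (m / (d - 1)) : ℕ) • (fun w => μ (fun i => if (i : ℕ) = 0 then w else x))^[m / (d - 1)] y
        else 0 := by
    intro m
    induction m using Nat.strong_induction_on with
    | _ m IH =>
    intro hm
    rcases Nat.eq_zero_or_pos m with rfl | hm1
    · simp only [Nat.dvd_zero, if_pos, Nat.zero_div, pow_zero, one_smul,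
        Function.iterate_zero, id_eq, Nat.add_zero]
      exact hgE
    -- m ≥ 1
    have hsurv : ∀ f ∈ Finset.Nat.antidiagonalTuple d (E + m),
        (∀ i, g (f i) ≠ 0) → (d - 1 ≤ m ∧ ∃ i₀, f = fun i => if i = i₀ then E + (m - (d-1)) else 1) := by
      intro f hf hno
      rw [Finset.Nat.mem_antidiagonalTuple] at hf
      have hcases : ∀ i, f i = 1 ∨ E ≤ f i := by
        intro i
        rcases Nat.eq_zero_or_pos (f i) with h | h
        · exact absurd (h ▸ hg0) (hno i)
        rcases Nat.lt_or_ge (f i) 2 with h2 | h2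
        · left; omega
        rcases Nat.lt_or_ge (f i) E with h3 | h3
        · exact absurd (hgmid (f i) h2 h3) (hno i)
        · right; exact h3
      -- at least one big coordinate
      have hex : ∃ i, E ≤ f i := by
        by_contra hnob
        push_neg at hnob
        have : ∀ i, f i = 1 := fun i => (hcases i).resolve_right (by have := hnob i; omega)
        have : ∑ i, f i = d := by rw [Finset.sum_congr rfl fun i _ => this i]; simp
        omega
      obtain ⟨i₀, hi₀⟩ := hex
      -- all others equal 1
      have hothers : ∀ j, j ≠ i₀ → f j = 1 := by
        intro j hj
        refine (hcases j).resolve_right fun hEj => ?_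
        have := hpair f j i₀ hj
        omega
      have hsum : f i₀ + (d - 1) = E + m := by
        have : ∑ i, f i = f i₀ + ∑ j ∈ Finset.univ.erase i₀, f j := by
          rw [Finset.add_sum_erase _ f (Finset.mem_univ i₀)]
        have herase : ∑ j ∈ Finset.univ.erase i₀, f j = d - 1 := by
          rw [Finset.sum_congr rfl fun j hj => hothers j (Finset.mem_erase.mp hj).1]
          simp [Finset.card_erase_of_mem]
        omega
      have hdm : d - 1 ≤ m := by omega
      refine ⟨hdm, i₀, funext fun i => ?_⟩
      by_cases h : i = i₀
      · subst h; rw [if_pos rfl]; omega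
      · rw [if_neg h]; exact hothers i h
    rw [hdagger (E + m), if_neg (by omega), if_neg (by omega), if_neg (by omega), zero_add]
    by_cases hdm : d - 1 ≤ m
    · -- survivors: the d tuples
      set m' := m - (d - 1) with hm'
      set F : Fin d → (Fin d → ℕ) := fun i₀ => fun i => if i = i₀ then E + m' else 1 with hF
      have hFsum : ∀ i₀, ∑ i, F i₀ i = E + m := by
        intro i₀
        rw [← Finset.add_sum_erase _ (F i₀) (Finset.mem_univ i₀)]
        have h1 : F i₀ i₀ = E + m' := by simp [hF]
        have h2 : ∑ j ∈ Finset.univ.erase i₀, F i₀ j = d - 1 := by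
          have he : ∀ j ∈ Finset.univ.erase i₀, F i₀ j = 1 := by
            intro j hj
            simp only [hF]
            rw [if_neg (Finset.mem_erase.mp hj).1]
          rw [Finset.sum_congr rfl he]
          simp [Finset.card_erase_of_mem]
        rw [h1, h2]
        omega
      have hFmem : ∀ i₀, F i₀ ∈ Finset.Nat.antidiagonalTuple d (E + m) := fun i₀ =>
        (Finset.Nat.mem_antidiagonalTuple).mpr (hFsum i₀)
      have himage : ∑ f ∈ Finset.Nat.antidiagonalTuple d (E + m), μ (fun i => g (f i))
          = ∑ f ∈ Finset.image F Finset.univ, μ (fun i => g (f i)) := by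
        refine (Finset.sum_subset (fun f hf => ?_) (fun f hf hnotin => ?_)).symm
        · obtain ⟨i₀, _, rfl⟩ := Finset.mem_image.mp hf
          exact hFmem i₀
        · by_cases hno : ∀ i, g (f i) ≠ 0
          · obtain ⟨_, i₀, hfi⟩ := hsurv f hf hno
            exact absurd (Finset.mem_image.mpr ⟨i₀, Finset.mem_univ _, hfi.symm⟩) hnotin
          · push_neg at hno
            exact hkill f hno
      have hinj : ∀ i₀ ∈ Finset.univ, ∀ i₁ ∈ Finset.univ, F i₀ = F i₁ → i₀ = i₁ := by
        intro i₀ _ i₁ _ hF01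
        by_contra hne
        have h1 : F i₀ i₀ = E + m' := by simp [hF]
        have h2 : F i₁ i₀ = 1 := by simp only [hF]; rw [if_neg hne]
        rw [hF01] at h1
        omega
      rw [himage, Finset.sum_image hinj]
      have hterm : ∀ i₀ : Fin d, μ (fun i => g (F i₀ i))
          = μ (fun i : Fin d => if (i : ℕ) = 0 then g (E + m') else x) := by
        intro i₀
        rw [show (fun i => g (F i₀ i)) = fun i : Fin d => if i = i₀ then g (E + m') else x from
          funext fun i => by
            by_cases h : i = i₀
            · subst h
              simp [hF]
            · simp only [hF]
              rw [if_neg h, if_neg h, hg1]]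
        exact swap_entry hd μ hsymm x (g (E + m')) i₀
      rw [Finset.sum_congr rfl fun i₀ _ => hterm i₀, Finset.sum_const, Finset.card_univ,
        Fintype.card_fin]
      have hm'lt : m' < m := by omega
      have hIH := IH m' hm'lt (by omega)
      have hmm' : m = m' + (d - 1) := by omega
      by_cases hdvd : (d - 1) ∣ m
      · have hdvd' : (d - 1) ∣ m' := by
          rw [hm']
          exact Nat.dvd_sub hdvd dvd_rfl
        rw [if_pos hdvd]
        rw [if_pos hdvd'] at hIH
        rw [hIH, adg_nsmul hd μ x _ (d ^ (m' / (d - 1))), smul_smul]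
        have hk : m / (d - 1) = m' / (d - 1) + 1 := by
          rw [hmm', Nat.add_div_right _ (by omega : 0 < d - 1)]
        rw [hk, pow_succ, Function.iterate_succ_apply']
        ring_nf
      · rw [if_neg hdvd]
        have hdvd' : ¬ (d - 1) ∣ m' := by
          intro hc
          exact hdvd (hmm' ▸ Nat.dvd_add hc dvd_rfl)
        rw [if_neg hdvd'] at hIH
        rw [hIH, adg_zero hd μ x, smul_zero]
    · -- no survivors
      have hnd : ¬ (d - 1) ∣ m := by
        rintro ⟨c, hc⟩
        rcases Nat.eq_zero_or_pos c with rfl | hc1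
        · omega
        · have : d - 1 ≤ (d-1) * c := Nat.le_mul_of_pos_right _ hc1
          omega
      rw [if_neg hnd]
      refine Finset.sum_eq_zero fun f hf => ?_
      by_cases hno : ∀ i, g (f i) ≠ 0
      · obtain ⟨hged, _⟩ := hsurv f hf hno
        omega
      · push_neg at hno
        exact hkill f hno
  -- conclude
  have hfin := hmain (nn * (d - 1)) (le_refl _)
  rw [if_pos (dvd_mul_left _ _), Nat.mul_div_cancel _ (by omega : 0 < d - 1)] at hfin
  exact hfin

end Stmt4

open Stmt4

/-- Jacobian theorem for an infinite set of variables: a Yagzhev nil symmetric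
`d`-linear algebra of nilindex `p` is `n`-Engel for `n = d⌊(p-2)/(d-1)⌋ + 1`. -/
theorem stmt4 {k A : Type*} [Field k] [CharZero k] [AddCommGroup A] [Module k A]
    {d : ℕ} (hd : 2 ≤ d) (μ : MultilinearMap k (fun _ : Fin d => A) A)
    (hsymm : ∀ (σ : Equiv.Perm (Fin d)) (v : Fin d → A), μ (v ∘ σ) = μ v)
    (T : ℕ → A → A)
    (hT1 : ∀ x, T 1 x = x)
    (hTq : ∀ q, 1 < q → ∀ x, T q x =
      ∑ c ∈ (Finset.Nat.antidiagonalTuple d q).filter (fun c => ∀ i, c i ≠ 0),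
        μ (fun i => T (c i) x))
    (p : ℕ)
    (hYnil : ∀ q, p ≤ q → ∀ x : A, T q x = 0) :
    ∀ x y : A,
      (fun y => μ (fun i => if (i : ℕ) = 0 then y else x))^[d * ((p - 2) / (d - 1)) + 1] y
        = 0 := by
  intro x y
  by_cases hp : p ≤ 1
  · have hall : ∀ z : A, z = 0 := fun z => by rw [← hT1 z]; exact hYnil 1 hp z
    exact hall _
  push_neg at hp
  set M := (p - 2) / (d - 1) with hM
  set Q := 1 + (d - 1) * M with hQdef
  set nn := d * M + 1 with hnn
  set E := Q * d + nn * (d - 1) + 1 with hE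
  set N := E + 1 with hN
  have hQ1 : 1 ≤ Q := by omega
  have hdQd : d ≤ Q * d := Nat.le_mul_of_pos_left d (by omega)
  have hdE : d < E := by omega
  have hnE : nn * (d - 1) < E := by omega
  -- `T q` vanishes identically for `q > Q`
  have hTvan : ∀ q, Q < q → ∀ z : A, T q z = 0 := by
    intro q hq z
    rcases Nat.lt_or_ge q p with h | h
    · refine T_gap μ T hd hTq q (by omega) ?_ z
      rintro ⟨m', hm'⟩
      have hd1 : 0 < d - 1 := by omega
      have hmod : (d - 1) * M + (p - 2) % (d - 1) = p - 2 := Nat.div_add_mod _ _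
      have hrlt : (p - 2) % (d - 1) < d - 1 := Nat.mod_lt _ hd1
      have hmM : M < m' := by
        have hlt : (d - 1) * M < (d - 1) * m' := by omega
        exact Nat.lt_of_mul_lt_mul_left hlt
      have h2 : (d - 1) * (M + 1) ≤ (d - 1) * m' := Nat.mul_le_mul_left _ (by omega)
      have h3 : (d - 1) * (M + 1) = (d - 1) * M + (d - 1) := Nat.mul_succ _ _
      omega
    · exact hYnil q h z
  -- the master coefficient family
  set a : ℕ → A := fun j =>
    if j = 1 then x else if j = d then -(μ fun _ => x) else if j = E then y else 0 with hadef
  have ha_supp : ∀ j, N ≤ j → a j = 0 := by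
    intro j hj
    simp only [hadef]
    rw [if_neg (by omega), if_neg (by omega), if_neg (by omega)]
  have ha_rep : ∀ j, j ≠ 1 → j ≠ d → j ≠ E → a j = 0 := by
    intro j h1 h2 h3
    simp only [hadef]
    rw [if_neg h1, if_neg h2, if_neg h3]
  have hThat_van : ∀ s, Q < s → ∀ j, That μ s a j = 0 := by
    intro s hs j
    have hs1 : 1 ≤ s := by omega
    rcases Nat.lt_or_ge j (s * N) with h | h
    · refine extraction (k := k) (N := s * N) (b := That μ s a) (fun t => ?_) j h
      have h1 := T_evc μ T hd hT1 hTq (show 1 ≤ N by omega) ha_supp t s hs1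
      have h2 := hTvan s hs (evc t N a)
      rw [h1] at h2
      exact h2
    · exact That_support μ hd (by omega) ha_supp s hs1 j h
  set g : ℕ → A := fun n' => ∑ q ∈ Finset.Icc 1 Q, That μ q a n' with hgdef
  have hIccins : Finset.Icc 1 Q = insert 1 (Finset.Icc 2 Q) := by
    ext j; simp only [Finset.mem_Icc, Finset.mem_insert]; omega
  have hgval : ∀ n', g n' = a n' + ∑ s ∈ Finset.Icc 2 Q, That μ s a n' := by
    intro n'
    simp only [hgdef]
    rw [hIccins, Finset.sum_insert (by simp), That_one]
  have hsum_eq : ∀ n', (∑ f ∈ Finset.Nat.antidiagonalTuple d n', μ (fun i => g (f i)))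
      = ∑ s ∈ Finset.Icc 2 Q, That μ s a n' := by
    intro n'
    have e1 : ∀ f : Fin d → ℕ, μ (fun i => g (f i))
        = ∑ r ∈ Fintype.piFinset (fun _ : Fin d => Finset.Icc 1 Q),
            μ (fun i => That μ (r i) a (f i)) := by
      intro f
      have hgf : (fun i => g (f i))
          = fun i : Fin d => ∑ q ∈ Finset.Icc 1 Q, That μ q a (f i) := by
        funext i
        simp only [hgdef]
      rw [hgf]
      exact μ.map_sum_finset (fun i q => That μ q a (f i)) (fun _ => Finset.Icc 1 Q)
    rw [Finset.sum_congr rfl fun f _ => e1 f, Finset.sum_comm]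
    rw [sum_piFinset_eq' (by omega) Q
      (fun r => ∑ f ∈ Finset.Nat.antidiagonalTuple d n', μ (fun i => That μ (r i) a (f i)))
      (by
        rintro r ⟨i, hi | hi⟩
        · refine Finset.sum_eq_zero fun f _ => μ.map_coord_zero i ?_
          rw [hi]
          exact That_zero μ a (f i)
        · exact Finset.sum_eq_zero fun f _ => μ.map_coord_zero i (hThat_van (r i) hi (f i)))]
    have e2 : ∀ s ∈ Finset.range (d * Q + 1),
        (∑ r ∈ (Finset.Nat.antidiagonalTuple d s).filter (fun r => ∀ i, r i ≠ 0),
          ∑ f ∈ Finset.Nat.antidiagonalTuple d n', μ (fun i => That μ (r i) a (f i)))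
        = (if 2 ≤ s then That μ s a n' else 0) := by
      intro s _
      by_cases hs2 : 2 ≤ s
      · rw [if_pos hs2, That_rec μ hd hs2]
      · rw [if_neg hs2]
        refine Finset.sum_eq_zero fun r hr => ?_
        exfalso
        simp only [Finset.mem_filter, Finset.Nat.mem_antidiagonalTuple] at hr
        have hge : (d:ℕ) ≤ ∑ i, r i := by
          calc (d:ℕ) = ∑ _i : Fin d, 1 := by simp
            _ ≤ ∑ i, r i := Finset.sum_le_sum fun i _ => Nat.one_le_iff_ne_zero.mpr (hr.2 i)
        omega
    rw [Finset.sum_congr rfl e2]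
    have hsub : Finset.Icc 2 Q ⊆ Finset.range (d * Q + 1) := by
      intro s hs
      rw [Finset.mem_Icc] at hs
      rw [Finset.mem_range]
      have hcomm : d * Q = Q * d := Nat.mul_comm _ _
      have hQQd : Q ≤ Q * d := Nat.le_mul_of_pos_right Q (by omega)
      omega
    have hzero : ∀ s ∈ Finset.range (d * Q + 1), s ∉ Finset.Icc 2 Q →
        (if 2 ≤ s then That μ s a n' else 0) = 0 := by
      intro s hs hns
      rw [Finset.mem_range] at hs
      rw [Finset.mem_Icc, not_and_or] at hns
      by_cases h2 : 2 ≤ s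
      · rw [if_pos h2]
        rcases hns with h3 | h3
        · exact absurd h2 h3
        · exact hThat_van s (by omega) n'
      · rw [if_neg h2]
    rw [← Finset.sum_subset hsub hzero]
    exact Finset.sum_congr rfl fun s hs => if_pos (Finset.mem_Icc.mp hs).1
  have hdagger : ∀ n', g n' =
      (if n' = 1 then x else if n' = d then -(μ fun _ => x) else if n' = E then y else 0)
        + ∑ f ∈ Finset.Nat.antidiagonalTuple d n', μ (fun i => g (f i)) := by
    intro n'
    rw [hsum_eq n', hgval n']
  have hg0 : g 0 = 0 := by
    simp only [hgdef]
    refine Finset.sum_eq_zero fun q hq => ?_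
    exact That_coeff_zero μ hd (ha_rep 0 (by omega) (by omega) (by omega)) q
      (Finset.mem_Icc.mp hq).1
  have hcore := engel_core hd μ hsymm x y E nn hdE hnE g hdagger hg0
  have hfinal0 : g (E + nn * (d - 1)) = 0 := by
    simp only [hgdef]
    refine Finset.sum_eq_zero fun q hq => ?_
    rw [Finset.mem_Icc] at hq
    refine That_rep μ hd E ha_rep q hq.1 _ ?_
    rintro ⟨α, β, γ, h1, h2⟩
    have hb1 : α + β * d ≤ (α + β) * d := by
      have e1 : (α + β) * d = α * d + β * d := Nat.add_mul _ _ _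
      have e2 : α ≤ α * d := Nat.le_mul_of_pos_right α (by omega)
      omega
    rcases Nat.lt_or_ge γ 2 with hγ | hγ
    · interval_cases γ
      · have h5 : (α + β) * d ≤ Q * d := Nat.mul_le_mul_right d (by omega)
        omega
      · have hq2 : α + β ≤ (d - 1) * M := by omega
        have h5 : (α + β) * d ≤ ((d - 1) * M) * d := Nat.mul_le_mul_right d hq2
        have h6 : ((d - 1) * M) * d = d * M * (d - 1) := by ring
        have h7 : nn * (d - 1) = d * M * (d - 1) + (d - 1) := by
          rw [hnn]
          ring
        omega
    · have h5 : 2 * E ≤ γ * E := Nat.mul_le_mul_right E hγ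
      omega
  rw [hcore] at hfinal0
  have hcast : ((d ^ nn : ℕ) : k) • (fun w => μ fun i => if (i : ℕ) = 0 then w else x)^[nn] y
      = 0 := by
    rw [Nat.cast_smul_eq_nsmul]
    exact hfinal0
  have hne0 : ((d ^ nn : ℕ) : k) ≠ 0 := Nat.cast_ne_zero.mpr (pow_ne_zero _ (by omega))
  exact (smul_eq_zero.mp hcast).resolve_left hne0
end

section
/- Let A be a commutative binary algebra (symmetric bilinear product) over a field of characteristic zero. If the identities T_q(x) = 0 hold for all q with p ≤ q ≤ 2p−1, where T_1(x) = x and T_q(x) = Σ_{i+j=q} T_i(x)·T_j(x), then A is (2p−3)-Engel: Ad_x^{2p-3}(y) = 0 for all x, y. -/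
open Finset

section Aux

variable {k A : Type*} [Field k] [CharZero k] [AddCommGroup A] [Module k A]

/-- `F` is a polynomial map of degree ≤ d with coefficients `a`. -/
def PRep (d : ℕ) (a : ℕ → A) (F : k → A) : Prop :=
  (∀ m, d < m → a m = 0) ∧ ∀ c : k, F c = ∑ m ∈ range (d + 1), c ^ m • a m

lemma prep_congr {d : ℕ} {a : ℕ → A} {F G : k → A} (h : ∀ c, F c = G c)
    (hF : PRep d a F) : PRep d a G :=
  ⟨hF.1, fun c => (h c) ▸ hF.2 c⟩

lemma prep_coeff_congr {d : ℕ} {a b : ℕ → A} {F : k → A} (h : ∀ m, a m = b m)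
    (hF : PRep d a F) : PRep d b F := by
  have : a = b := funext h
  exact this ▸ hF

lemma prep_eval0 {d : ℕ} {a : ℕ → A} {F : k → A} (hF : PRep d a F) : a 0 = F 0 := by
  rw [hF.2 0]
  rw [Finset.sum_eq_single 0]
  · simp
  · intro m _ hm
    simp [zero_pow hm]
  · simp

lemma prep_ext {d d' : ℕ} {a : ℕ → A} {F : k → A} (hF : PRep d a F) (h : d ≤ d') :
    PRep d' a F := by
  refine ⟨fun m hm => hF.1 m (lt_of_le_of_lt h hm), fun c => ?_⟩
  rw [hF.2 c]
  apply Finset.sum_subset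
  · exact Finset.range_subset_range.2 (by omega)
  · intro m _ hm
    simp at hm
    rw [hF.1 m (by omega), smul_zero]

lemma prep_const (v : A) : PRep 0 (fun m => if m = 0 then v else 0) (fun _ : k => v) := by
  constructor
  · intro m hm; simp [Nat.ne_zero_of_lt hm]
  · intro c; simp

lemma prep_linear (z v : A) :
    PRep 1 (fun m => if m = 0 then z else if m = 1 then v else 0)
      (fun c : k => z + c • v) := by
  constructor
  · intro m hm
    have h1 : m ≠ 0 := by omega
    have h2 : m ≠ 1 := by omega
    simp [h1, h2]
  · intro c
    rw [Finset.sum_range_succ, Finset.sum_range_one]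
    simp

lemma prep_add {d : ℕ} {a b : ℕ → A} {F G : k → A} (hF : PRep d a F) (hG : PRep d b G) :
    PRep d (fun m => a m + b m) (fun c => F c + G c) := by
  constructor
  · intro m hm; dsimp only; rw [hF.1 m hm, hG.1 m hm, add_zero]
  · intro c
    dsimp only
    rw [hF.2 c, hG.2 c, ← Finset.sum_add_distrib]
    exact Finset.sum_congr rfl fun m _ => (smul_add _ _ _).symm

lemma prep_sum {ι : Type*} {d : ℕ} {s : Finset ι} {a : ι → ℕ → A} {F : ι → k → A}
    (h : ∀ i ∈ s, PRep d (a i) (F i)) :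
    PRep d (fun m => ∑ i ∈ s, a i m) (fun c => ∑ i ∈ s, F i c) := by
  constructor
  · intro m hm
    exact Finset.sum_eq_zero fun i hi => (h i hi).1 m hm
  · intro c
    dsimp only
    rw [Finset.sum_congr rfl fun i hi => (h i hi).2 c, Finset.sum_comm]
    exact Finset.sum_congr rfl fun m _ => by rw [Finset.smul_sum]

lemma prep_linmap {d : ℕ} {a : ℕ → A} {F : k → A} (g : A →ₗ[k] A) (hF : PRep d a F) :
    PRep d (fun m => g (a m)) (fun c => g (F c)) := by
  constructor
  · intro m hm; dsimp only; rw [hF.1 m hm, map_zero]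
  · intro c
    dsimp only
    rw [hF.2 c, map_sum]
    exact Finset.sum_congr rfl fun m _ => by rw [map_smul]

lemma prep_nsmul {d : ℕ} {a : ℕ → A} {F : k → A} (n : ℕ) (hF : PRep d a F) :
    PRep d (fun m => n • a m) (fun c => n • F c) := by
  constructor
  · intro m hm; dsimp only; rw [hF.1 m hm, smul_zero]
  · intro c
    dsimp only
    rw [hF.2 c, Finset.smul_sum]
    exact Finset.sum_congr rfl fun m _ => (smul_comm _ _ _)

lemma prep_shift {d : ℕ} {a : ℕ → A} {F : k → A} (hF : PRep d a F) :
    PRep (d + 1) (fun m => if m = 0 then 0 else a (m - 1)) (fun c => c • F c) := by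
  constructor
  · intro m hm
    have h0 : m ≠ 0 := by omega
    simp only [h0, if_false]
    exact hF.1 (m - 1) (by omega)
  · intro c
    dsimp only
    rw [hF.2 c, Finset.smul_sum,
      Finset.sum_range_succ' (fun m => c ^ m • (if m = 0 then (0 : A) else a (m - 1))) (d + 1)]
    simp only [Nat.add_sub_cancel, Nat.succ_ne_zero, if_false, ite_true, smul_zero,
      pow_zero, smul_zero, add_zero, if_true, eq_self_iff_true]
    exact Finset.sum_congr rfl fun m _ => by
      rw [smul_smul, ← pow_succ']

lemma prep_monomial {d : ℕ} {a : ℕ → A} {F : k → A} (j : ℕ) (hF : PRep d a F) :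
    PRep (d + j) (fun m => if m < j then 0 else a (m - j)) (fun c => c ^ j • F c) := by
  induction j with
  | zero =>
    simpa using prep_coeff_congr (fun m => by simp) hF
  | succ j ih =>
    have h := prep_shift ih
    have : PRep (d + j + 1) (fun m => if m < j + 1 then 0 else a (m - (j + 1)))
        (fun c => c • c ^ j • F c) := by
      refine prep_coeff_congr (fun m => ?_) h
      rcases Nat.eq_zero_or_pos m with rfl | hm
      · simp
      · have h0 : m ≠ 0 := by omega
        simp only [h0, if_false]
        by_cases hmj : m - 1 < j
        · rw [if_pos hmj, if_pos (by omega)]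
        · rw [if_neg hmj, if_neg (by omega)]
          congr 1
          omega
    refine prep_congr (fun c => ?_) this
    rw [smul_smul, ← pow_succ']

end Aux

section Aux2

variable {k A : Type*} [Field k] [CharZero k] [AddCommGroup A] [Module k A]

lemma poly_coeff_zero {n : ℕ} {a : ℕ → A}
    (h : ∀ c : k, ∑ m ∈ range n, c ^ m • a m = 0) : ∀ m, m < n → a m = 0 := by
  intro m hm
  rw [← Module.forall_dual_apply_eq_zero_iff k]
  intro f
  set P : Polynomial k := ∑ i ∈ range n, Polynomial.C (f (a i)) * Polynomial.X ^ i with hP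
  have hev : ∀ c : k, P.eval c = 0 := by
    intro c
    have := congrArg f (h c)
    rw [map_sum, map_zero] at this
    rw [hP, Polynomial.eval_finset_sum]
    simpa only [Polynomial.eval_mul, Polynomial.eval_C, Polynomial.eval_pow,
      Polynomial.eval_X, map_smul, smul_eq_mul, mul_comm] using this
  have hP0 : P = 0 := Polynomial.funext (by simp [hev])
  have := congrArg (fun Q => Polynomial.coeff Q m) hP0
  simp only [hP, Polynomial.finset_sum_coeff, Polynomial.coeff_C_mul_X_pow,
    Polynomial.coeff_zero] at this
  rwa [Finset.sum_ite_eq (range n) m (fun x => f (a x)), if_pos (Finset.mem_range.2 hm)] at this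

lemma prep_unique {d₁ d₂ : ℕ} {a b : ℕ → A} {F : k → A}
    (hF : PRep d₁ a F) (hG : PRep d₂ b F) : ∀ m, a m = b m := by
  intro m
  set N := max d₁ d₂ with hN
  have h1 := prep_ext hF (le_max_left d₁ d₂)
  have h2 := prep_ext hG (le_max_right d₁ d₂)
  have key : ∀ c : k, ∑ i ∈ range (N + 1), c ^ i • (a i - b i) = 0 := by
    intro c
    have := (h1.2 c).symm.trans (h2.2 c)
    rw [← sub_eq_zero, ← Finset.sum_sub_distrib] at this
    simpa only [← smul_sub] using this
  have hz := poly_coeff_zero key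
  by_cases hm : m < N + 1
  · have := hz m hm
    rwa [sub_eq_zero] at this
  · rw [h1.1 m (by omega), h2.1 m (by omega)]

lemma sum_sq_eq_sum_diag {d₁ d₂ : ℕ} (g : ℕ → ℕ → A)
    (h₁ : ∀ α β, d₁ < α → g α β = 0) (h₂ : ∀ α β, d₂ < β → g α β = 0) :
    ∑ α ∈ range (d₁ + 1), ∑ β ∈ range (d₂ + 1), g α β
      = ∑ m ∈ range (d₁ + d₂ + 1), ∑ i ∈ range (m + 1), g i (m - i) := by
  have hD : d₁ + 1 ≤ d₁ + d₂ + 1 := by omega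
  have hD' : d₂ + 1 ≤ d₁ + d₂ + 1 := by omega
  set D := d₁ + d₂ + 1 with hDdef
  have step1 : ∑ α ∈ range (d₁ + 1), ∑ β ∈ range (d₂ + 1), g α β
      = ∑ α ∈ range D, ∑ β ∈ range D, g α β := by
    rw [Finset.sum_subset (Finset.range_subset_range.2 hD)]
    · apply Finset.sum_congr rfl
      intro α _
      rw [Finset.sum_subset (Finset.range_subset_range.2 hD')]
      intro β _ hβ
      exact h₂ α β (by simpa using hβ)
    · intro α _ hα
      apply Finset.sum_eq_zero
      intro β _
      exact h₁ α β (by simpa using hα)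
  have step2 : ∑ α ∈ range D, ∑ β ∈ range D, g α β
      = ∑ m ∈ range (2 * D), ∑ pr ∈ (range D ×ˢ range D).filter (fun pr => pr.1 + pr.2 = m),
          g pr.1 pr.2 := by
    rw [← Finset.sum_product']
    rw [Finset.sum_fiberwise_of_maps_to (g := fun pr : ℕ × ℕ => pr.1 + pr.2)
      (t := range (2 * D)) ?_ (fun pr => g pr.1 pr.2)]
    intro pr hpr
    simp only [Finset.mem_product, Finset.mem_range] at hpr ⊢
    omega
  have step3 : ∀ m, m < D →
      (∑ pr ∈ (range D ×ˢ range D).filter (fun pr => pr.1 + pr.2 = m), g pr.1 pr.2)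
        = ∑ i ∈ range (m + 1), g i (m - i) := by
    intro m hm
    refine Finset.sum_nbij' (fun pr => pr.1) (fun i => (i, m - i)) ?_ ?_ ?_ ?_ ?_
    · intro pr hpr
      simp only [Finset.mem_filter, Finset.mem_product, Finset.mem_range] at hpr ⊢
      omega
    · intro i hi
      simp only [Finset.mem_filter, Finset.mem_product, Finset.mem_range] at hi ⊢
      omega
    · intro pr hpr
      simp only [Finset.mem_filter, Finset.mem_product, Finset.mem_range] at hpr
      have : m - pr.1 = pr.2 := by omega
      simp [this]
    · intro i hi; rfl
    · intro pr hpr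
      simp only [Finset.mem_filter, Finset.mem_product, Finset.mem_range] at hpr
      have h2 : m - pr.1 = pr.2 := by omega
      rw [h2]
  rw [step1, step2]
  rw [← Finset.sum_subset (Finset.range_subset_range.2 (show D ≤ 2 * D by omega))]
  · exact Finset.sum_congr rfl fun m hm => step3 m (Finset.mem_range.1 hm)
  · intro m _ hm
    apply Finset.sum_eq_zero
    intro pr hpr
    simp only [Finset.mem_filter, Finset.mem_product, Finset.mem_range] at hpr
    simp only [Finset.mem_range] at hm
    rcases Nat.lt_or_ge d₁ pr.1 with h | h
    · exact h₁ pr.1 pr.2 h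
    · exact h₂ pr.1 pr.2 (by omega)

end Aux2

section Aux3

variable {k A : Type*} [Field k] [CharZero k] [AddCommGroup A] [Module k A]
variable (mul : A →ₗ[k] A →ₗ[k] A)

/-- expansion of a bilinear map applied to two weighted sums -/
lemma mul_sum_sum {s t : Finset ℕ} (c : k) (F G : ℕ → A) :
    mul (∑ i ∈ s, c ^ i • F i) (∑ j ∈ t, c ^ j • G j)
      = ∑ i ∈ s, ∑ j ∈ t, c ^ (i + j) • mul (F i) (G j) := by
  rw [map_sum, Finset.sum_comm]
  apply Finset.sum_congr rfl
  intro j _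
  rw [map_smul, map_sum mul (fun i => c ^ i • F i) s, LinearMap.sum_apply, Finset.smul_sum]
  apply Finset.sum_congr rfl
  intro i _
  rw [LinearMap.map_smul₂]
  rw [smul_comm (c ^ j) (c ^ i), smul_smul, ← pow_add]

def cauchy (a b : ℕ → A) : ℕ → A :=
  fun m => ∑ i ∈ range (m + 1), mul (a i) (b (m - i))

lemma prep_mul {d₁ d₂ : ℕ} {a b : ℕ → A} {F G : k → A}
    (hF : PRep d₁ a F) (hG : PRep d₂ b G) :
    PRep (d₁ + d₂) (cauchy mul a b) (fun c => mul (F c) (G c)) := by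
  constructor
  · intro m hm
    apply Finset.sum_eq_zero
    intro i _
    rcases Nat.lt_or_ge d₁ i with h | h
    · rw [hF.1 i h, map_zero, LinearMap.zero_apply]
    · rw [hG.1 (m - i) (by omega), map_zero]
  · intro c
    dsimp only
    rw [hF.2 c, hG.2 c, mul_sum_sum]
    rw [sum_sq_eq_sum_diag (fun i j => c ^ (i + j) • mul (a i) (b j))
      (fun i j h => by rw [hF.1 i h, map_zero, LinearMap.zero_apply, smul_zero])
      (fun i j h => by rw [hG.1 j h, map_zero, smul_zero])]
    apply Finset.sum_congr rfl
    intro m _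
    rw [cauchy, Finset.smul_sum]
    apply Finset.sum_congr rfl
    intro i hi
    simp only [Finset.mem_range] at hi
    have : i + (m - i) = m := by omega
    rw [this]

end Aux3

section Aux4

variable {k A : Type*} [Field k] [CharZero k] [AddCommGroup A] [Module k A]

/-- Coefficients of the expansion of `T q (z + c • v)` in powers of `c`. -/
noncomputable def PP (mul : A →ₗ[k] A →ₗ[k] A) (T : ℕ → A → A) :
    ℕ → A → A → ℕ → A
  | 0, _, _, _ => 0
  | 1, z, v, m => if m = 0 then z else if m = 1 then v else 0
  | (n+2), z, v, m =>
      ∑ i ∈ (range (n+1)).attach,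
        ∑ α ∈ range (m+1),
          mul (PP mul T (n+1-i.1) z v α) (PP mul T (i.1+1) z v (m-α))
  termination_by q _ _ _ => q
  decreasing_by
  · have := i.2; simp only [Finset.mem_range] at this; omega
  · have := i.2; simp only [Finset.mem_range] at this; omega

lemma PP_succ (mul : A →ₗ[k] A →ₗ[k] A) (T : ℕ → A → A) (n : ℕ) (z v : A) (m : ℕ) :
    PP mul T (n+2) z v m
      = ∑ i ∈ range (n+1), ∑ α ∈ range (m+1),
          mul (PP mul T (n+1-i) z v α) (PP mul T (i+1) z v (m-α)) := by
  rw [PP]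
  exact Finset.sum_attach _ (fun i => ∑ α ∈ range (m+1),
    mul (PP mul T (n+1-i) z v α) (PP mul T (i+1) z v (m-α)))

/-- Coefficients of the expansion of `SS (n+1) (x + c • v') y` in powers of `c`,
where `v' = -(mul x x)` and `SS q z v = PP mul T q z v 1`. -/
noncomputable def QQ (mul : A →ₗ[k] A →ₗ[k] A) (T : ℕ → A → A) (x y : A) :
    ℕ → ℕ → A
  | 0, m => if m = 0 then y else 0
  | (n+1), m => (2:ℕ) • ∑ i ∈ (range (n+1)).attach, ∑ α ∈ range (m+1),
      mul (PP mul T (n+1-i.1) x (-(mul x x)) α) (QQ mul T x y i.1 (m-α))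
  termination_by q _ => q
  decreasing_by
  · have := i.2; simp only [Finset.mem_range] at this; omega

lemma QQ_succ (mul : A →ₗ[k] A →ₗ[k] A) (T : ℕ → A → A) (x y : A) (n m : ℕ) :
    QQ mul T x y (n+1) m
      = (2:ℕ) • ∑ i ∈ range (n+1), ∑ α ∈ range (m+1),
          mul (PP mul T (n+1-i) x (-(mul x x)) α) (QQ mul T x y i (m-α)) := by
  rw [QQ]
  congr 1
  exact Finset.sum_attach _ (fun i => ∑ α ∈ range (m+1),
    mul (PP mul T (n+1-i) x (-(mul x x)) α) (QQ mul T x y i (m-α)))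

end Aux4

section Aux5

variable {k A : Type*} [Field k] [CharZero k] [AddCommGroup A] [Module k A]
variable {mul : A →ₗ[k] A →ₗ[k] A} {T : ℕ → A → A}

/-- `hTq` in `range` form. -/
lemma T_rec (hTq : ∀ q, 1 < q → ∀ x, T q x =
      ∑ pr ∈ (Finset.HasAntidiagonal.antidiagonal q).filter (fun pr => pr.1 ≠ 0 ∧ pr.2 ≠ 0),
        mul (T pr.1 x) (T pr.2 x)) (n : ℕ) (z : A) :
    T (n+2) z = ∑ i ∈ range (n+1), mul (T (n+1-i) z) (T (i+1) z) := by
  rw [hTq (n+2) (by omega) z]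
  refine Finset.sum_nbij' (fun pr => pr.2 - 1) (fun i => (n+1-i, i+1)) ?_ ?_ ?_ ?_ ?_
  · intro pr hpr
    simp only [Finset.mem_filter, Finset.HasAntidiagonal.mem_antidiagonal, Finset.mem_range] at hpr ⊢
    omega
  · intro i hi
    simp only [Finset.mem_filter, Finset.HasAntidiagonal.mem_antidiagonal, Finset.mem_range] at hi ⊢
    omega
  · intro pr hpr
    simp only [Finset.mem_filter, Finset.HasAntidiagonal.mem_antidiagonal] at hpr
    have h1 : n + 1 - (pr.2 - 1) = pr.1 := by omega
    have h2 : pr.2 - 1 + 1 = pr.2 := by omega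
    rw [h1, h2]
  · intro i hi
    simp only [Finset.mem_range] at hi
    dsimp only
    omega
  · intro pr hpr
    simp only [Finset.mem_filter, Finset.HasAntidiagonal.mem_antidiagonal] at hpr
    have h1 : n + 1 - (pr.2 - 1) = pr.1 := by omega
    have h2 : pr.2 - 1 + 1 = pr.2 := by omega
    rw [h1, h2]

variable {p : ℕ}

/-- The identities `T q = 0` extend to all `q ≥ p`. -/
lemma T_nil (hTq : ∀ q, 1 < q → ∀ x, T q x =
      ∑ pr ∈ (Finset.HasAntidiagonal.antidiagonal q).filter (fun pr => pr.1 ≠ 0 ∧ pr.2 ≠ 0),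
        mul (T pr.1 x) (T pr.2 x))
    (hp : 2 ≤ p)
    (hnil : ∀ q, p ≤ q → q ≤ 2 * p - 1 → ∀ x : A, T q x = 0) :
    ∀ q, p ≤ q → ∀ z, T q z = 0 := by
  intro q
  induction q using Nat.strong_induction_on with
  | _ q ih =>
    intro hq z
    rcases le_or_gt q (2*p-1) with h | h
    · exact hnil q hq h z
    · obtain ⟨n, rfl⟩ : ∃ n, q = n + 2 := ⟨q - 2, by omega⟩
      rw [T_rec hTq]
      apply Finset.sum_eq_zero
      intro i hi
      simp only [Finset.mem_range] at hi
      rcases le_or_gt p (i+1) with h1 | h1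
      · rw [ih (i+1) (by omega) h1 z, map_zero]
      · have h2 : p ≤ n+1-i := by omega
        rw [ih (n+1-i) (by omega) h2 z, map_zero, LinearMap.zero_apply]

lemma PP_zeroth (hTq : ∀ q, 1 < q → ∀ x, T q x =
      ∑ pr ∈ (Finset.HasAntidiagonal.antidiagonal q).filter (fun pr => pr.1 ≠ 0 ∧ pr.2 ≠ 0),
        mul (T pr.1 x) (T pr.2 x))
    (hT1 : ∀ x, T 1 x = x) :
    ∀ q, 1 ≤ q → ∀ z v : A, PP mul T q z v 0 = T q z := by
  intro q
  induction q using Nat.strong_induction_on with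
  | _ q ih =>
    intro hq z v
    have hq2 : q = 1 ∨ ∃ n, q = n + 2 := by
      rcases q with _ | q'
      · omega
      · rcases q' with _ | n
        · exact Or.inl rfl
        · exact Or.inr ⟨n, rfl⟩
    rcases hq2 with rfl | ⟨n, rfl⟩
    · rw [hT1]; simp [PP]
    · rw [PP_succ, T_rec hTq]
      apply Finset.sum_congr rfl
      intro i hi
      simp only [Finset.mem_range] at hi
      rw [Finset.sum_range_one]
      rw [ih (n+1-i) (by omega) (by omega) z v, ih (i+1) (by omega) (by omega) z v]

lemma PP_rep (hTq : ∀ q, 1 < q → ∀ x, T q x =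
      ∑ pr ∈ (Finset.HasAntidiagonal.antidiagonal q).filter (fun pr => pr.1 ≠ 0 ∧ pr.2 ≠ 0),
        mul (T pr.1 x) (T pr.2 x))
    (hT1 : ∀ x, T 1 x = x) :
    ∀ q, 1 ≤ q → ∀ z v : A, PRep q (PP mul T q z v) (fun c : k => T q (z + c • v)) := by
  intro q
  induction q using Nat.strong_induction_on with
  | _ q ih =>
    intro hq z v
    have hq2 : q = 1 ∨ ∃ n, q = n + 2 := by
      rcases q with _ | q'
      · omega
      · rcases q' with _ | n
        · exact Or.inl rfl
        · exact Or.inr ⟨n, rfl⟩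
    rcases hq2 with rfl | ⟨n, rfl⟩
    · refine prep_congr (fun c => (hT1 _).symm) ?_
      exact prep_coeff_congr (fun m => by simp [PP]) (prep_linear z v)
    · have main : PRep (n+2)
          (fun m => ∑ i ∈ range (n+1),
            cauchy mul (PP mul T (n+1-i) z v) (PP mul T (i+1) z v) m)
          (fun c : k => ∑ i ∈ range (n+1),
            mul (T (n+1-i) (z + c • v)) (T (i+1) (z + c • v))) := by
        apply prep_sum
        intro i hi
        simp only [Finset.mem_range] at hi
        have h1 := ih (n+1-i) (by omega) (by omega) z v
        have h2 := ih (i+1) (by omega) (by omega) z v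
        have h3 := prep_mul mul h1 h2
        have h4 : (n+1-i) + (i+1) = n + 2 := by omega
        rw [h4] at h3
        exact h3
      refine prep_congr (fun c => (T_rec hTq n _).symm)
        (prep_coeff_congr (fun m => ?_) main)
      rw [PP_succ]
      rfl

/-- commutative form of the recursion for the linear coefficient. -/
lemma SS_rec (hcomm : ∀ x y : A, mul x y = mul y x)
    (hTq : ∀ q, 1 < q → ∀ x, T q x =
      ∑ pr ∈ (Finset.HasAntidiagonal.antidiagonal q).filter (fun pr => pr.1 ≠ 0 ∧ pr.2 ≠ 0),
        mul (T pr.1 x) (T pr.2 x))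
    (hT1 : ∀ x, T 1 x = x) (n : ℕ) (z v : A) :
    PP mul T (n+2) z v 1
      = (2:ℕ) • ∑ i ∈ range (n+1), mul (T (n+1-i) z) (PP mul T (i+1) z v 1) := by
  rw [PP_succ]
  have expand : ∀ i ∈ range (n+1),
      (∑ α ∈ range 2, mul (PP mul T (n+1-i) z v α) (PP mul T (i+1) z v (1-α)))
        = mul (T (n+1-i) z) (PP mul T (i+1) z v 1)
          + mul (PP mul T (n+1-i) z v 1) (T (i+1) z) := by
    intro i hi
    simp only [Finset.mem_range] at hi
    rw [Finset.sum_range_succ, Finset.sum_range_one]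
    rw [PP_zeroth hTq hT1 (n+1-i) (by omega) z v, PP_zeroth hTq hT1 (i+1) (by omega) z v]
  rw [Finset.sum_congr rfl expand, Finset.sum_add_distrib]
  have swap : ∑ i ∈ range (n+1), mul (PP mul T (n+1-i) z v 1) (T (i+1) z)
      = ∑ i ∈ range (n+1), mul (T (n+1-i) z) (PP mul T (i+1) z v 1) := by
    rw [Finset.sum_congr rfl (fun i _ => hcomm (PP mul T (n+1-i) z v 1) (T (i+1) z))]
    rw [← Finset.sum_range_reflect (fun i => mul (T (i+1) z) (PP mul T (n+1-i) z v 1)) (n+1)]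
    apply Finset.sum_congr rfl
    intro i hi
    simp only [Finset.mem_range] at hi
    have h1 : (n + 1 - 1 - i) + 1 = n + 1 - i := by omega
    have h2 : n + 1 - (n + 1 - 1 - i) = i + 1 := by omega
    rw [h1, h2]
  rw [swap, two_smul]

/-- The linearized identities: `SS q z v = 0` for `q ≥ p`. -/
lemma SS_nil (hTq : ∀ q, 1 < q → ∀ x, T q x =
      ∑ pr ∈ (Finset.HasAntidiagonal.antidiagonal q).filter (fun pr => pr.1 ≠ 0 ∧ pr.2 ≠ 0),
        mul (T pr.1 x) (T pr.2 x))
    (hT1 : ∀ x, T 1 x = x) (hp : 2 ≤ p)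
    (hnil : ∀ q, p ≤ q → q ≤ 2 * p - 1 → ∀ x : A, T q x = 0) :
    ∀ q, p ≤ q → ∀ z v : A, PP mul T q z v 1 = 0 := by
  intro q hq z v
  have h1 := PP_rep hTq hT1 q (by omega) z v
  have h0 : PRep 0 (fun m => if m = 0 then (0:A) else 0) (fun c : k => T q (z + c • v)) :=
    prep_congr (fun c => (T_nil hTq hp hnil q hq (z + c • v)).symm) (prep_const 0)
  have := prep_unique h1 h0 1
  simpa using this

end Aux5

section Aux6

variable {k A : Type*} [Field k] [CharZero k] [AddCommGroup A] [Module k A]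
variable {mul : A →ₗ[k] A →ₗ[k] A} {T : ℕ → A → A}

lemma QQ_rep (hcomm : ∀ x y : A, mul x y = mul y x)
    (hTq : ∀ q, 1 < q → ∀ x, T q x =
      ∑ pr ∈ (Finset.HasAntidiagonal.antidiagonal q).filter (fun pr => pr.1 ≠ 0 ∧ pr.2 ≠ 0),
        mul (T pr.1 x) (T pr.2 x))
    (hT1 : ∀ x, T 1 x = x) (x y : A) :
    ∀ n, PRep n (QQ mul T x y n)
      (fun c : k => PP mul T (n+1) (x + c • (-(mul x x))) y 1) := by
  intro n
  induction n using Nat.strong_induction_on with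
  | _ n ih =>
    rcases n with _ | n
    · refine prep_congr (fun c => ?_) (prep_coeff_congr (fun m => by simp [QQ]) (prep_const y))
      simp [PP]
    · have main : PRep (n+1)
          (fun m => ∑ i ∈ range (n+1),
            cauchy mul (PP mul T (n+1-i) x (-(mul x x))) (QQ mul T x y i) m)
          (fun c : k => ∑ i ∈ range (n+1),
            mul (T (n+1-i) (x + c • (-(mul x x))))
              (PP mul T (i+1) (x + c • (-(mul x x))) y 1)) := by
        apply prep_sum
        intro i hi
        simp only [Finset.mem_range] at hi
        have h1 := PP_rep hTq hT1 (n+1-i) (by omega) x (-(mul x x))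
        have h2 := ih i (by omega)
        have h3 := prep_mul mul h1 h2
        have h4 : (n+1-i) + i = n+1 := by omega
        rw [h4] at h3
        exact h3
      refine prep_congr (fun c => ?_) (prep_coeff_congr (fun m => ?_) (prep_nsmul 2 main))
      · exact (SS_rec hcomm hTq hT1 n _ y).symm
      · rw [QQ_succ]
        rfl

end Aux6

section Aux7

variable {k A : Type*} [Field k] [CharZero k] [AddCommGroup A] [Module k A]
variable {mul : A →ₗ[k] A →ₗ[k] A} {T : ℕ → A → A} {p : ℕ}

/-- `G_c (F_c z) = z` : the truncated tree series is a right inverse of `z - c z²`. -/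
lemma GF_id (hTq : ∀ q, 1 < q → ∀ x, T q x =
      ∑ pr ∈ (Finset.HasAntidiagonal.antidiagonal q).filter (fun pr => pr.1 ≠ 0 ∧ pr.2 ≠ 0),
        mul (T pr.1 x) (T pr.2 x))
    (hT1 : ∀ x, T 1 x = x) (P : ℕ)
    (hTnil : ∀ q, P + 2 ≤ q → ∀ z : A, T q z = 0) (c : k) (z : A) :
    (∑ q ∈ range (P+1), c ^ q • T (q+1) z)
      - c • mul (∑ q ∈ range (P+1), c ^ q • T (q+1) z)
          (∑ q ∈ range (P+1), c ^ q • T (q+1) z) = z := by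
  have hmulFF : mul (∑ q ∈ range (P+1), c ^ q • T (q+1) z)
      (∑ q ∈ range (P+1), c ^ q • T (q+1) z)
      = ∑ m ∈ range (2*P+1), c ^ m • T (m+2) z := by
    rw [mul_sum_sum]
    rw [sum_sq_eq_sum_diag (fun i j => c ^ (i+j) • mul (T (i+1) z) (T (j+1) z))
      (fun i j h => by
        rw [hTnil (i+1) (by omega) z, map_zero, LinearMap.zero_apply, smul_zero])
      (fun i j h => by
        rw [hTnil (j+1) (by omega) z, map_zero, smul_zero])]
    have hPP : P + P + 1 = 2*P+1 := by omega
    rw [hPP]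
    apply Finset.sum_congr rfl
    intro m _
    have e1 : ∀ i ∈ range (m+1),
        c ^ (i + (m - i)) • mul (T (i+1) z) (T ((m-i)+1) z)
          = c ^ m • mul (T (i+1) z) (T ((m-i)+1) z) := by
      intro i hi
      simp only [Finset.mem_range] at hi
      have : i + (m - i) = m := by omega
      rw [this]
    rw [Finset.sum_congr rfl e1, ← Finset.smul_sum]
    congr 1
    rw [← Finset.sum_range_reflect (fun i => mul (T (i+1) z) (T ((m-i)+1) z)) (m+1)]
    rw [T_rec hTq]
    apply Finset.sum_congr rfl
    intro i hi
    simp only [Finset.mem_range] at hi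
    have h1 : m + 1 - 1 - i + 1 = m + 1 - i := by omega
    have h2 : (m - (m + 1 - 1 - i)) + 1 = i + 1 := by omega
    rw [h1, h2]
  rw [hmulFF, Finset.smul_sum]
  have trunc : ∑ m ∈ range (2*P+1), c • c ^ m • T (m+2) z
      = ∑ m ∈ range P, c ^ (m+1) • T (m+2) z := by
    rw [← Finset.sum_subset (Finset.range_subset_range.2 (show P ≤ 2*P+1 by omega))]
    · apply Finset.sum_congr rfl
      intro m _
      rw [smul_smul, ← pow_succ']
    · intro m _ hm
      simp only [Finset.mem_range] at hm
      rw [hTnil (m+2) (by omega) z, smul_zero, smul_zero]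
  rw [trunc]
  have hpeel : ∑ q ∈ range (P+1), c ^ q • T (q+1) z
      = ∑ q ∈ range P, c ^ (q+1) • T (q+2) z + z := by
    rw [Finset.sum_range_succ' (fun q => c ^ q • T (q+1) z) P]
    rw [pow_zero, one_smul, hT1]
  rw [hpeel, add_sub_cancel_left]

end Aux7

section Aux8

variable {k A : Type*} [Field k] [CharZero k] [AddCommGroup A] [Module k A]
variable {mul : A →ₗ[k] A →ₗ[k] A} {T : ℕ → A → A}

/-- `F_c (G_c x) = x` : the truncated tree series evaluated at `x - c x²` gives back `x`. -/
lemma FG_id (hTq : ∀ q, 1 < q → ∀ x, T q x =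
      ∑ pr ∈ (Finset.HasAntidiagonal.antidiagonal q).filter (fun pr => pr.1 ≠ 0 ∧ pr.2 ≠ 0),
        mul (T pr.1 x) (T pr.2 x))
    (hT1 : ∀ x, T 1 x = x) (P : ℕ)
    (hTnil : ∀ q, P + 2 ≤ q → ∀ z : A, T q z = 0) (x : A) :
    ∀ c : k, (∑ q ∈ range (P+1), c ^ q • T (q+1) (x + c • (-(mul x x)))) = x := by
  -- the map h and its difference D from x
  set h : k → A := fun c => ∑ q ∈ range (P+1), c ^ q • T (q+1) (x + c • (-(mul x x)))
    with hh
  -- representation of h as polynomial of degree ≤ 2P+1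
  have hrep_h : PRep (2*P+1)
      (fun m => ∑ q ∈ range (P+1),
        (if m < q then 0 else PP mul T (q+1) x (-(mul x x)) (m - q))) h := by
    apply prep_sum
    intro q hq
    simp only [Finset.mem_range] at hq
    have h1 := PP_rep hTq hT1 (q+1) (by omega) x (-(mul x x))
    have h2 := prep_monomial q h1
    exact prep_ext h2 (by omega)
  -- D := h - x
  have hD : PRep (2*P+1)
      (fun m => (∑ q ∈ range (P+1),
        (if m < q then 0 else PP mul T (q+1) x (-(mul x x)) (m - q)))
          + (if m = 0 then -x else 0))
      (fun c => h c - x) := by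
    have hc := prep_ext (prep_const (k := k) (-x)) (show 0 ≤ 2*P+1 by omega)
    have := prep_add hrep_h hc
    exact prep_congr (fun c => by rw [sub_eq_add_neg]) this
  set Bd : ℕ → A := fun m => (∑ q ∈ range (P+1),
      (if m < q then 0 else PP mul T (q+1) x (-(mul x x)) (m - q)))
        + (if m = 0 then -x else 0) with hBd
  -- h 0 = x
  have h0 : h 0 = x := by
    rw [hh]
    dsimp only
    rw [Finset.sum_eq_single 0]
    · rw [pow_zero, one_smul, zero_smul, add_zero, hT1]
    · intro q _ hq
      rw [zero_pow hq, zero_smul]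
    · simp
  have hD0 : Bd 0 = 0 := by
    have := prep_eval0 hD
    rw [this, h0, sub_self]
  -- the functional equation for D
  have hDrec : ∀ c : k, h c - x
      = c • (mul x (h c - x) + mul (h c - x) x + mul (h c - x) (h c - x)) := by
    intro c
    have e1 : h c - c • mul (h c) (h c) = x + c • (-(mul x x)) :=
      GF_id hTq hT1 P hTnil c (x + c • (-(mul x x)))
    have e2 : h c - x = c • mul (h c) (h c) - c • mul x x := by
      calc h c - x = (h c - c • mul (h c) (h c)) + c • mul (h c) (h c) - x := by abel
        _ = (x + c • (-(mul x x))) + c • mul (h c) (h c) - x := by rw [e1]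
        _ = c • mul (h c) (h c) - c • mul x x := by rw [smul_neg]; abel
    have e3 : ∀ D' : A, mul (x + D') (x + D') - mul x x
        = mul x D' + mul D' x + mul D' D' := by
      intro D'
      simp only [map_add, LinearMap.add_apply]
      abel
    conv_lhs => rw [e2, ← smul_sub]
    congr 1
    conv_lhs => rw [show h c = x + (h c - x) from by abel]
    exact e3 (h c - x)
  -- coefficient comparison
  have hG : PRep (4*P+2)
      (fun m => (mul x (Bd m) + (mul.flip x) (Bd m)) + cauchy mul Bd Bd m)
      (fun c => mul x (h c - x) + mul (h c - x) x + mul (h c - x) (h c - x)) := by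
    have g1 := prep_ext (prep_linmap (mul x) hD) (show 2*P+1 ≤ 4*P+2 by omega)
    have g2 := prep_ext (prep_linmap (mul.flip x) hD) (show 2*P+1 ≤ 4*P+2 by omega)
    have g3 := prep_mul mul hD hD
    have h34 : (2*P+1) + (2*P+1) = 4*P+2 := by omega
    rw [h34] at g3
    have := prep_add (prep_add g1 g2) g3
    exact prep_congr (fun c => by rw [LinearMap.flip_apply]) this
  have hRHS : PRep (4*P+3)
      (fun m => if m = 0 then 0 else
        (mul x (Bd (m-1)) + (mul.flip x) (Bd (m-1))) + cauchy mul Bd Bd (m-1))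
      (fun c => h c - x) := by
    have := prep_shift hG
    exact prep_congr (fun c => (hDrec c).symm) this
  have hcoeff := prep_unique (prep_ext hD (show 2*P+1 ≤ 4*P+3 by omega)) hRHS
  -- all coefficients of D vanish
  have hBdz : ∀ m, Bd m = 0 := by
    intro m
    induction m using Nat.strong_induction_on with
    | _ m ih =>
      rcases m with _ | m
      · exact hD0
      · have := hcoeff (m+1)
        simp only [Nat.succ_ne_zero, if_false, Nat.add_sub_cancel] at this
        rw [this, ih m (by omega), cauchy]
        rw [Finset.sum_eq_zero (fun i hi => by
          simp only [Finset.mem_range] at hi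
          rw [ih i (by omega), map_zero, LinearMap.zero_apply])]
        simp
  -- conclude
  intro c
  have : h c - x = 0 := by
    have h2 := hD.2 c
    dsimp only at h2
    rw [h2]
    apply Finset.sum_eq_zero
    intro m _
    rw [show Bd m = 0 from hBdz m, smul_zero]
  exact sub_eq_zero.1 this

end Aux8

section Aux9

variable {k A : Type*} [Field k] [CharZero k] [AddCommGroup A] [Module k A]
variable {mul : A →ₗ[k] A →ₗ[k] A} {T : ℕ → A → A}

lemma claimA (hcomm : ∀ x y : A, mul x y = mul y x)
    (hTq : ∀ q, 1 < q → ∀ x, T q x =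
      ∑ pr ∈ (Finset.HasAntidiagonal.antidiagonal q).filter (fun pr => pr.1 ≠ 0 ∧ pr.2 ≠ 0),
        mul (T pr.1 x) (T pr.2 x))
    (hT1 : ∀ x, T 1 x = x) (P : ℕ)
    (hTnil : ∀ q, P + 2 ≤ q → ∀ z : A, T q z = 0)
    (hSSnil : ∀ q, P + 2 ≤ q → ∀ z v : A, PP mul T q z v 1 = 0)
    (x y : A) : ∀ c : k,
    (∑ q ∈ range (P+1), c ^ q • PP mul T (q+1) (x + c • (-(mul x x))) y 1)
      = y + (2:ℕ) • (c • mul x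
          (∑ q ∈ range (P+1), c ^ q • PP mul T (q+1) (x + c • (-(mul x x))) y 1)) := by
  intro c
  have hx : mul x (∑ q ∈ range (P+1), c ^ q • PP mul T (q+1) (x + c • (-(mul x x))) y 1)
      = ∑ m ∈ range (2*P+1), c ^ m •
          (∑ i ∈ range (m+1), mul (T (m+1-i) (x + c • (-(mul x x))))
            (PP mul T (i+1) (x + c • (-(mul x x))) y 1)) := by
    have step0 : mul x (∑ q ∈ range (P+1), c ^ q • PP mul T (q+1) (x + c • (-(mul x x))) y 1)
        = mul (∑ q ∈ range (P+1), c ^ q • T (q+1) (x + c • (-(mul x x))))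
              (∑ q ∈ range (P+1), c ^ q • PP mul T (q+1) (x + c • (-(mul x x))) y 1) := by
      rw [FG_id hTq hT1 P hTnil x c]
    rw [step0, mul_sum_sum]
    rw [sum_sq_eq_sum_diag (fun i j => c ^ (i+j) •
        mul (T (i+1) (x + c • (-(mul x x)))) (PP mul T (j+1) (x + c • (-(mul x x))) y 1))
      (fun i j h => by
        rw [hTnil (i+1) (by omega), map_zero, LinearMap.zero_apply, smul_zero])
      (fun i j h => by
        rw [hSSnil (j+1) (by omega), map_zero, smul_zero])]
    rw [show P + P + 1 = 2*P+1 by omega]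
    apply Finset.sum_congr rfl
    intro m _
    have e1 : ∀ i ∈ range (m+1),
        c ^ (i + (m - i)) • mul (T (i+1) (x + c • (-(mul x x))))
            (PP mul T ((m-i)+1) (x + c • (-(mul x x))) y 1)
          = c ^ m • mul (T (i+1) (x + c • (-(mul x x))))
            (PP mul T ((m-i)+1) (x + c • (-(mul x x))) y 1) := by
      intro i hi
      simp only [Finset.mem_range] at hi
      have : i + (m - i) = m := by omega
      rw [this]
    rw [Finset.sum_congr rfl e1, ← Finset.smul_sum]
    congr 1
    rw [← Finset.sum_range_reflect (fun i => mul (T (i+1) (x + c • (-(mul x x))))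
      (PP mul T ((m-i)+1) (x + c • (-(mul x x))) y 1)) (m+1)]
    apply Finset.sum_congr rfl
    intro i hi
    simp only [Finset.mem_range] at hi
    have h1 : m + 1 - 1 - i + 1 = m + 1 - i := by omega
    have h2 : (m - (m + 1 - 1 - i)) + 1 = i + 1 := by omega
    rw [h1, h2]
  rw [hx, Finset.smul_sum, Finset.smul_sum]
  have e2 : ∀ m ∈ range (2*P+1),
      (2:ℕ) • (c • (c ^ m • (∑ i ∈ range (m+1), mul (T (m+1-i) (x + c • (-(mul x x))))
          (PP mul T (i+1) (x + c • (-(mul x x))) y 1))))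
        = c ^ (m+1) • PP mul T (m+2) (x + c • (-(mul x x))) y 1 := by
    intro m _
    rw [smul_comm (2:ℕ), smul_comm (2:ℕ), ← SS_rec hcomm hTq hT1 m (x + c • (-(mul x x))) y]
    rw [smul_smul, ← pow_succ']
  rw [Finset.sum_congr rfl e2]
  have e3 : ∑ m ∈ range (2*P+1), c ^ (m+1) • PP mul T (m+2) (x + c • (-(mul x x))) y 1
      = ∑ m ∈ range P, c ^ (m+1) • PP mul T (m+2) (x + c • (-(mul x x))) y 1 := by
    rw [← Finset.sum_subset (Finset.range_subset_range.2 (show P ≤ 2*P+1 by omega))]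
    intro m _ hm
    simp only [Finset.mem_range] at hm
    rw [hSSnil (m+2) (by omega), smul_zero]
  rw [e3]
  rw [Finset.sum_range_succ' (fun q => c ^ q • PP mul T (q+1) (x + c • (-(mul x x))) y 1) P]
  have e4 : PP mul T 1 (x + c • (-(mul x x))) y 1 = y := by simp [PP]
  rw [pow_zero, one_smul, e4, add_comm]

end Aux9

/-- If the identities `T q (x) = 0` hold for all `p ≤ q ≤ 2p - 1` in a commutative
binary algebra, then the algebra is `(2p-3)`-Engel. -/
theorem stmt5 {k A : Type*} [Field k] [CharZero k] [AddCommGroup A] [Module k A]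
    (mul : A →ₗ[k] A →ₗ[k] A)
    (hcomm : ∀ x y : A, mul x y = mul y x)
    (T : ℕ → A → A)
    (hT1 : ∀ x, T 1 x = x)
    (hTq : ∀ q, 1 < q → ∀ x, T q x =
      ∑ pr ∈ (Finset.HasAntidiagonal.antidiagonal q).filter (fun pr => pr.1 ≠ 0 ∧ pr.2 ≠ 0),
        mul (T pr.1 x) (T pr.2 x))
    (p : ℕ) (hp : 2 ≤ p)
    (hnil : ∀ q, p ≤ q → q ≤ 2 * p - 1 → ∀ x : A, T q x = 0) :
    ∀ x y : A, (fun y => mul x y)^[2 * p - 3] y = 0 := by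

  obtain ⟨P, rfl⟩ : ∃ P, p = P + 2 := ⟨p - 2, by omega⟩
  intro x y
  have hTnil : ∀ q, P + 2 ≤ q → ∀ z : A, T q z = 0 := T_nil hTq (by omega) hnil
  have hSSnil : ∀ q, P + 2 ≤ q → ∀ z v : A, PP mul T q z v 1 = 0 :=
    SS_nil hTq hT1 (by omega) hnil
  have hwrep : PRep (2*P)
      (fun m => ∑ q ∈ range (P+1), (if m < q then 0 else QQ mul T x y q (m - q)))
      (fun c : k => ∑ q ∈ range (P+1),
        c ^ q • PP mul T (q+1) (x + c • (-(mul x x))) y 1) := by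
    apply prep_sum
    intro q hq
    simp only [Finset.mem_range] at hq
    have h1 := QQ_rep hcomm hTq hT1 x y q
    have h2 := prep_monomial q h1
    exact prep_ext h2 (by omega)
  have hRHS := prep_congr
    (fun c => (claimA hcomm hTq hT1 P hTnil hSSnil x y c).symm)
    (prep_add (prep_ext (prep_const (k := k) y) (show 0 ≤ 2*P+1 by omega))
      (prep_nsmul 2 (prep_shift (prep_linmap (mul x) hwrep))))
  have hkey := prep_unique (prep_ext hwrep (show 2*P ≤ 2*P+1 by omega)) hRHS
  set Wf : ℕ → A :=
    fun m => ∑ q ∈ range (P+1), (if m < q then 0 else QQ mul T x y q (m - q)) with hWf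
  have hkey' : ∀ m, Wf m = (if m = 0 then y else 0)
      + (2:ℕ) • (if m = 0 then 0 else mul x (Wf (m-1))) := fun m => hkey m
  have hWfz : ∀ m, 2*P < m → Wf m = 0 := fun m hm => hwrep.1 m hm
  have hiter : ∀ m, m ≤ 2*P → Wf m = (2:ℕ)^m • (fun z => mul x z)^[m] y := by
    intro m
    induction m with
    | zero =>
      intro _
      have h1 := hkey' 0
      simp only [if_pos rfl, smul_zero, add_zero] at h1
      simpa using h1
    | succ m ih =>
      intro hm
      have h1 := hkey' (m+1)
      simp only [Nat.succ_ne_zero, if_false, Nat.add_sub_cancel, zero_add] at h1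
      rw [h1, ih (by omega), map_nsmul, smul_smul, ← pow_succ',
        Function.iterate_succ_apply']
  have htop : (2:ℕ) • mul x (Wf (2*P)) = 0 := by
    have h1 := hkey' (2*P+1)
    have h2 : Wf (2*P+1) = 0 := hWfz (2*P+1) (by omega)
    rw [h2] at h1
    simp only [Nat.succ_ne_zero, if_false, Nat.add_sub_cancel, zero_add] at h1
    exact h1.symm
  have hfin : (2:ℕ)^(2*P+1) • (fun z => mul x z)^[2*P+1] y = 0 := by
    rw [hiter (2*P) le_rfl] at htop
    rw [map_nsmul, smul_smul, ← pow_succ'] at htop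
    rw [Function.iterate_succ_apply']
    exact htop
  have h2ne : ((2^(2*P+1) : ℕ) : k) ≠ 0 := by
    exact Nat.cast_ne_zero.2 (by positivity)
  rw [← Nat.cast_smul_eq_nsmul k] at hfin
  have hzero := (smul_eq_zero.1 hfin).resolve_left h2ne
  rw [show 2 * (P + 2) - 3 = 2*P+1 from by omega]
  exact hzero
end

section
/- Let A be a commutative binary algebra over a field of characteristic zero satisfying T_4(x) ≡ 0 and T_5(x) ≡ 0. Then A is 5-Engel: Ad_x^5(y) = 0 for all x, y ∈ A, where Ad_x(y) = xy. -/
open Finset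

set_option maxHeartbeats 2000000 in
/-- A commutative binary algebra satisfying `T₄ ≡ 0` and `T₅ ≡ 0` is 5-Engel. -/
theorem stmt7 {k A : Type*} [Field k] [CharZero k] [AddCommGroup A] [Module k A]
    (mul : A →ₗ[k] A →ₗ[k] A)
    (hcomm : ∀ x y : A, mul x y = mul y x)
    (T : ℕ → A → A)
    (hT1 : ∀ x, T 1 x = x)
    (hTq : ∀ q, 1 < q → ∀ x, T q x =
      ∑ pr ∈ (Finset.HasAntidiagonal.antidiagonal q).filter (fun pr => pr.1 ≠ 0 ∧ pr.2 ≠ 0),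
        mul (T pr.1 x) (T pr.2 x))
    (hT4 : ∀ x : A, T 4 x = 0)
    (hT5 : ∀ x : A, T 5 x = 0) :
    ∀ x y : A, (fun y => mul x y)^[5] y = 0 := by
  have hmc : ∀ (a : A) {b c : A}, b = c → mul a b = mul a c := by intro a b c h; rw [h]
  have hmcl : ∀ (a : A) {b c : A}, b = c → mul b a = mul c a := by intro a b c h; rw [h]
  have hz : ∀ (a : A) {b : A}, b = 0 → mul a b = 0 := by intro a b h; rw [h]; exact map_zero _
  have hT2 : ∀ z : A, T 2 z = mul z z := by
    intro z
    rw [hTq 2 (by norm_num), show (Finset.HasAntidiagonal.antidiagonal 2).filter (fun pr => pr.1 ≠ 0 ∧ pr.2 ≠ 0) = {(1,1)} from by decide, Finset.sum_singleton, hT1]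
  have hT3 : ∀ z : A, T 3 z = mul z (mul z z) + mul (mul z z) z := by
    intro z
    rw [hTq 3 (by norm_num), show (Finset.HasAntidiagonal.antidiagonal 3).filter (fun pr => pr.1 ≠ 0 ∧ pr.2 ≠ 0) = {(1,2),(2,1)} from by decide, Finset.sum_insert (by decide), Finset.sum_singleton, hT1, hT2]
  have hP : ∀ z : A, (4:k) • mul z (mul z (mul z z)) + mul (mul z z) (mul z z) = 0 := by
    intro z
    have h := hT4 z
    rw [hTq 4 (by norm_num), show (Finset.HasAntidiagonal.antidiagonal 4).filter (fun pr => pr.1 ≠ 0 ∧ pr.2 ≠ 0) = {(1,3),(2,2),(3,1)} from by decide, Finset.sum_insert (by decide), Finset.sum_insert (by decide), Finset.sum_singleton] at h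
    rw [hT1, hT2, hT3] at h
    linear_combination (norm := (simp only [map_add, map_sub, map_smul, LinearMap.add_apply, LinearMap.sub_apply, LinearMap.smul_apply, smul_add, smul_sub, smul_smul]; module)) h - (2:k) • (hmc z (hcomm (mul z z) z)) - hcomm (mul z (mul z z)) z - hcomm (mul (mul z z) z) z
  have hQ : ∀ z : A, mul (mul z z) (mul z (mul z z)) = 0 := by
    intro z
    have h := hT5 z
    rw [hTq 5 (by norm_num), show (Finset.HasAntidiagonal.antidiagonal 5).filter (fun pr => pr.1 ≠ 0 ∧ pr.2 ≠ 0) = {(1,4),(2,3),(3,2),(4,1)} from by decide, Finset.sum_insert (by decide), Finset.sum_insert (by decide), Finset.sum_insert (by decide), Finset.sum_singleton] at h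
    rw [hT1, hT2, hT3, hT4] at h
    simp only [map_zero, LinearMap.zero_apply, zero_add, add_zero] at h
    have h4 : (4:k) • mul (mul z z) (mul z (mul z z)) = 0 := by
      linear_combination (norm := (simp only [map_add, map_sub, map_smul, LinearMap.add_apply, LinearMap.sub_apply, LinearMap.smul_apply, smul_add, smul_sub, smul_smul]; module)) h - (2:k) • (hmc (mul z z) (hcomm (mul z z) z)) - hcomm (mul z (mul z z)) (mul z z) - hcomm (mul (mul z z) z) (mul z z)
    rcases smul_eq_zero.mp h4 with h'|h'
    · norm_num at h'
    · exact h'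
  have hL1 : ∀ x y : A, (4:k) • (mul x (mul x (mul x y))) + (4:k) • (mul x (mul x (mul y x))) + (4:k) • (mul x (mul y (mul x x))) + (4:k) • (mul y (mul x (mul x x))) + (mul (mul x x) (mul x y)) + (mul (mul x x) (mul y x)) + (mul (mul x y) (mul x x)) + (mul (mul y x) (mul x x)) = 0 := by
    intro x y
    linear_combination (norm := (simp only [map_add, map_sub, map_smul, LinearMap.add_apply, LinearMap.sub_apply, LinearMap.smul_apply, smul_add, smul_sub, smul_smul]; module)) (2/3:k) • hP (x + y) - (2/3:k) • hP (x - y) - (1/12:k) • hP (x + (2:k) • y) + (1/12:k) • hP (x - (2:k) • y)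
  have hL2 : ∀ x y w : A, (4:k) • (mul w (mul x (mul x y))) + (4:k) • (mul w (mul x (mul y x))) + (4:k) • (mul w (mul y (mul x x))) + (4:k) • (mul x (mul w (mul x y))) + (4:k) • (mul x (mul w (mul y x))) + (4:k) • (mul x (mul x (mul w y))) + (4:k) • (mul x (mul x (mul y w))) + (4:k) • (mul x (mul y (mul w x))) + (4:k) • (mul x (mul y (mul x w))) + (4:k) • (mul y (mul w (mul x x))) + (4:k) • (mul y (mul x (mul w x))) + (4:k) • (mul y (mul x (mul x w))) + (mul (mul w x) (mul x y)) + (mul (mul w x) (mul y x)) + (mul (mul w y) (mul x x)) + (mul (mul x w) (mul x y)) + (mul (mul x w) (mul y x)) + (mul (mul x x) (mul w y)) + (mul (mul x x) (mul y w)) + (mul (mul x y) (mul w x)) + (mul (mul x y) (mul x w)) + (mul (mul y w) (mul x x)) + (mul (mul y x) (mul w x)) + (mul (mul y x) (mul x w)) = 0 := by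
    intro x y w
    linear_combination (norm := (simp only [map_add, map_sub, map_smul, LinearMap.add_apply, LinearMap.sub_apply, LinearMap.smul_apply, smul_add, smul_sub, smul_smul]; module)) (1/2:k) • hL1 (x + w) y - (1/2:k) • hL1 (x - w) y - hL1 w y
  have hL3 : ∀ x y w u : A, (4:k) • (mul u (mul w (mul x y))) + (4:k) • (mul u (mul w (mul y x))) + (4:k) • (mul u (mul x (mul w y))) + (4:k) • (mul u (mul x (mul y w))) + (4:k) • (mul u (mul y (mul w x))) + (4:k) • (mul u (mul y (mul x w))) + (4:k) • (mul w (mul u (mul x y))) + (4:k) • (mul w (mul u (mul y x))) + (4:k) • (mul w (mul x (mul u y))) + (4:k) • (mul w (mul x (mul y u))) + (4:k) • (mul w (mul y (mul u x))) + (4:k) • (mul w (mul y (mul x u))) + (4:k) • (mul x (mul u (mul w y))) + (4:k) • (mul x (mul u (mul y w))) + (4:k) • (mul x (mul w (mul u y))) + (4:k) • (mul x (mul w (mul y u))) + (4:k) • (mul x (mul y (mul u w))) + (4:k) • (mul x (mul y (mul w u))) + (4:k) • (mul y (mul u (mul w x))) + (4:k) • (mul y (mul u (mul x w))) + (4:k)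 • (mul y (mul w (mul u x))) + (4:k) • (mul y (mul w (mul x u))) + (4:k) • (mul y (mul x (mul u w))) + (4:k) • (mul y (mul x (mul w u))) + (mul (mul u w) (mul x y)) + (mul (mul u w) (mul y x)) + (mul (mul u x) (mul w y)) + (mul (mul u x) (mul y w)) + (mul (mul u y) (mul w x)) + (mul (mul u y) (mul x w)) + (mul (mul w u) (mul x y)) + (mul (mul w u) (mul y x)) + (mul (mul w x) (mul u y)) + (mul (mul w x) (mul y u)) + (mul (mul w y) (mul u x)) + (mul (mul w y) (mul x u)) + (mul (mul x u) (mul w y)) + (mul (mul x u) (mul y w)) + (mul (mul x w) (mul u y)) + (mul (mul x w) (mul y u)) + (mul (mul x y) (mul u w)) + (mul (mul x y) (mul w u)) + (mul (mul y u) (mul w x)) + (mul (mul y u) (mul x w)) + (mul (mul y w) (mul u x)) + (mul (mul y w) (mul x u)) + (mul (mul y x) (mul u w)) + (mul (mul y x) (mul w u)) = 0 := by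
    intro x y w u
    linear_combination (norm := (simp only [map_add, map_sub, map_smul, LinearMap.add_apply, LinearMap.sub_apply, LinearMap.smul_apply, smul_add, smul_sub, smul_smul]; module)) (1/2:k) • hL2 (x + u) y w - (1/2:k) • hL2 (x - u) y w
  have hQ1 : ∀ x y : A, (mul (mul x x) (mul x (mul x y))) + (mul (mul x x) (mul x (mul y x))) + (mul (mul x x) (mul y (mul x x))) + (mul (mul x y) (mul x (mul x x))) + (mul (mul y x) (mul x (mul x x))) = 0 := by
    intro x y
    linear_combination (norm := (simp only [map_add, map_sub, map_smul, LinearMap.add_apply, LinearMap.sub_apply, LinearMap.smul_apply, smul_add, smul_sub, smul_smul]; module)) (2/3:k) • hQ (x + y) - (2/3:k) • hQ (x - y) - (1/12:k) • hQ (x + (2:k) • y) + (1/12:k) • hQ (x - (2:k) • y) + (4:k) • hQ y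
  have hQ2 : ∀ x y w : A, (mul (mul w x) (mul x (mul x y))) + (mul (mul w x) (mul x (mul y x))) + (mul (mul w x) (mul y (mul x x))) + (mul (mul w y) (mul x (mul x x))) + (mul (mul x w) (mul x (mul x y))) + (mul (mul x w) (mul x (mul y x))) + (mul (mul x w) (mul y (mul x x))) + (mul (mul x x) (mul w (mul x y))) + (mul (mul x x) (mul w (mul y x))) + (mul (mul x x) (mul x (mul w y))) + (mul (mul x x) (mul x (mul y w))) + (mul (mul x x) (mul y (mul w x))) + (mul (mul x x) (mul y (mul x w))) + (mul (mul x y) (mul w (mul x x))) + (mul (mul x y) (mul x (mul w x))) + (mul (mul x y) (mul x (mul x w))) + (mul (mul y w) (mul x (mul x x))) + (mul (mul y x) (mul w (mul x x))) + (mul (mul y x) (mul x (mul w x))) + (mul (mul y x) (mul x (mul x w))) = 0 := by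
    intro x y w
    linear_combination (norm := (simp only [map_add, map_sub, map_smul, LinearMap.add_apply, LinearMap.sub_apply, LinearMap.smul_apply, smul_add, smul_sub, smul_smul]; module)) (2/3:k) • hQ1 (x + w) y - (2/3:k) • hQ1 (x - w) y - (1/12:k) • hQ1 (x + (2:k) • w) y + (1/12:k) • hQ1 (x - (2:k) • w) y
  intro x y
  simp only [Function.iterate_succ, Function.iterate_zero, Function.comp_apply, id_eq]
  linear_combination (norm := (simp only [map_add, map_sub, map_smul, LinearMap.add_apply, LinearMap.sub_apply, LinearMap.smul_apply, smul_add, smul_sub, smul_smul]; module)) (1/8:k) • (hz x (hz x (hL1 x y))) + (3/8:k) • (hz x (hQ1 x y)) + (3/64:k) • (hz (mul y x) (hL1 x x)) - (1/64:k) • (hz (mul x y) (hL1 x x)) + (1/32:k) • (hz x (hz y (hL1 x x))) + (1/32:k) • (hz y (hz x (hL1 x x))) + (3/40:k) • (hz y (hQ1 x x)) + (1/16:k) • (hz x (hL1 x (mul y x))) + (3/8:k) • (hQ1 x (mul y x)) - (1/32:k) • (hz y (hL1 x (mul x x))) - (1/64:k) • (hL1 x (mul y (mul x x))) - (1/16:k)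 • (hL1 x (mul (mul y x) x)) - (1/64:k) • (hL1 x (mul (mul x x) y)) - (1/32:k) • (hz x (hL2 x y (mul x x))) + (1/16:k) • (hQ2 x y (mul x x)) - (1/64:k) • (hL2 x y (mul x (mul x x))) - (1/64:k) • (hL2 x y (mul (mul x x) x)) - (1/16:k) • (hL2 x (mul y x) (mul x x)) - (1/16:k) • (hmc y (hmc x (hcomm x (mul x (mul x x))))) - (1/4:k) • (hmc y (hmc x (hmc x (hcomm x (mul x x))))) - (1/16:k) • (hmc y (hmc x (hcomm x (mul (mul x x) x)))) - (3/32:k) • (hmc y (hcomm (mul x x) (mul x (mul x x)))) - (1/8:k) • (hmc y (hmc (mul x x) (hcomm x (mul x x)))) - (3/32:k) • (hmc y (hcomm (mul x x) (mul (mul x x) x))) - (1/16:k) • (hmc x (hmc y (hcomm x (mul x (mul x x))))) - (1/4:k) • (hmc x (hmc y (hmc x (hcomm x (mul x x))))) - (1/16:k) • (hmc x (hmc y (hcomm x (mul (mul x x) x)))) - (1/16:k) • (hmc x (hmc x (hcomm y (mul x (mul x x))))) - (1/4:k) • (hmc x (hmc x (hmc y (hcomm x (mul x x))))) - (1/16:k)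 • (hmc x (hmc x (hcomm y (mul (mul x x) x)))) - (1/16:k) • (hmc x (hmc x (hcomm x (mul y (mul x x))))) - (1/4:k) • (hmc x (hmc x (hmc x (hcomm y (mul x x))))) - (1/4:k) • (hmc x (hmc x (hmc x (hcomm x (mul y x))))) - (1/2:k) • (hmc x (hmc x (hmc x (hmc x (hcomm y x))))) - (1/4:k) • (hmc x (hmc x (hcomm x (mul (mul y x) x)))) - (1/16:k) • (hmc x (hmc x (hcomm x (mul (mul x x) y)))) - (1/4:k) • (hmc x (hmc x (hcomm (mul y x) (mul x x)))) + (1/8:k) • (hmc x (hmc x (hmcl (mul x x) (hcomm y x)))) - (3/32:k) • (hmc x (hcomm (mul y x) (mul x (mul x x)))) + (1/4:k) • (hmc x (hmcl (mul x (mul x x)) (hcomm y x))) - (1/2:k) • (hmc x (hmc (mul y x) (hcomm x (mul x x)))) - (3/32:k) • (hmc x (hcomm (mul y x) (mul (mul x x) x))) - (1/8:k) • (hmc x (hmcl (mul (mul x x) x) (hcomm y x))) - (3/32:k) • (hmc x (hcomm (mul x y) (mul x (mul x x)))) - (3/32:k) • (hmc x (hcomm (mul x y) (mul (mul x x) x)))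 - (3/32:k) • (hmc x (hcomm (mul x x) (mul y (mul x x)))) - (1/8:k) • (hmc x (hmc (mul x x) (hcomm y (mul x x)))) + (1/16:k) • (hmc x (hcomm (mul x x) (mul x (mul y x)))) - (3/8:k) • (hmc x (hmc (mul x x) (hcomm x (mul y x)))) + (1/4:k) • (hmc x (hmc (mul x x) (hmc x (hcomm y x)))) - (3/16:k) • (hmc x (hcomm (mul x x) (mul (mul y x) x))) - (3/32:k) • (hmc x (hcomm (mul x x) (mul (mul x x) y))) - (1/64:k) • (hcomm (mul y x) (mul x (mul x (mul x x)))) - (7/32:k) • (hmcl (mul x (mul x (mul x x))) (hcomm y x)) - (1/16:k) • (hmc (mul y x) (hcomm x (mul x (mul x x)))) - (1/4:k) • (hmc (mul y x) (hmc x (hcomm x (mul x x)))) - (1/64:k) • (hcomm (mul y x) (mul x (mul (mul x x) x))) + (1/32:k) • (hmcl (mul x (mul (mul x x) x)) (hcomm y x)) - (1/16:k) • (hmc (mul y x) (hcomm x (mul (mul x x) x))) - (1/64:k) • (hcomm (mul y x) (mul (mul x (mul x x)) x)) - (1/32:k) • (hmcl (mul (mul x (mul x x)) x) (hcomm y x))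 - (1/64:k) • (hcomm (mul y x) (mul (mul (mul x x) x) x)) - (1/32:k) • (hmcl (mul (mul (mul x x) x) x) (hcomm y x)) - (1/64:k) • (hcomm (mul x y) (mul x (mul x (mul x x)))) - (1/64:k) • (hcomm (mul x y) (mul x (mul (mul x x) x))) - (1/64:k) • (hcomm (mul x y) (mul (mul x (mul x x)) x)) - (1/64:k) • (hcomm (mul x y) (mul (mul (mul x x) x) x)) - (1/64:k) • (hcomm (mul x x) (mul y (mul x (mul x x)))) - (1/32:k) • (hmc (mul x x) (hcomm y (mul x (mul x x)))) - (1/64:k) • (hcomm (mul x x) (mul y (mul (mul x x) x))) - (1/32:k) • (hmc (mul x x) (hcomm y (mul (mul x x) x))) - (1/64:k) • (hcomm (mul x x) (mul x (mul y (mul x x)))) - (1/32:k) • (hmc (mul x x) (hcomm x (mul y (mul x x)))) - (1/8:k) • (hmc (mul x x) (hmc x (hcomm x (mul y x)))) - (1/16:k) • (hcomm (mul x x) (mul x (mul (mul y x) x))) - (1/8:k) • (hmc (mul x x) (hcomm x (mul (mul y x) x))) - (1/64:k) • (hcomm (mul x x) (mul x (mul (mul x x) y))) - (1/32:k) • (hmc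 (mul x x) (hcomm x (mul (mul x x) y))) - (1/16:k) • (hcomm (mul x x) (mul (mul y x) (mul x x))) - (1/16:k) • (hmc (mul x x) (hcomm (mul y x) (mul x x))) + (1/16:k) • (hmc (mul x x) (hmcl (mul x x) (hcomm y x))) + (1/16:k) • (hmc (mul x x) (hcomm (mul x y) (mul x x))) - (1/16:k) • (hcomm (mul x x) (mul (mul x x) (mul y x))) - (1/64:k) • (hcomm (mul x x) (mul (mul y (mul x x)) x)) - (1/16:k) • (hcomm (mul x x) (mul (mul (mul y x) x) x)) - (1/64:k) • (hcomm (mul x x) (mul (mul (mul x x) y) x)) - (1/64:k) • (hcomm (mul x x) (mul (mul x (mul x x)) y)) - (1/64:k) • (hcomm (mul x x) (mul (mul (mul x x) x) y)) - (1/16:k) • (hcomm (mul x (mul y x)) (mul x (mul x x))) - (1/4:k) • (hmc (mul x (mul y x)) (hcomm x (mul x x))) - (1/16:k) • (hcomm (mul x (mul y x)) (mul (mul x x) x)) - (1/8:k) • (hmcl (mul (mul x x) x) (hcomm x (mul y x))) - (1/16:k) • (hcomm (mul (mul y x) x) (mul x (mul x x))) - (1/16:k) • (hcomm (mul (mul y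 x) x) (mul (mul x x) x))
end
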